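/- arXiv:1810.11987 — 2 statements merged into one kernel-verified Lean document; each statement's English description precedes it below -/
import Mathlib

section
/- Let φ be an almost flow (with γ = 1 and N := N_1 Lipschitz) and let ψ be a Lipschitz flow with ψ ∼ φ (same galaxy). Fix λ with 1/(1−log₂κ) < λ < 1 and assume T is small enough that κ_λ(2+3δ_T+δ_T²) < 2. Then there exists a constant K, depending only on λ, Δ_{N,ϖ}(φ,ψ), κ and T, such that for every partition π of [0,T]: Δ_{N,ϖ^λ}(ψ, φ^π) ≤ K·Θ(π). In particular φ^π converges to ψ as |π| → 0. -/
open Set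

noncomputable section

/-- Composition of a two-parameter family of maps along a list of intermediate times:
`compAlong φ s [u₁,…,u_k] t = φ_{t,u_k} ∘ ⋯ ∘ φ_{u₂,u₁} ∘ φ_{u₁,s}`. -/
def compAlong {V : Type*} (φ : ℝ → ℝ → V → V) : ℝ → List ℝ → ℝ → V → V
  | s, [], t => φ t s
  | s, u :: us, t => compAlong φ u us t ∘ φ u s

/-- The iterated (almost) flow `φ^π_{t,s}`: the composition of `φ` along the
points of the partition `π` lying strictly between `s` and `t`. -/
def iterFlow {V : Type*} (φ : ℝ → ℝ → V → V) (π : List ℝ) (t s : ℝ) : V → V :=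
  compAlong φ s (π.filter fun u => decide (s < u) && decide (u < t)) t

/-- A partition of `[0,T]`, as a strictly increasing list of points containing `0` and `T`. -/
structure TimePartition (T : ℝ) where
  points : List ℝ
  sorted : points.Pairwise (· < ·)
  zero_mem : 0 ∈ points
  top_mem : T ∈ points
  mem_Icc : ∀ u ∈ points, u ∈ Set.Icc 0 T

/-- The mesh of a partition: the largest gap between successive points. -/
def TimePartition.mesh {T : ℝ} (π : TimePartition T) : ℝ :=
  ((π.points.zip π.points.tail).map fun p => p.2 - p.1).foldr max 0

/-- A control: a super-additive family `ω` vanishing on the diagonal and small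
near the diagonal. -/
structure IsControl (T : ℝ) (ω : ℝ → ℝ → ℝ) : Prop where
  nonneg : ∀ ⦃s t : ℝ⦄, 0 ≤ s → s ≤ t → t ≤ T → 0 ≤ ω s t
  superadd : ∀ ⦃r s t : ℝ⦄, 0 ≤ r → r ≤ s → s ≤ t → t ≤ T → ω r s + ω s t ≤ ω r t
  diag : ∀ ⦃s : ℝ⦄, 0 ≤ s → s ≤ T → ω s s = 0
  small : ∀ ε > (0:ℝ), ∃ h > (0:ℝ), ∀ ⦃s t : ℝ⦄, 0 ≤ s → s ≤ t → t ≤ T → t - s ≤ h → ω s t < ε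

/-- A remainder: a continuous increasing function `ϖ` with `2ϖ(x/2) ≤ κϖ(x)`. -/
structure IsRemainder (κ : ℝ) (ϖ : ℝ → ℝ) : Prop where
  contOn : ContinuousOn ϖ (Set.Ici 0)
  strictMonoOn : StrictMonoOn ϖ (Set.Ici 0)
  nonneg : ∀ x, 0 ≤ x → 0 ≤ ϖ x
  doubling : ∀ x, 0 < x → 2 * ϖ (x / 2) ≤ κ * ϖ x

/-- An almost flow on `[0,T]` with data `(ω, ϖ, N, γ, δT, η)`. -/
structure IsAlmostFlow {V : Type*} [MetricSpace V] (T : ℝ) (ω : ℝ → ℝ → ℝ)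
    (ϖ : ℝ → ℝ) (N : V → ℝ) (γ δT : ℝ) (η : ℝ → ℝ) (φ : ℝ → ℝ → V → V) : Prop where
  cont : ∀ a : V, ContinuousOn (fun p : ℝ × ℝ => φ p.2 p.1 a)
    {p : ℝ × ℝ | 0 ≤ p.1 ∧ p.1 ≤ p.2 ∧ p.2 ≤ T}
  flow_id : ∀ ⦃t : ℝ⦄, 0 ≤ t → t ≤ T → ∀ a, φ t t a = a
  close : ∀ ⦃s t : ℝ⦄, 0 ≤ s → s ≤ t → t ≤ T → ∀ a, dist (φ t s a) a ≤ δT * N a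
  lip : ∀ ⦃s t : ℝ⦄, 0 ≤ s → s ≤ t → t ≤ T → ∀ a b,
    dist (φ t s a) (φ t s b) ≤ (1 + δT) * dist a b + η (ω s t) * dist a b ^ γ
  almost : ∀ ⦃r s t : ℝ⦄, 0 ≤ r → r ≤ s → s ≤ t → t ≤ T → ∀ a,
    dist (φ t s (φ s r a)) (φ t r a) ≤ N a * ϖ (ω r t)


/-- An almost flow with `γ = 1` and `N` Lipschitz. -/
structure IsAlmostFlowOne {V : Type*} [MetricSpace V] (T : ℝ) (ω : ℝ → ℝ → ℝ)
    (ϖ : ℝ → ℝ) (N : V → ℝ) (δT : ℝ) (η : ℝ → ℝ) (φ : ℝ → ℝ → V → V) : Prop where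
  cont : ∀ a : V, ContinuousOn (fun p : ℝ × ℝ => φ p.2 p.1 a)
    {p : ℝ × ℝ | 0 ≤ p.1 ∧ p.1 ≤ p.2 ∧ p.2 ≤ T}
  flow_id : ∀ ⦃t : ℝ⦄, 0 ≤ t → t ≤ T → ∀ a, φ t t a = a
  close : ∀ ⦃s t : ℝ⦄, 0 ≤ s → s ≤ t → t ≤ T → ∀ a, dist (φ t s a) a ≤ δT * N a
  lip : ∀ ⦃s t : ℝ⦄, 0 ≤ s → s ≤ t → t ≤ T → ∀ a b,
    dist (φ t s a) (φ t s b) ≤ (1 + δT) * dist a b + η (ω s t) * dist a b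
  almost : ∀ ⦃r s t : ℝ⦄, 0 ≤ r → r ≤ s → s ≤ t → t ≤ T → ∀ a,
    dist (φ t s (φ s r a)) (φ t r a) ≤ N a * ϖ (ω r t)

/-- `Θ(π) = sup ϖ(ω_{s,s'})^{1-λ}` over successive points `s < s'` of `π`. -/
def Theta {T : ℝ} (ω : ℝ → ℝ → ℝ) (ϖ : ℝ → ℝ) (lam : ℝ) (π : TimePartition T) : ℝ :=
  ((π.points.zip π.points.tail).map fun p => ϖ (ω p.1 p.2) ^ (1 - lam)).foldr max 0

namespace Stmt11Aux

lemma compAlong_append {V : Type*} (φ : ℝ → ℝ → V → V) (A : List ℝ) (s u : ℝ) (B : List ℝ)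
    (t : ℝ) :
    compAlong φ s (A ++ u :: B) t = (compAlong φ u B t) ∘ (compAlong φ s A u) := by
  induction A generalizing s with
  | nil => rfl
  | cons v A' ih =>
      show compAlong φ v (A' ++ u :: B) t ∘ φ v s = _
      rw [ih v]
      rfl

lemma filter_interval_split {P : List ℝ} (hP : P.Pairwise (· < ·)) {s m t : ℝ} (hm : m ∈ P)
    (hsm : s < m) (hmt : m < t) :
    (P.filter fun u => decide (s < u) && decide (u < t)) =
      (P.filter fun u => decide (s < u) && decide (u < m)) ++
        m :: (P.filter fun u => decide (m < u) && decide (u < t)) := by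
  induction P with
  | nil => simp at hm
  | cons a P' ih =>
      rcases List.pairwise_cons.mp hP with ⟨ha, hP'⟩
      rcases List.mem_cons.mp hm with rfl | hm'
      · -- a = m
        have h1 : (P'.filter fun u => decide (s < u) && decide (u < m)) = [] := by
          apply List.filter_eq_nil_iff.mpr
          intro u hu
          have := ha u hu
          simp only [Bool.and_eq_true, decide_eq_true_eq]
          rintro ⟨-, h2⟩
          linarith
        have h2 : (P'.filter fun u => decide (s < u) && decide (u < t)) =
            (P'.filter fun u => decide (m < u) && decide (u < t)) := by
          apply List.filter_congr
          intro u hu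
          have := ha u hu
          simp [lt_trans hsm this, this]
        rw [List.filter_cons, List.filter_cons, List.filter_cons,
          if_pos (by simp only [Bool.and_eq_true, decide_eq_true_eq]; exact ⟨hsm, hmt⟩),
          if_neg (by simp only [Bool.and_eq_true, decide_eq_true_eq, not_and]; intro _; exact lt_irrefl m),
          if_neg (by simp only [Bool.and_eq_true, decide_eq_true_eq, not_and]; intro h; exact absurd h (lt_irrefl m)),
          h1, h2]
        simp

      · -- m ∈ P'
        have ham : a < m := ha m hm'
        have hre := ih hP' hm'
        by_cases hsa : s < a
        · have h3 : a < t := lt_trans ham hmt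
          rw [List.filter_cons, List.filter_cons, List.filter_cons,
            if_pos (by simp only [Bool.and_eq_true, decide_eq_true_eq]; exact ⟨hsa, h3⟩),
            if_pos (by simp only [Bool.and_eq_true, decide_eq_true_eq]; exact ⟨hsa, ham⟩),
            if_neg (by simp only [Bool.and_eq_true, decide_eq_true_eq, not_and]; intro h; exact absurd h (by push_neg; linarith)),
            hre]
          simp
        · have hma : ¬ (m < a) := by push_neg at hsa ⊢; linarith
          rw [List.filter_cons, List.filter_cons, List.filter_cons,
            if_neg (by simp only [Bool.and_eq_true, decide_eq_true_eq, not_and]; intro h; exact absurd h hsa),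
            if_neg (by simp only [Bool.and_eq_true, decide_eq_true_eq, not_and]; intro h; exact absurd h hsa),
            if_neg (by simp only [Bool.and_eq_true, decide_eq_true_eq, not_and]; intro h; exact absurd h hma),
            hre]

lemma exists_max_of_ne_nil {l : List ℝ} (h : l ≠ []) : ∃ m ∈ l, ∀ x ∈ l, x ≤ m := by
  induction l with
  | nil => exact absurd rfl h
  | cons a l' ih =>
      rcases eq_or_ne l' [] with rfl | hl'
      · exact ⟨a, List.mem_singleton_self a, by intro x hx; rw [List.mem_singleton.mp hx]⟩
      · obtain ⟨m, hm, hmax⟩ := ih hl'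
        rcases le_total a m with hle | hle
        · exact ⟨m, List.mem_cons_of_mem _ hm, by
            intro x hx
            rcases List.mem_cons.mp hx with rfl | hx'
            · exact hle
            · exact hmax x hx'⟩
        · exact ⟨a, List.mem_cons_self, by
            intro x hx
            rcases List.mem_cons.mp hx with rfl | hx'
            · exact le_refl x
            · exact le_trans (hmax x hx') hle⟩

lemma exists_min_of_ne_nil {l : List ℝ} (h : l ≠ []) : ∃ m ∈ l, ∀ x ∈ l, m ≤ x := by
  obtain ⟨m, hm, hmax⟩ := exists_max_of_ne_nil (l := l.map Neg.neg) (by simpa using h)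
  obtain ⟨x, hx, rfl⟩ := List.mem_map.mp hm
  refine ⟨x, hx, fun y hy => ?_⟩
  have := hmax (-y) (List.mem_map_of_mem hy)
  linarith

lemma le_foldr_max {l : List ℝ} {x : ℝ} (h : x ∈ l) : x ≤ l.foldr max 0 := by
  induction l with
  | nil => simp at h
  | cons a l' ih =>
      rcases List.mem_cons.mp h with rfl | h'
      · exact le_max_left _ _
      · exact le_trans (ih h') (le_max_right _ _)

lemma foldr_max_nonneg (l : List ℝ) : 0 ≤ l.foldr max 0 := by
  induction l with
  | nil => simp
  | cons a l' ih => exact le_trans ih (le_max_right _ _)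

lemma foldr_max_le {l : List ℝ} {b : ℝ} (hb : 0 ≤ b) (h : ∀ x ∈ l, x ≤ b) :
    l.foldr max 0 ≤ b := by
  induction l with
  | nil => simpa
  | cons a l' ih =>
      exact max_le (h a (List.mem_cons_self))
        (ih fun x hx => h x (List.mem_cons_of_mem _ hx))

lemma mem_zip_tail {P : List ℝ} (hP : P.Pairwise (· < ·)) {p q : ℝ}
    (h : (p, q) ∈ P.zip P.tail) : p ∈ P ∧ q ∈ P ∧ p < q := by
  induction P with
  | nil => simp at h
  | cons a P' ih =>
      rcases List.pairwise_cons.mp hP with ⟨ha, hP'⟩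
      match P', h with
      | b :: P'', h =>
        rcases List.mem_cons.mp h with h1 | h2
        · obtain ⟨rfl, rfl⟩ : p = a ∧ q = b := Prod.mk.injEq .. ▸ by simpa using h1
          exact ⟨List.mem_cons_self, List.mem_cons_of_mem _ (List.mem_cons_self),
            ha _ (List.mem_cons_self)⟩
        · have h3 : (p, q) ∈ (b :: P'').zip (b :: P'').tail := h2
          obtain ⟨hp, hq, hpq⟩ := ih hP' h3
          exact ⟨List.mem_cons_of_mem _ hp, List.mem_cons_of_mem _ hq, hpq⟩

lemma exists_adjacent {P : List ℝ} (hP : P.Pairwise (· < ·)) {u v : ℝ}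
    (hpu : ∃ p ∈ P, p ≤ u) (hqv : ∃ q ∈ P, v ≤ q) (huv : u < v)
    (hno : ∀ w ∈ P, ¬(u < w ∧ w < v)) :
    ∃ pq : ℝ × ℝ, pq ∈ P.zip P.tail ∧ pq.1 ≤ u ∧ v ≤ pq.2 := by
  induction P with
  | nil => simp at hpu
  | cons a P' ih =>
      rcases List.pairwise_cons.mp hP with ⟨ha, hP'⟩
      by_cases hex : ∃ p ∈ P', p ≤ u
      · obtain ⟨q, hq, hvq⟩ := hqv
        have hq' : q ∈ P' := by
          rcases List.mem_cons.mp hq with rfl | h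
          · obtain ⟨p, hp, hpu'⟩ := hex
            exact absurd (ha p hp) (by push_neg; linarith)
          · exact h
        obtain ⟨pq, hmem, h1, h2⟩ := ih hP' hex ⟨q, hq', hvq⟩
          (fun w hw => hno w (List.mem_cons_of_mem _ hw))
        refine ⟨pq, ?_, h1, h2⟩
        match P', hmem with
        | b :: P'', hmem => exact List.mem_cons_of_mem _ hmem
      · obtain ⟨p, hp, hpu'⟩ := hpu
        have hpa : p = a := by
          rcases List.mem_cons.mp hp with rfl | h
          · rfl
          · exact absurd ⟨p, h, hpu'⟩ hex
        subst hpa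
        obtain ⟨q, hq, hvq⟩ := hqv
        have hq' : q ∈ P' := by
          rcases List.mem_cons.mp hq with rfl | h
          · linarith
          · exact h
        match P', hq' with
        | b :: P'', hq' =>
          have hbu : ¬ b ≤ u := fun hc => hex ⟨b, List.mem_cons_self, hc⟩
          have hvb : v ≤ b := by
            by_contra hc
            push_neg at hc hbu
            exact hno b (List.mem_cons_of_mem _ (List.mem_cons_self)) ⟨hbu, hc⟩
          exact ⟨(p, b), List.mem_cons_self, hpu', hvb⟩

end Stmt11Aux

def Nhat {V : Type*} (ψ : ℝ → ℝ → V → V) (N : V → ℝ) (T s : ℝ) (a : V) : ℝ :=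
  sSup ((fun v => N (ψ v s a)) '' Set.Icc s T) ⊔ N a

def Gcoef (A C' cN rho KK S : ℝ) : ℝ :=
  A ^ 2 * KK * rho + A * C' * (1 + cN * KK * rho * S) +
    KK * rho * (1 + cN * A * S * (A * KK * rho + C' * (1 + cN * KK * rho * S)))


lemma arith_Cle {A C' cN rho KK S : ℝ} (hA : 1 ≤ A) (hC' : 0 ≤ C') (hcN : 0 ≤ cN)
    (hρ : 0 ≤ rho) (hK : 0 ≤ KK) (hS : 0 ≤ S) :
    C' ≤ A * KK * rho + C' * (1 + cN * KK * rho * S) := by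
  have h1 : 0 ≤ A * KK * rho := mul_nonneg (mul_nonneg (by linarith) hK) hρ
  have h2 : 0 ≤ C' * (cN * KK * rho * S) :=
    mul_nonneg hC' (mul_nonneg (mul_nonneg (mul_nonneg hcN hK) hρ) hS)
  nlinarith

lemma arith_coefA {A C' cN rho KK S : ℝ} (hA : 1 ≤ A) (hC' : 0 ≤ C') (hcN : 0 ≤ cN)
    (hρ : 0 ≤ rho) (hK : 0 ≤ KK) (hS : 0 ≤ S) :
    A * C' + KK * rho * (1 + cN * A * S * (A * KK * rho + C' * (1 + cN * KK * rho * S))) ≤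
      Gcoef A C' cN rho KK S := by
  simp only [Gcoef]
  have hA0 : 0 ≤ A := by linarith
  have h1 : 0 ≤ A ^ 2 * KK * rho := by positivity
  have h2 : 0 ≤ A * C' * (cN * KK * rho * S) := by positivity
  nlinarith

lemma arith_coefB1 {A C' cN rho KK S : ℝ} (hA : 1 ≤ A) (hC' : 0 ≤ C') (hcN : 0 ≤ cN)
    (hρ : 0 ≤ rho) (hK : 0 ≤ KK) (hS : 0 ≤ S) :
    A * KK * rho + C' * (1 + cN * KK * rho * S) ≤ Gcoef A C' cN rho KK S := by
  simp only [Gcoef]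
  have hA0 : 0 ≤ A := by linarith
  have hGy : 0 ≤ 1 + cN * KK * rho * S := by positivity
  have hEE : 0 ≤ A * KK * rho + C' * (1 + cN * KK * rho * S) := by positivity
  have h1 : 0 ≤ (A - 1) * (A * KK * rho) := by
    apply mul_nonneg (by linarith) (by positivity)
  have h2 : 0 ≤ (A - 1) * (C' * (1 + cN * KK * rho * S)) := by
    apply mul_nonneg (by linarith) (by positivity)
  have h3 : 0 ≤ KK * rho * (1 + cN * A * S * (A * KK * rho + C' * (1 + cN * KK * rho * S))) := by
    apply mul_nonneg (by positivity)
    have : 0 ≤ cN * A * S * (A * KK * rho + C' * (1 + cN * KK * rho * S)) := by positivity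
    linarith
  nlinarith

namespace Stmt11Aux

lemma iterFlow_split {V : Type*} (φ : ℝ → ℝ → V → V) {P : List ℝ}
    (hP : P.Pairwise (· < ·)) {s m t : ℝ} (hm : m ∈ P) (hsm : s < m) (hmt : m < t) (a : V) :
    iterFlow φ P t s a = iterFlow φ P t m (iterFlow φ P m s a) := by
  unfold iterFlow
  rw [filter_interval_split hP hm hsm hmt, compAlong_append]
  rfl

lemma iterFlow_nil {V : Type*} (φ : ℝ → ℝ → V → V) {P : List ℝ} {s t : ℝ}
    (h : (P.filter fun u => decide (s < u) && decide (u < t)) = []) :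
    iterFlow φ P t s = φ t s := by
  unfold iterFlow
  rw [h]
  rfl

end Stmt11Aux


set_option maxHeartbeats 4000000

/-- Theorem: rate of convergence towards a Lipschitz flow.
Let `φ` be an almost flow and `ψ` a Lipschitz flow in the same galaxy as `φ`. Then there
is a constant `K` such that `Δ_{N,ϖ^λ}(ψ, φ^π) ≤ K·Θ(π)` for every partition `π`;
in particular `φ^π → ψ` as `|π| → 0`. -/
theorem statement11 {V : Type*} [MetricSpace V]
    (T : ℝ) (hT : 0 < T)
    (ω : ℝ → ℝ → ℝ) (hω : IsControl T ω)
    (κ : ℝ) (hκ : κ ∈ Set.Ioo (0:ℝ) 1)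
    (ϖ : ℝ → ℝ) (hϖ : IsRemainder κ ϖ)
    (N : V → ℝ) (hN1 : ∀ a, 1 ≤ N a)
    (CN : NNReal) (hNlip : LipschitzWith CN N)
    (δT : ℝ) (hδT : 0 ≤ δT)
    (η : ℝ → ℝ) (hηnonneg : ∀ x, 0 ≤ x → 0 ≤ η x)
    (hη : ∀ ⦃s t : ℝ⦄, 0 ≤ s → s ≤ t → t ≤ T →
      η (ω s t) * ϖ (ω s t) ≤ δT * ϖ (ω s t))
    (lam : ℝ) (hlam1 : 1 / (1 - Real.logb 2 κ) < lam) (hlam2 : lam < 1)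
    (hlam3 : (2:ℝ) ^ (1 - lam) * κ ^ lam * (2 + 3 * δT + δT ^ 2) < 2)
    (φ : ℝ → ℝ → V → V) (hφ : IsAlmostFlowOne T ω ϖ N δT η φ)
    (ψ : ℝ → ℝ → V → V)
    (hψcont : ∀ a : V, ContinuousOn (fun p : ℝ × ℝ => ψ p.2 p.1 a)
      {p : ℝ × ℝ | 0 ≤ p.1 ∧ p.1 ≤ p.2 ∧ p.2 ≤ T})
    (hψid : ∀ ⦃t : ℝ⦄, 0 ≤ t → t ≤ T → ∀ a : V, ψ t t a = a)
    (hψflow : ∀ ⦃r s t : ℝ⦄, 0 ≤ r → r ≤ s → s ≤ t → t ≤ T → ∀ a : V,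
      ψ t s (ψ s r a) = ψ t r a)
    (hψlip : ∀ ⦃s t : ℝ⦄, 0 ≤ s → s ≤ t → t ≤ T → ∀ a b : V,
      dist (ψ t s a) (ψ t s b) ≤ (1 + δT) * dist a b)
    (C : ℝ)
    (hgalaxy : ∀ ⦃s t : ℝ⦄, 0 ≤ s → s ≤ t → t ≤ T → ∀ a : V,
      dist (ψ t s a) (φ t s a) ≤ C * N a * ϖ (ω s t)) :
    ∃ K : ℝ, 0 ≤ K ∧
      (∀ π : TimePartition T, ∀ ⦃s t : ℝ⦄, 0 ≤ s → s ≤ t → t ≤ T → ∀ a : V,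
        dist (ψ t s a) (iterFlow φ π.points t s a) ≤
          K * Theta ω ϖ lam π * N a * ϖ (ω s t) ^ lam) ∧
      ∀ ε > (0:ℝ), ∃ h > (0:ℝ), ∀ π : TimePartition T, π.mesh ≤ h →
        ∀ ⦃s t : ℝ⦄, 0 ≤ s → s ≤ t → t ≤ T → ∀ a : V,
          dist (ψ t s a) (iterFlow φ π.points t s a) ≤ ε * N a := by
  classical
  obtain ⟨hκ0, hκ1⟩ := hκ
  have hlog : Real.logb 2 κ < 0 := Real.logb_neg one_lt_two hκ0 hκ1
  have hlogpos : 0 < 1 - Real.logb 2 κ := by linarith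
  have hlam0 : 0 < lam := lt_trans (div_pos one_pos hlogpos) hlam1
  have h1lam : 0 < 1 - lam := by linarith
  set cN : ℝ := (CN : ℝ) with hcN
  have hcN0 : 0 ≤ cN := CN.coe_nonneg
  have hNlip' : ∀ x y : V, N x ≤ N y + cN * dist x y := by
    intro x y
    have h := hNlip.dist_le_mul x y
    rw [Real.dist_eq] at h
    have := le_abs_self (N x - N y)
    linarith
  set C' : ℝ := max C 0 with hC'
  have hC'0 : 0 ≤ C' := le_max_right _ _
  have hωno : ∀ s t : ℝ, 0 ≤ s → s ≤ t → t ≤ T → 0 ≤ ω s t := fun s t hs hst ht =>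
    hω.nonneg hs hst ht
  have hgal : ∀ s t : ℝ, 0 ≤ s → s ≤ t → t ≤ T → ∀ a : V,
      dist (ψ t s a) (φ t s a) ≤ C' * N a * ϖ (ω s t) := by
    intro s t hs hst ht a
    have h1 := hgalaxy hs hst ht a
    have h2 : 0 ≤ N a * ϖ (ω s t) :=
      mul_nonneg (le_trans zero_le_one (hN1 a)) (hϖ.nonneg _ (hωno s t hs hst ht))
    have h3 : C * (N a * ϖ (ω s t)) ≤ C' * (N a * ϖ (ω s t)) :=
      mul_le_mul_of_nonneg_right (le_max_left C 0) h2
    calc dist (ψ t s a) (φ t s a) ≤ C * N a * ϖ (ω s t) := h1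
      _ = C * (N a * ϖ (ω s t)) := by ring
      _ ≤ C' * (N a * ϖ (ω s t)) := h3
      _ = C' * N a * ϖ (ω s t) := by ring
  have hωmono : ∀ r s t u : ℝ, 0 ≤ r → r ≤ s → s ≤ t → t ≤ u → u ≤ T → ω s t ≤ ω r u := by
    intro r s t u hr hrs hst htu huT
    have h1 := hω.superadd hr hrs hst (by linarith)
    have h2 := hω.superadd hr (by linarith : r ≤ t) htu huT
    have h3 := hωno r s hr hrs (by linarith)
    have h4 := hωno t u (by linarith) htu huT
    linarith
  have hwbar : ∀ s t : ℝ, 0 ≤ s → s ≤ t → t ≤ T → ω s t ≤ ω 0 T := fun s t hs hst ht =>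
    hωmono 0 s t T le_rfl hs hst ht le_rfl
  have hϖmono : ∀ x y : ℝ, 0 ≤ x → x ≤ y → ϖ x ≤ ϖ y := by
    intro x y hx hxy
    exact hϖ.strictMonoOn.monotoneOn (mem_Ici.mpr hx) (mem_Ici.mpr (le_trans hx hxy)) hxy
  set pwbar : ℝ := ϖ (ω 0 T) with hpwbar
  have hpwbar0 : 0 ≤ pwbar := hϖ.nonneg _ (hωno 0 T le_rfl hT.le le_rfl)
  have hϖle : ∀ s t : ℝ, 0 ≤ s → s ≤ t → t ≤ T → ϖ (ω s t) ≤ pwbar := fun s t hs hst ht =>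
    hϖmono _ _ (hωno s t hs hst ht) (hwbar s t hs hst ht)
  -- ϖ 0 = 0
  have hϖ00 : ϖ 0 = 0 := by
    by_contra hne
    have hb0 : 0 < ϖ 0 := lt_of_le_of_ne (hϖ.nonneg 0 le_rfl) (Ne.symm hne)
    have hgeb : ∀ x : ℝ, 0 < x → 2 * ϖ 0 ≤ κ * ϖ x := by
      intro x hx
      have h1 : ϖ 0 ≤ ϖ (x / 2) := hϖmono 0 (x / 2) le_rfl (by linarith)
      have h2 := hϖ.doubling x hx
      linarith
    have hcw : ContinuousWithinAt ϖ (Set.Ici 0) 0 := hϖ.contOn 0 (mem_Ici.mpr le_rfl)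
    rw [Metric.continuousWithinAt_iff] at hcw
    have hεpos : 0 < ϖ 0 * (2 - κ) / κ := by
      apply div_pos (mul_pos hb0 (by linarith)) hκ0
    obtain ⟨d, hd0, hd⟩ := hcw _ hεpos
    have hmem : d / 2 ∈ Set.Ici (0:ℝ) := mem_Ici.mpr (by linarith)
    have hdist : dist (d / 2) 0 < d := by
      rw [Real.dist_eq, sub_zero, abs_of_nonneg (by linarith : (0:ℝ) ≤ d / 2)]
      linarith
    have h5 := hd hmem hdist
    rw [Real.dist_eq] at h5
    have h6 : ϖ (d / 2) - ϖ 0 < ϖ 0 * (2 - κ) / κ := lt_of_le_of_lt (le_abs_self _) h5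
    have h7 := hgeb (d / 2) (by linarith)
    have h8 : ϖ (d / 2) < 2 * ϖ 0 / κ := by
      have : ϖ 0 + ϖ 0 * (2 - κ) / κ = 2 * ϖ 0 / κ := by field_simp; ring
      linarith
    have h9 : ϖ (d / 2) * κ < 2 * ϖ 0 := (lt_div_iff₀ hκ0).mp h8
    have h10 : ϖ (d / 2) * κ = κ * ϖ (d / 2) := mul_comm _ _
    linarith
  set rho : ℝ := (κ / 2) ^ lam with hrho
  have hρ0 : 0 ≤ rho := Real.rpow_nonneg (by linarith) _
  have hmain : rho * (2 + 3 * δT + δT ^ 2) < 1 := by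
    have h2pos : (0:ℝ) < 2 ^ lam := Real.rpow_pos_of_pos two_pos lam
    have e1 : (2:ℝ) ^ (1 - lam) = 2 / 2 ^ lam := by
      rw [Real.rpow_sub two_pos, Real.rpow_one]
    have e2 : rho = κ ^ lam / 2 ^ lam := by
      rw [hrho, Real.div_rpow hκ0.le (by norm_num : (0:ℝ) ≤ 2)]
    have h := hlam3
    rw [e1, div_mul_eq_mul_div, div_mul_eq_mul_div, div_lt_iff₀ h2pos] at h
    rw [e2, div_mul_eq_mul_div, div_lt_one h2pos]
    linarith
  have hA1 : (1:ℝ) ≤ 1 + δT := by linarith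
  have hhalf : ∀ z w : ℝ, 0 ≤ z → 2 * z ≤ w → ϖ z ^ lam ≤ rho * ϖ w ^ lam := by
    intro z w hz hzw
    have hw : 0 ≤ w := by linarith
    rcases eq_or_lt_of_le hw with heq | hwpos
    · have hz0 : z = 0 := by linarith [heq.symm.le]
      rw [hz0, hϖ00, Real.zero_rpow (ne_of_gt hlam0), ← heq, hϖ00,
        Real.zero_rpow (ne_of_gt hlam0), mul_zero]
    · have h1 : ϖ z ≤ ϖ (w / 2) := hϖmono _ _ hz (by linarith)
      have h2 := hϖ.doubling w hwpos
      have h3 : ϖ z ≤ κ / 2 * ϖ w := by linarith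
      calc ϖ z ^ lam ≤ (κ / 2 * ϖ w) ^ lam :=
            Real.rpow_le_rpow (hϖ.nonneg z hz) h3 hlam0.le
        _ = rho * ϖ w ^ lam := by
            rw [Real.mul_rpow (by linarith) (hϖ.nonneg w hw)]
  have hTh0 : ∀ π : TimePartition T, 0 ≤ Theta ω ϖ lam π := fun π =>
    Stmt11Aux.foldr_max_nonneg _
  have hThpair : ∀ (π : TimePartition T) (p q : ℝ), (p, q) ∈ π.points.zip π.points.tail →
      ϖ (ω p q) ^ (1 - lam) ≤ Theta ω ϖ lam π := by
    intro π p q h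
    exact Stmt11Aux.le_foldr_max
      (List.mem_map_of_mem (f := fun p : ℝ × ℝ => ϖ (ω p.1 p.2) ^ (1 - lam)) h)
  set Thbar : ℝ := pwbar ^ (1 - lam) with hThbar'
  have hThbar0 : 0 ≤ Thbar := Real.rpow_nonneg hpwbar0 _
  have hThbar : ∀ π : TimePartition T, Theta ω ϖ lam π ≤ Thbar := by
    intro π
    apply Stmt11Aux.foldr_max_le hThbar0
    intro x hx
    obtain ⟨⟨p, q⟩, hpq, rfl⟩ := List.mem_map.mp hx
    obtain ⟨hpP, hqP, hpq'⟩ := Stmt11Aux.mem_zip_tail π.sorted hpq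
    obtain ⟨hp0, hpT⟩ := π.mem_Icc p hpP
    obtain ⟨hq0, hqT⟩ := π.mem_Icc q hqP
    exact Real.rpow_le_rpow (hϖ.nonneg _ (hωno p q hp0 hpq'.le hqT))
      (hϖle p q hp0 hpq'.le hqT) h1lam.le
  have hgap : ∀ (π : TimePartition T) (u v : ℝ), 0 ≤ u → u < v → v ≤ T →
      (∀ w ∈ π.points, ¬(u < w ∧ w < v)) →
      ϖ (ω u v) ≤ Theta ω ϖ lam π * ϖ (ω u v) ^ lam := by
    intro π u v hu huv hv hno
    obtain ⟨⟨p, q⟩, hmem, hp, hq⟩ := Stmt11Aux.exists_adjacent π.sorted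
      ⟨0, π.zero_mem, hu⟩ ⟨T, π.top_mem, hv⟩ huv hno
    obtain ⟨hpP, hqP, hpq⟩ := Stmt11Aux.mem_zip_tail π.sorted hmem
    obtain ⟨hp0, hpT⟩ := π.mem_Icc p hpP
    obtain ⟨hq0, hqT⟩ := π.mem_Icc q hqP
    have h1 : ω u v ≤ ω p q := hωmono p u v q hp0 hp huv.le hq hqT
    have h0uv : 0 ≤ ω u v := hωno u v hu huv.le (le_trans hq hqT)
    have h2 : ϖ (ω u v) ≤ ϖ (ω p q) := hϖmono _ _ h0uv h1
    have h0ϖ : 0 ≤ ϖ (ω u v) := hϖ.nonneg _ h0uv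
    have h3 : ϖ (ω u v) ^ (1 - lam) ≤ Theta ω ϖ lam π :=
      le_trans (Real.rpow_le_rpow h0ϖ h2 h1lam.le) (hThpair π p q hmem)
    have h4 : ϖ (ω u v) = ϖ (ω u v) ^ (1 - lam) * ϖ (ω u v) ^ lam := by
      rw [← Real.rpow_add' h0ϖ (by norm_num : (1 - lam) + lam ≠ 0)]
      norm_num
    calc ϖ (ω u v) = ϖ (ω u v) ^ (1 - lam) * ϖ (ω u v) ^ lam := h4
      _ ≤ Theta ω ϖ lam π * ϖ (ω u v) ^ lam :=
          mul_le_mul_of_nonneg_right h3 (Real.rpow_nonneg h0ϖ _)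
  -- Nhat facts
  set M0 : ℝ := δT + C' * pwbar with hM0'
  have hM00 : 0 ≤ M0 := by positivity
  have hmove : ∀ (u v : ℝ) (b : V), 0 ≤ u → u ≤ v → v ≤ T →
      dist (ψ v u b) b ≤ M0 * N b := by
    intro u v b hu huv hv
    have h1 := hgal u v hu huv hv b
    have h2 := hφ.close hu huv hv b
    have h3 : dist (ψ v u b) b ≤ dist (ψ v u b) (φ v u b) + dist (φ v u b) b :=
      dist_triangle _ _ _
    have h4 : C' * N b * ϖ (ω u v) ≤ C' * N b * pwbar :=
      mul_le_mul_of_nonneg_left (hϖle u v hu huv hv)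
        (mul_nonneg hC'0 (le_trans zero_le_one (hN1 b)))
    have h5 : M0 * N b = δT * N b + C' * N b * pwbar := by rw [hM0']; ring
    linarith
  have hNψ : ∀ (s : ℝ) (a : V) (v : ℝ), 0 ≤ s → s ≤ v → v ≤ T →
      N (ψ v s a) ≤ (1 + cN * M0) * N a := by
    intro s a v hs hsv hvT
    have h1 := hNlip' (ψ v s a) a
    have h2 := hmove s v a hs hsv hvT
    have h3 : cN * dist (ψ v s a) a ≤ cN * (M0 * N a) :=
      mul_le_mul_of_nonneg_left h2 hcN0
    have h4 : (1 + cN * M0) * N a = N a + cN * (M0 * N a) := by ring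
    linarith
  have hbdd : ∀ (s : ℝ) (a : V), 0 ≤ s → s ≤ T →
      BddAbove ((fun v => N (ψ v s a)) '' Set.Icc s T) := by
    intro s a hs hsT
    refine ⟨(1 + cN * M0) * N a, ?_⟩
    rintro x ⟨v, ⟨hsv, hvT⟩, rfl⟩
    exact hNψ s a v hs hsv hvT
  have hNhatgeN : ∀ (s : ℝ) (a : V), N a ≤ Nhat ψ N T s a := fun s a => le_sup_right
  have hNhat1 : ∀ (s : ℝ) (a : V), 1 ≤ Nhat ψ N T s a := fun s a =>
    le_trans (hN1 a) (hNhatgeN s a)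
  have hNhat0 : ∀ (s : ℝ) (a : V), 0 ≤ Nhat ψ N T s a := fun s a =>
    le_trans zero_le_one (hNhat1 s a)
  have hNhatle : ∀ (s : ℝ) (a : V) (v : ℝ), 0 ≤ s → s ≤ v → v ≤ T →
      N (ψ v s a) ≤ Nhat ψ N T s a := by
    intro s a v hs hsv hvT
    exact le_trans
      (le_csSup (hbdd s a hs (le_trans hsv hvT)) ⟨v, ⟨hsv, hvT⟩, rfl⟩) le_sup_left
  have hNhatM1 : ∀ (s : ℝ) (a : V), 0 ≤ s → s ≤ T →
      Nhat ψ N T s a ≤ (1 + cN * M0) * N a := by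
    intro s a hs hsT
    apply sup_le
    · refine csSup_le (Set.Nonempty.image _ ⟨s, le_rfl, hsT⟩) ?_
      rintro x ⟨v, ⟨hsv, hvT⟩, rfl⟩
      exact hNψ s a v hs hsv hvT
    · exact le_mul_of_one_le_left (le_trans zero_le_one (hN1 a))
        (by linarith [mul_nonneg hcN0 hM00])
  have hNhatanchor : ∀ (s r : ℝ) (a b : V), 0 ≤ s → s ≤ r → r ≤ T →
      Nhat ψ N T r b ≤ Nhat ψ N T s a + cN * (1 + δT) * dist b (ψ r s a) := by
    intro s r a b hs hsr hrT
    apply sup_le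
    · refine csSup_le (Set.Nonempty.image _ ⟨r, le_rfl, hrT⟩) ?_
      rintro x ⟨v, ⟨hrv, hvT⟩, rfl⟩
      have h1 := hNlip' (ψ v r b) (ψ v r (ψ r s a))
      have h2 : dist (ψ v r b) (ψ v r (ψ r s a)) ≤ (1 + δT) * dist b (ψ r s a) :=
        hψlip (by linarith : 0 ≤ r) hrv hvT b (ψ r s a)
      have h3 : ψ v r (ψ r s a) = ψ v s a := hψflow hs hsr hrv hvT a
      have h4 : N (ψ v s a) ≤ Nhat ψ N T s a := hNhatle s a v hs (by linarith) hvT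
      have h5 : N (ψ v r (ψ r s a)) ≤ Nhat ψ N T s a := by rw [h3]; exact h4
      have h6 : cN * dist (ψ v r b) (ψ v r (ψ r s a)) ≤
          cN * ((1 + δT) * dist b (ψ r s a)) := mul_le_mul_of_nonneg_left h2 hcN0
      have h7 : cN * ((1 + δT) * dist b (ψ r s a)) =
          cN * (1 + δT) * dist b (ψ r s a) := by ring
      linarith
    · have h1 := hNlip' b (ψ r s a)
      have h4 : N (ψ r s a) ≤ Nhat ψ N T s a := hNhatle s a r hs hsr hrT
      have h6 : cN * dist b (ψ r s a) ≤ cN * (1 + δT) * dist b (ψ r s a) := by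
        have h7 : dist b (ψ r s a) ≤ (1 + δT) * dist b (ψ r s a) :=
          le_mul_of_one_le_left dist_nonneg hA1
        calc cN * dist b (ψ r s a) ≤ cN * ((1 + δT) * dist b (ψ r s a)) :=
              mul_le_mul_of_nonneg_left h7 hcN0
          _ = cN * (1 + δT) * dist b (ψ r s a) := by ring
      linarith
  -- base estimate: no partition points inside (s,t)
  have hbase : ∀ (π : TimePartition T) (s t : ℝ) (a : V), 0 ≤ s → s ≤ t → t ≤ T →
      (π.points.filter fun u => decide (s < u) && decide (u < t)) = [] →
      dist (ψ t s a) (iterFlow φ π.points t s a) ≤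
        C' * Theta ω ϖ lam π * Nhat ψ N T s a * ϖ (ω s t) ^ lam := by
    intro π s t a hs hst ht hfil
    rw [Stmt11Aux.iterFlow_nil φ hfil]
    have hRHS : 0 ≤ C' * Theta ω ϖ lam π * Nhat ψ N T s a * ϖ (ω s t) ^ lam := by
      have := hTh0 π
      have := hNhat0 s a
      have : (0:ℝ) ≤ ϖ (ω s t) ^ lam := Real.rpow_nonneg (hϖ.nonneg _ (hωno s t hs hst ht)) _
      positivity
    rcases eq_or_lt_of_le hst with rfl | hlt
    · rw [hψid hs ht a, hφ.flow_id hs ht a, dist_self]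
      exact hRHS
    · have hno : ∀ w ∈ π.points, ¬(s < w ∧ w < t) := by
        intro w hw hcon
        have := List.filter_eq_nil_iff.mp hfil w hw
        simp only [Bool.and_eq_true, decide_eq_true_eq] at this
        exact this ⟨hcon.1, hcon.2⟩
      have h1 := hgal s t hs hst ht a
      have h2 := hgap π s t hs hlt ht hno
      have hNa0 : 0 ≤ N a := le_trans zero_le_one (hN1 a)
      have hpw0 : (0:ℝ) ≤ ϖ (ω s t) ^ lam :=
        Real.rpow_nonneg (hϖ.nonneg _ (hωno s t hs hst ht)) _
      calc dist (ψ t s a) (φ t s a) ≤ C' * N a * ϖ (ω s t) := h1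
        _ ≤ C' * N a * (Theta ω ϖ lam π * ϖ (ω s t) ^ lam) :=
            mul_le_mul_of_nonneg_left h2 (mul_nonneg hC'0 hNa0)
        _ = C' * Theta ω ϖ lam π * N a * ϖ (ω s t) ^ lam := by ring
        _ ≤ C' * Theta ω ϖ lam π * Nhat ψ N T s a * ϖ (ω s t) ^ lam := by
            refine mul_le_mul_of_nonneg_right ?_ hpw0
            exact mul_le_mul_of_nonneg_left (hNhatgeN s a)
              (mul_nonneg hC'0 (hTh0 π))
  -- the one-split step estimate
  have hstep : ∀ (π : TimePartition T) (KK S : ℝ), 0 ≤ KK → 0 ≤ S →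
      ∀ s t : ℝ, 0 ≤ s → s < t → t ≤ T →
      (π.points.filter fun u => decide (s < u) && decide (u < t)) ≠ [] →
      Theta ω ϖ lam π * ϖ (ω s t) ^ lam ≤ S →
      (∀ s' t' : ℝ, 0 ≤ s' → s' ≤ t' → t' ≤ T → s ≤ s' → t' ≤ t → 2 * ω s' t' ≤ ω s t →
        (π.points.filter fun u => decide (s' < u) && decide (u < t')).length <
          (π.points.filter fun u => decide (s < u) && decide (u < t)).length →
        ∀ b : V, dist (ψ t' s' b) (iterFlow φ π.points t' s' b) ≤
          KK * Theta ω ϖ lam π * Nhat ψ N T s' b * ϖ (ω s' t') ^ lam) →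
      ∀ a : V, dist (ψ t s a) (iterFlow φ π.points t s a) ≤
        Gcoef (1 + δT) C' cN rho KK S * Theta ω ϖ lam π * Nhat ψ N T s a *
          ϖ (ω s t) ^ lam := by
    intro π KK S hKK0 hS0 s t hs hst ht hne hS Hp a
    have hA0 : (0:ℝ) ≤ 1 + δT := by linarith
    have hTh0' : 0 ≤ Theta ω ϖ lam π := hTh0 π
    have hω0st : 0 ≤ ω s t := hωno s t hs hst.le ht
    have hPw0 : 0 ≤ ϖ (ω s t) ^ lam := Real.rpow_nonneg (hϖ.nonneg _ hω0st) _
    have hHat0 : 0 ≤ Nhat ψ N T s a := hNhat0 s a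
    have hGy0 : (0:ℝ) ≤ 1 + cN * KK * rho * S := by
      have : 0 ≤ cN * KK * rho * S := by
        exact mul_nonneg (mul_nonneg (mul_nonneg hcN0 hKK0) hρ0) hS0
      linarith
    have hGy1 : (1:ℝ) ≤ 1 + cN * KK * rho * S := by
      have := mul_nonneg (mul_nonneg (mul_nonneg hcN0 hKK0) hρ0) hS0
      linarith
    have hEE0 : (0:ℝ) ≤ (1 + δT) * KK * rho + C' * (1 + cN * KK * rho * S) := by
      have h1 : 0 ≤ (1 + δT) * KK * rho := mul_nonneg (mul_nonneg hA0 hKK0) hρ0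
      have h2 : 0 ≤ C' * (1 + cN * KK * rho * S) := mul_nonneg hC'0 hGy0
      linarith
    have hmemL : ∀ u : ℝ,
        u ∈ (π.points.filter fun u => decide (s < u) && decide (u < t)) →
        u ∈ π.points ∧ s < u ∧ u < t := by
      intro u hu
      have h := List.mem_filter.mp hu
      simp only [Bool.and_eq_true, decide_eq_true_eq] at h
      exact ⟨h.1, h.2.1, h.2.2⟩
    have hmemL' : ∀ u : ℝ, u ∈ π.points → s < u → u < t →
        u ∈ (π.points.filter fun u => decide (s < u) && decide (u < t)) := by
      intro u hu h1 h2
      exact List.mem_filter.mpr ⟨hu, by simp [h1, h2]⟩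
    by_cases hSe :
      ((π.points.filter fun u => decide (s < u) && decide (u < t)).filter
        fun u => decide (2 * ω s u ≤ ω s t)) = []
    · -- Case A : the first point of the partition inside (s,t) is past the ω-midpoint
      obtain ⟨m, hmL, hmmin⟩ := Stmt11Aux.exists_min_of_ne_nil hne
      obtain ⟨hmP, hsm, hmt⟩ := hmemL m hmL
      have hm0 : 0 ≤ m := le_trans hs hsm.le
      have hmT : m ≤ T := le_trans hmt.le ht
      have hbig : ¬ (2 * ω s m ≤ ω s t) := by
        intro hc
        have hmem : m ∈ ((π.points.filter fun u => decide (s < u) && decide (u < t)).filter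
            fun u => decide (2 * ω s u ≤ ω s t)) :=
          List.mem_filter.mpr ⟨hmL, by simpa using hc⟩
        exact (List.ne_nil_of_mem hmem) hSe
      have hsup := hω.superadd hs hsm.le hmt.le ht
      have hωsm0 : 0 ≤ ω s m := hωno s m hs hsm.le hmT
      have hωmt0 : 0 ≤ ω m t := hωno m t hm0 hmt.le ht
      have h2R : 2 * ω m t ≤ ω s t := by
        have := not_le.mp hbig
        linarith
      have hsplit := Stmt11Aux.iterFlow_split φ π.sorted hmP hsm hmt a
      have hflnil : (π.points.filter fun u => decide (s < u) && decide (u < m)) = [] := by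
        apply List.filter_eq_nil_iff.mpr
        intro w hw
        simp only [Bool.and_eq_true, decide_eq_true_eq, not_and]
        intro hsw hwm
        have hwL := hmemL' w hw hsw (lt_trans hwm hmt)
        exact absurd (hmmin w hwL) (not_le.mpr hwm)
      have hnoL : ∀ w ∈ π.points, ¬(s < w ∧ w < m) := by
        intro w hw hcon
        have := List.filter_eq_nil_iff.mp hflnil w hw
        simp only [Bool.and_eq_true, decide_eq_true_eq] at this
        exact this ⟨hcon.1, hcon.2⟩
      have hIL : iterFlow φ π.points m s = φ m s := Stmt11Aux.iterFlow_nil φ hflnil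
      have hflow1 : ψ t m (ψ m s a) = ψ t s a := hψflow hs hsm.le hmt.le ht a
      -- left single-step estimate
      have hϖsm : ϖ (ω s m) ^ lam ≤ ϖ (ω s t) ^ lam := by
        apply Real.rpow_le_rpow (hϖ.nonneg _ hωsm0) _ hlam0.le
        exact hϖmono _ _ hωsm0 (by linarith)
      have hEc : dist (ψ m s a) (φ m s a) ≤
          C' * Nhat ψ N T s a * (Theta ω ϖ lam π * ϖ (ω s t) ^ lam) := by
        have h1 := hgal s m hs hsm.le hmT a
        have h2 := hgap π s m hs hsm hmT hnoL
        have hNa0 : 0 ≤ N a := le_trans zero_le_one (hN1 a)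
        have h3 : ϖ (ω s m) ≤ Theta ω ϖ lam π * ϖ (ω s t) ^ lam :=
          le_trans h2 (mul_le_mul_of_nonneg_left hϖsm hTh0')
        calc dist (ψ m s a) (φ m s a) ≤ C' * N a * ϖ (ω s m) := h1
          _ ≤ C' * N a * (Theta ω ϖ lam π * ϖ (ω s t) ^ lam) :=
              mul_le_mul_of_nonneg_left h3 (mul_nonneg hC'0 hNa0)
          _ ≤ C' * Nhat ψ N T s a * (Theta ω ϖ lam π * ϖ (ω s t) ^ lam) := by
              refine mul_le_mul_of_nonneg_right ?_ (mul_nonneg hTh0' hPw0)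
              exact mul_le_mul_of_nonneg_left (hNhatgeN s a) hC'0
      -- right piece via Hp
      have hsplitlen := Stmt11Aux.filter_interval_split π.sorted hmP hsm hmt
      have hlen : (π.points.filter fun u => decide (m < u) && decide (u < t)).length <
          (π.points.filter fun u => decide (s < u) && decide (u < t)).length := by
        rw [hsplitlen]
        simp only [List.length_append, List.length_cons]
        omega
      have hHp := Hp m t hm0 hmt.le ht hsm.le le_rfl h2R hlen (φ m s a)
      have hϖR : ϖ (ω m t) ^ lam ≤ rho * ϖ (ω s t) ^ lam := hhalf _ _ hωmt0 h2R
      -- Nhat anchor bound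
      have hanch := hNhatanchor s m a (φ m s a) hs hsm.le hmT
      have hNc : Nhat ψ N T m (φ m s a) ≤
          Nhat ψ N T s a * (1 + cN * (1 + δT) * S *
            ((1 + δT) * KK * rho + C' * (1 + cN * KK * rho * S))) := by
        have h1 : dist (φ m s a) (ψ m s a) ≤
            C' * Nhat ψ N T s a * (Theta ω ϖ lam π * ϖ (ω s t) ^ lam) := by
          rw [dist_comm]; exact hEc
        have h2 : C' * Nhat ψ N T s a * (Theta ω ϖ lam π * ϖ (ω s t) ^ lam) ≤
            C' * Nhat ψ N T s a * S :=
          mul_le_mul_of_nonneg_left hS (mul_nonneg hC'0 hHat0)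
        have h3 : cN * (1 + δT) * dist (φ m s a) (ψ m s a) ≤
            cN * (1 + δT) * (C' * Nhat ψ N T s a * S) :=
          mul_le_mul_of_nonneg_left (le_trans h1 h2) (mul_nonneg hcN0 hA0)
        have h4 : cN * (1 + δT) * (C' * Nhat ψ N T s a * S) ≤
            Nhat ψ N T s a * (cN * (1 + δT) * S *
              ((1 + δT) * KK * rho + C' * (1 + cN * KK * rho * S))) := by
          have hCle : C' ≤ (1 + δT) * KK * rho + C' * (1 + cN * KK * rho * S) :=
            arith_Cle hA1 hC'0 hcN0 hρ0 hKK0 hS0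
          have hnn : 0 ≤ cN * (1 + δT) * S * Nhat ψ N T s a :=
            mul_nonneg (mul_nonneg (mul_nonneg hcN0 hA0) hS0) hHat0
          have h8 := mul_le_mul_of_nonneg_left hCle hnn
          calc cN * (1 + δT) * (C' * Nhat ψ N T s a * S) =
              cN * (1 + δT) * S * Nhat ψ N T s a * C' := by ring
            _ ≤ cN * (1 + δT) * S * Nhat ψ N T s a *
                ((1 + δT) * KK * rho + C' * (1 + cN * KK * rho * S)) := h8
            _ = Nhat ψ N T s a * (cN * (1 + δT) * S *
                ((1 + δT) * KK * rho + C' * (1 + cN * KK * rho * S))) := by ring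
        calc Nhat ψ N T m (φ m s a) ≤
            Nhat ψ N T s a + cN * (1 + δT) * dist (φ m s a) (ψ m s a) := hanch
          _ ≤ Nhat ψ N T s a + Nhat ψ N T s a * (cN * (1 + δT) * S *
                ((1 + δT) * KK * rho + C' * (1 + cN * KK * rho * S))) := by linarith
          _ = Nhat ψ N T s a * (1 + cN * (1 + δT) * S *
                ((1 + δT) * KK * rho + C' * (1 + cN * KK * rho * S))) := by ring
      -- triangle
      have htri : dist (ψ t s a) (iterFlow φ π.points t s a) ≤
          (1 + δT) * dist (ψ m s a) (φ m s a) +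
            dist (ψ t m (φ m s a)) (iterFlow φ π.points t m (φ m s a)) := by
        rw [hsplit, hIL, ← hflow1]
        have h1 := dist_triangle (ψ t m (ψ m s a)) (ψ t m (φ m s a))
          (iterFlow φ π.points t m (φ m s a))
        have h2 := hψlip hm0 hmt.le ht (ψ m s a) (φ m s a)
        linarith
      -- assemble
      have hfin1 : (1 + δT) * dist (ψ m s a) (φ m s a) ≤
          (1 + δT) * C' * Nhat ψ N T s a * (Theta ω ϖ lam π * ϖ (ω s t) ^ lam) := by
        have := mul_le_mul_of_nonneg_left hEc hA0
        calc (1 + δT) * dist (ψ m s a) (φ m s a) ≤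
            (1 + δT) * (C' * Nhat ψ N T s a * (Theta ω ϖ lam π * ϖ (ω s t) ^ lam)) := this
          _ = (1 + δT) * C' * Nhat ψ N T s a * (Theta ω ϖ lam π * ϖ (ω s t) ^ lam) := by
              ring
      have hfin2 : dist (ψ t m (φ m s a)) (iterFlow φ π.points t m (φ m s a)) ≤
          KK * Theta ω ϖ lam π * (Nhat ψ N T s a * (1 + cN * (1 + δT) * S *
            ((1 + δT) * KK * rho + C' * (1 + cN * KK * rho * S)))) *
            (rho * ϖ (ω s t) ^ lam) := by
        calc dist (ψ t m (φ m s a)) (iterFlow φ π.points t m (φ m s a)) ≤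
            KK * Theta ω ϖ lam π * Nhat ψ N T m (φ m s a) * ϖ (ω m t) ^ lam := hHp
          _ ≤ KK * Theta ω ϖ lam π * Nhat ψ N T m (φ m s a) * (rho * ϖ (ω s t) ^ lam) := by
              refine mul_le_mul_of_nonneg_left hϖR ?_
              exact mul_nonneg (mul_nonneg hKK0 hTh0') (hNhat0 m _)
          _ ≤ KK * Theta ω ϖ lam π * (Nhat ψ N T s a * (1 + cN * (1 + δT) * S *
                ((1 + δT) * KK * rho + C' * (1 + cN * KK * rho * S)))) *
                (rho * ϖ (ω s t) ^ lam) := by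
              refine mul_le_mul_of_nonneg_right ?_ (mul_nonneg hρ0 hPw0)
              exact mul_le_mul_of_nonneg_left hNc (mul_nonneg hKK0 hTh0')
      have hcoef : (1 + δT) * C' + KK * rho * (1 + cN * (1 + δT) * S *
          ((1 + δT) * KK * rho + C' * (1 + cN * KK * rho * S))) ≤
          Gcoef (1 + δT) C' cN rho KK S :=
        arith_coefA hA1 hC'0 hcN0 hρ0 hKK0 hS0
      calc dist (ψ t s a) (iterFlow φ π.points t s a) ≤
          (1 + δT) * C' * Nhat ψ N T s a * (Theta ω ϖ lam π * ϖ (ω s t) ^ lam) +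
            KK * Theta ω ϖ lam π * (Nhat ψ N T s a * (1 + cN * (1 + δT) * S *
              ((1 + δT) * KK * rho + C' * (1 + cN * KK * rho * S)))) *
              (rho * ϖ (ω s t) ^ lam) := by linarith
        _ = ((1 + δT) * C' + KK * rho * (1 + cN * (1 + δT) * S *
              ((1 + δT) * KK * rho + C' * (1 + cN * KK * rho * S)))) *
              Theta ω ϖ lam π * Nhat ψ N T s a * ϖ (ω s t) ^ lam := by ring
        _ ≤ Gcoef (1 + δT) C' cN rho KK S * Theta ω ϖ lam π * Nhat ψ N T s a *
              ϖ (ω s t) ^ lam := by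
            refine mul_le_mul_of_nonneg_right ?_ hPw0
            refine mul_le_mul_of_nonneg_right ?_ hHat0
            exact mul_le_mul_of_nonneg_right hcoef hTh0'
    · -- Case B : there is a point m with 2 ω(s,m) ≤ ω(s,t); take the largest such
      obtain ⟨m, hmSL, hmmax⟩ := Stmt11Aux.exists_max_of_ne_nil hSe
      have hmL : m ∈ (π.points.filter fun u => decide (s < u) && decide (u < t)) :=
        (List.mem_filter.mp hmSL).1
      have h2L : 2 * ω s m ≤ ω s t := by
        have := (List.mem_filter.mp hmSL).2
        simpa using this
      obtain ⟨hmP, hsm, hmt⟩ := hmemL m hmL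
      have hm0 : 0 ≤ m := le_trans hs hsm.le
      have hmT : m ≤ T := le_trans hmt.le ht
      have hωsm0 : 0 ≤ ω s m := hωno s m hs hsm.le hmT
      -- the next partition point after m
      have hmTlt : m < T := lt_of_lt_of_le hmt ht
      have hTQ : T ∈ (π.points.filter fun u => decide (m < u)) :=
        List.mem_filter.mpr ⟨π.top_mem, by simpa using hmTlt⟩
      obtain ⟨mp, hmpQ, hmpmin⟩ :=
        Stmt11Aux.exists_min_of_ne_nil (List.ne_nil_of_mem hTQ)
      have hmpP : mp ∈ π.points := (List.mem_filter.mp hmpQ).1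
      have hmmp : m < mp := by
        have := (List.mem_filter.mp hmpQ).2
        simpa using this
      have hno_mid : ∀ w ∈ π.points, ¬(m < w ∧ w < mp) := by
        rintro w hw ⟨h1, h2⟩
        have hwQ : w ∈ (π.points.filter fun u => decide (m < u)) :=
          List.mem_filter.mpr ⟨hw, by simpa using h1⟩
        exact absurd (hmpmin w hwQ) (not_le.mpr h2)
      obtain ⟨hmp0, hmpT⟩ := π.mem_Icc mp hmpP
      -- split at m ; left piece by Hp
      have hsplit1 := Stmt11Aux.filter_interval_split π.sorted hmP hsm hmt
      have hlenL : (π.points.filter fun u => decide (s < u) && decide (u < m)).length <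
          (π.points.filter fun u => decide (s < u) && decide (u < t)).length := by
        rw [hsplit1]
        simp only [List.length_append, List.length_cons]
        omega
      have hHpL := Hp s m hs hsm.le hmT le_rfl hmt.le h2L hlenL a
      have hϖL : ϖ (ω s m) ^ lam ≤ rho * ϖ (ω s t) ^ lam := hhalf _ _ hωsm0 h2L
      have hdxy : dist (ψ m s a) (iterFlow φ π.points m s a) ≤
          KK * Theta ω ϖ lam π * Nhat ψ N T s a * (rho * ϖ (ω s t) ^ lam) := by
        calc dist (ψ m s a) (iterFlow φ π.points m s a) ≤
            KK * Theta ω ϖ lam π * Nhat ψ N T s a * ϖ (ω s m) ^ lam := hHpL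
          _ ≤ KK * Theta ω ϖ lam π * Nhat ψ N T s a * (rho * ϖ (ω s t) ^ lam) := by
              refine mul_le_mul_of_nonneg_left hϖL ?_
              exact mul_nonneg (mul_nonneg hKK0 hTh0') hHat0
      -- bound N y
      have hNy : N (iterFlow φ π.points m s a) ≤
          Nhat ψ N T s a * (1 + cN * KK * rho * S) := by
        have h1 := hNlip' (iterFlow φ π.points m s a) (ψ m s a)
        have h2 : N (ψ m s a) ≤ Nhat ψ N T s a := hNhatle s a m hs hsm.le hmT
        have h3 : dist (iterFlow φ π.points m s a) (ψ m s a) ≤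
            KK * Theta ω ϖ lam π * Nhat ψ N T s a * (rho * ϖ (ω s t) ^ lam) := by
          rw [dist_comm]; exact hdxy
        have h5 : KK * Theta ω ϖ lam π * Nhat ψ N T s a * (rho * ϖ (ω s t) ^ lam) =
            KK * rho * Nhat ψ N T s a * (Theta ω ϖ lam π * ϖ (ω s t) ^ lam) := by ring
        have h6 : KK * rho * Nhat ψ N T s a * (Theta ω ϖ lam π * ϖ (ω s t) ^ lam) ≤
            KK * rho * Nhat ψ N T s a * S := by
          refine mul_le_mul_of_nonneg_left hS ?_
          exact mul_nonneg (mul_nonneg hKK0 hρ0) hHat0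
        have h4 : cN * dist (iterFlow φ π.points m s a) (ψ m s a) ≤
            cN * (KK * rho * Nhat ψ N T s a * S) := by
          refine mul_le_mul_of_nonneg_left ?_ hcN0
          rw [← h5] at h6
          exact le_trans h3 h6
        have h7 : Nhat ψ N T s a * (1 + cN * KK * rho * S) =
            Nhat ψ N T s a + cN * (KK * rho * Nhat ψ N T s a * S) := by ring
        linarith
      by_cases hcase : t ≤ mp
      · -- Case B1 : no partition point in (m,t) ; right piece is a single step
        have hflnilR : (π.points.filter fun u => decide (m < u) && decide (u < t)) = [] := by
          apply List.filter_eq_nil_iff.mpr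
          intro w hw
          simp only [Bool.and_eq_true, decide_eq_true_eq, not_and]
          intro h1 h2
          exact hno_mid w hw ⟨h1, lt_of_lt_of_le h2 hcase⟩
        have hnoR : ∀ w ∈ π.points, ¬(m < w ∧ w < t) := by
          intro w hw hcon
          have := List.filter_eq_nil_iff.mp hflnilR w hw
          simp only [Bool.and_eq_true, decide_eq_true_eq] at this
          exact this ⟨hcon.1, hcon.2⟩
        have hsplit := Stmt11Aux.iterFlow_split φ π.sorted hmP hsm hmt a
        have hIR : iterFlow φ π.points t m = φ t m := Stmt11Aux.iterFlow_nil φ hflnilR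
        have hflow1 : ψ t m (ψ m s a) = ψ t s a := hψflow hs hsm.le hmt.le ht a
        have hωmt0 : 0 ≤ ω m t := hωno m t hm0 hmt.le ht
        have hϖmt : ϖ (ω m t) ≤ Theta ω ϖ lam π * ϖ (ω s t) ^ lam := by
          have h2 := hgap π m t hm0 hmt ht hnoR
          have h3 : ϖ (ω m t) ^ lam ≤ ϖ (ω s t) ^ lam := by
            apply Real.rpow_le_rpow (hϖ.nonneg _ hωmt0) _ hlam0.le
            exact hϖmono _ _ hωmt0 (hωmono s m t t hs hsm.le hmt.le le_rfl ht)
          exact le_trans h2 (mul_le_mul_of_nonneg_left h3 hTh0')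
        have htri : dist (ψ t s a) (iterFlow φ π.points t s a) ≤
            (1 + δT) * dist (ψ m s a) (iterFlow φ π.points m s a) +
              C' * N (iterFlow φ π.points m s a) * ϖ (ω m t) := by
          rw [hsplit, hIR, ← hflow1]
          have h1 := dist_triangle (ψ t m (ψ m s a)) (ψ t m (iterFlow φ π.points m s a))
            (φ t m (iterFlow φ π.points m s a))
          have h2 := hψlip hm0 hmt.le ht (ψ m s a) (iterFlow φ π.points m s a)
          have h3 := hgal m t hm0 hmt.le ht (iterFlow φ π.points m s a)
          linarith
        have hfin1 : (1 + δT) * dist (ψ m s a) (iterFlow φ π.points m s a) ≤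
            (1 + δT) * KK * rho * (Theta ω ϖ lam π * Nhat ψ N T s a * ϖ (ω s t) ^ lam) := by
          have := mul_le_mul_of_nonneg_left hdxy hA0
          calc (1 + δT) * dist (ψ m s a) (iterFlow φ π.points m s a) ≤
              (1 + δT) * (KK * Theta ω ϖ lam π * Nhat ψ N T s a *
                (rho * ϖ (ω s t) ^ lam)) := this
            _ = (1 + δT) * KK * rho *
                (Theta ω ϖ lam π * Nhat ψ N T s a * ϖ (ω s t) ^ lam) := by ring
        have hfin2 : C' * N (iterFlow φ π.points m s a) * ϖ (ω m t) ≤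
            C' * (1 + cN * KK * rho * S) *
              (Theta ω ϖ lam π * Nhat ψ N T s a * ϖ (ω s t) ^ lam) := by
          have hNy0 : 0 ≤ N (iterFlow φ π.points m s a) :=
            le_trans zero_le_one (hN1 _)
          have hϖmt0 : 0 ≤ ϖ (ω m t) := hϖ.nonneg _ hωmt0
          calc C' * N (iterFlow φ π.points m s a) * ϖ (ω m t) ≤
              C' * N (iterFlow φ π.points m s a) *
                (Theta ω ϖ lam π * ϖ (ω s t) ^ lam) :=
                mul_le_mul_of_nonneg_left hϖmt (mul_nonneg hC'0 hNy0)
            _ ≤ C' * (Nhat ψ N T s a * (1 + cN * KK * rho * S)) *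
                (Theta ω ϖ lam π * ϖ (ω s t) ^ lam) := by
                refine mul_le_mul_of_nonneg_right ?_ (mul_nonneg hTh0' hPw0)
                exact mul_le_mul_of_nonneg_left hNy hC'0
            _ = C' * (1 + cN * KK * rho * S) *
                (Theta ω ϖ lam π * Nhat ψ N T s a * ϖ (ω s t) ^ lam) := by ring
        have hcoef : (1 + δT) * KK * rho + C' * (1 + cN * KK * rho * S) ≤
            Gcoef (1 + δT) C' cN rho KK S :=
          arith_coefB1 hA1 hC'0 hcN0 hρ0 hKK0 hS0
        calc dist (ψ t s a) (iterFlow φ π.points t s a) ≤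
            ((1 + δT) * KK * rho + C' * (1 + cN * KK * rho * S)) *
              (Theta ω ϖ lam π * Nhat ψ N T s a * ϖ (ω s t) ^ lam) := by
              rw [add_mul]
              have e1 : (1 + δT) * KK * rho *
                  (Theta ω ϖ lam π * Nhat ψ N T s a * ϖ (ω s t) ^ lam) =
                  (1 + δT) * KK * rho *
                  (Theta ω ϖ lam π * Nhat ψ N T s a * ϖ (ω s t) ^ lam) := rfl
              linarith [hfin1, hfin2, htri]
          _ ≤ Gcoef (1 + δT) C' cN rho KK S *
              (Theta ω ϖ lam π * Nhat ψ N T s a * ϖ (ω s t) ^ lam) := by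
              refine mul_le_mul_of_nonneg_right hcoef ?_
              exact mul_nonneg (mul_nonneg hTh0' hHat0) hPw0
          _ = Gcoef (1 + δT) C' cN rho KK S * Theta ω ϖ lam π * Nhat ψ N T s a *
              ϖ (ω s t) ^ lam := by ring
      · -- Case B2 : mp < t ; split as φ^π_{t,mp} ∘ φ_{mp,m} ∘ φ^π_{m,s}
        push_neg at hcase
        have hmpt : mp < t := hcase
        have hsmp : s < mp := lt_trans hsm hmmp
        have hmpL := hmemL' mp hmpP hsmp hmpt
        have hmpnot : ¬ (2 * ω s mp ≤ ω s t) := by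
          intro hc
          have hmem : mp ∈ ((π.points.filter fun u => decide (s < u) && decide (u < t)).filter
              fun u => decide (2 * ω s u ≤ ω s t)) :=
            List.mem_filter.mpr ⟨hmpL, by simpa using hc⟩
          exact absurd (hmmax mp hmem) (not_le.mpr hmmp)
        have hωmpt0 : 0 ≤ ω mp t := hωno mp t hmp0 hmpt.le ht
        have h2R : 2 * ω mp t ≤ ω s t := by
          have hsup := hω.superadd hs hsmp.le hmpt.le ht
          have h1 := not_le.mp hmpnot
          have := hωno s mp hs hsmp.le hmpT
          linarith
        -- splittings
        have hsplitA := Stmt11Aux.iterFlow_split φ π.sorted hmP hsm hmt a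
        have hsplitB := Stmt11Aux.iterFlow_split φ π.sorted hmpP hmmp hmpt
          (iterFlow φ π.points m s a)
        have hflnilM : (π.points.filter fun u => decide (m < u) && decide (u < mp)) = [] := by
          apply List.filter_eq_nil_iff.mpr
          intro w hw
          simp only [Bool.and_eq_true, decide_eq_true_eq, not_and]
          intro h1 h2
          exact hno_mid w hw ⟨h1, h2⟩
        have hIM : iterFlow φ π.points mp m = φ mp m := Stmt11Aux.iterFlow_nil φ hflnilM
        -- lengths for the right piece
        have hsplit2 := Stmt11Aux.filter_interval_split π.sorted hmpP hmmp hmpt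
        have hlenR : (π.points.filter fun u => decide (mp < u) && decide (u < t)).length <
            (π.points.filter fun u => decide (s < u) && decide (u < t)).length := by
          rw [hsplit1, hsplit2, hflnilM]
          simp only [List.length_append, List.length_cons, List.length_nil]
          omega
        -- the flow identities
        have hflow1 : ψ t mp (ψ mp s a) = ψ t s a := hψflow hs hsmp.le hmpt.le ht a
        have hflow2 : ψ mp m (ψ m s a) = ψ mp s a := hψflow hs hsm.le hmmp.le hmpT a
        -- middle single-step and E bound
        have hϖmid : ϖ (ω m mp) ≤ Theta ω ϖ lam π * ϖ (ω s t) ^ lam := by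
          have h2 := hgap π m mp hm0 hmmp hmpT hno_mid
          have hωmmp0 : 0 ≤ ω m mp := hωno m mp hm0 hmmp.le hmpT
          have h3 : ϖ (ω m mp) ^ lam ≤ ϖ (ω s t) ^ lam := by
            apply Real.rpow_le_rpow (hϖ.nonneg _ hωmmp0) _ hlam0.le
            exact hϖmono _ _ hωmmp0 (hωmono s m mp t hs hsm.le hmmp.le hmpt.le ht)
          exact le_trans h2 (mul_le_mul_of_nonneg_left h3 hTh0')
        have hE : dist (ψ mp s a) (φ mp m (iterFlow φ π.points m s a)) ≤
            Theta ω ϖ lam π * ϖ (ω s t) ^ lam * Nhat ψ N T s a *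
              ((1 + δT) * KK * rho + C' * (1 + cN * KK * rho * S)) := by
          rw [← hflow2]
          have h1 := dist_triangle (ψ mp m (ψ m s a))
            (ψ mp m (iterFlow φ π.points m s a)) (φ mp m (iterFlow φ π.points m s a))
          have h2 := hψlip hm0 hmmp.le hmpT (ψ m s a) (iterFlow φ π.points m s a)
          have h3 := hgal m mp hm0 hmmp.le hmpT (iterFlow φ π.points m s a)
          have h4 : (1 + δT) * dist (ψ m s a) (iterFlow φ π.points m s a) ≤
              (1 + δT) * KK * rho *
                (Theta ω ϖ lam π * ϖ (ω s t) ^ lam * Nhat ψ N T s a) := by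
            have := mul_le_mul_of_nonneg_left hdxy hA0
            calc (1 + δT) * dist (ψ m s a) (iterFlow φ π.points m s a) ≤
                (1 + δT) * (KK * Theta ω ϖ lam π * Nhat ψ N T s a *
                  (rho * ϖ (ω s t) ^ lam)) := this
              _ = (1 + δT) * KK * rho *
                  (Theta ω ϖ lam π * ϖ (ω s t) ^ lam * Nhat ψ N T s a) := by ring
          have h5 : C' * N (iterFlow φ π.points m s a) * ϖ (ω m mp) ≤
              C' * (1 + cN * KK * rho * S) *
                (Theta ω ϖ lam π * ϖ (ω s t) ^ lam * Nhat ψ N T s a) := by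
            have hNy0 : 0 ≤ N (iterFlow φ π.points m s a) := le_trans zero_le_one (hN1 _)
            calc C' * N (iterFlow φ π.points m s a) * ϖ (ω m mp) ≤
                C' * N (iterFlow φ π.points m s a) *
                  (Theta ω ϖ lam π * ϖ (ω s t) ^ lam) :=
                  mul_le_mul_of_nonneg_left hϖmid (mul_nonneg hC'0 hNy0)
              _ ≤ C' * (Nhat ψ N T s a * (1 + cN * KK * rho * S)) *
                  (Theta ω ϖ lam π * ϖ (ω s t) ^ lam) := by
                  refine mul_le_mul_of_nonneg_right ?_ (mul_nonneg hTh0' hPw0)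
                  exact mul_le_mul_of_nonneg_left hNy hC'0
              _ = C' * (1 + cN * KK * rho * S) *
                  (Theta ω ϖ lam π * ϖ (ω s t) ^ lam * Nhat ψ N T s a) := by ring
          calc dist (ψ mp m (ψ m s a)) (φ mp m (iterFlow φ π.points m s a)) ≤
              (1 + δT) * dist (ψ m s a) (iterFlow φ π.points m s a) +
                C' * N (iterFlow φ π.points m s a) * ϖ (ω m mp) := by linarith
            _ ≤ (1 + δT) * KK * rho *
                  (Theta ω ϖ lam π * ϖ (ω s t) ^ lam * Nhat ψ N T s a) +
                C' * (1 + cN * KK * rho * S) *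
                  (Theta ω ϖ lam π * ϖ (ω s t) ^ lam * Nhat ψ N T s a) := by linarith
            _ = Theta ω ϖ lam π * ϖ (ω s t) ^ lam * Nhat ψ N T s a *
                ((1 + δT) * KK * rho + C' * (1 + cN * KK * rho * S)) := by ring
        -- Nhat bound at the right piece base point
        have hanch := hNhatanchor s mp a (φ mp m (iterFlow φ π.points m s a)) hs hsmp.le hmpT
        have hNc : Nhat ψ N T mp (φ mp m (iterFlow φ π.points m s a)) ≤
            Nhat ψ N T s a * (1 + cN * (1 + δT) * S *
              ((1 + δT) * KK * rho + C' * (1 + cN * KK * rho * S))) := by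
          have h1 : dist (φ mp m (iterFlow φ π.points m s a)) (ψ mp s a) ≤
              S * Nhat ψ N T s a *
                ((1 + δT) * KK * rho + C' * (1 + cN * KK * rho * S)) := by
            rw [dist_comm]
            refine le_trans hE ?_
            refine mul_le_mul_of_nonneg_right ?_ hEE0
            exact mul_le_mul_of_nonneg_right hS hHat0
          have h3 : cN * (1 + δT) * dist (φ mp m (iterFlow φ π.points m s a)) (ψ mp s a) ≤
              cN * (1 + δT) * (S * Nhat ψ N T s a *
                ((1 + δT) * KK * rho + C' * (1 + cN * KK * rho * S))) :=
            mul_le_mul_of_nonneg_left h1 (mul_nonneg hcN0 hA0)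
          have h7 : Nhat ψ N T s a * (1 + cN * (1 + δT) * S *
              ((1 + δT) * KK * rho + C' * (1 + cN * KK * rho * S))) =
              Nhat ψ N T s a + cN * (1 + δT) * (S * Nhat ψ N T s a *
                ((1 + δT) * KK * rho + C' * (1 + cN * KK * rho * S))) := by ring
          linarith
        -- right piece via Hp
        have hHpR := Hp mp t hmp0 hmpt.le ht hsmp.le le_rfl h2R hlenR
          (φ mp m (iterFlow φ π.points m s a))
        have hϖR : ϖ (ω mp t) ^ lam ≤ rho * ϖ (ω s t) ^ lam := hhalf _ _ hωmpt0 h2R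
        -- triangle and assembly
        have htri : dist (ψ t s a) (iterFlow φ π.points t s a) ≤
            (1 + δT) * dist (ψ mp s a) (φ mp m (iterFlow φ π.points m s a)) +
              dist (ψ t mp (φ mp m (iterFlow φ π.points m s a)))
                (iterFlow φ π.points t mp (φ mp m (iterFlow φ π.points m s a))) := by
          rw [hsplitA, hsplitB, hIM, ← hflow1]
          have h1 := dist_triangle (ψ t mp (ψ mp s a))
            (ψ t mp (φ mp m (iterFlow φ π.points m s a)))
            (iterFlow φ π.points t mp (φ mp m (iterFlow φ π.points m s a)))
          have h2 := hψlip hmp0 hmpt.le ht (ψ mp s a)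
            (φ mp m (iterFlow φ π.points m s a))
          linarith
        have hfin1 : (1 + δT) * dist (ψ mp s a) (φ mp m (iterFlow φ π.points m s a)) ≤
            (1 + δT) * ((1 + δT) * KK * rho + C' * (1 + cN * KK * rho * S)) *
              (Theta ω ϖ lam π * Nhat ψ N T s a * ϖ (ω s t) ^ lam) := by
          have := mul_le_mul_of_nonneg_left hE hA0
          calc (1 + δT) * dist (ψ mp s a) (φ mp m (iterFlow φ π.points m s a)) ≤
              (1 + δT) * (Theta ω ϖ lam π * ϖ (ω s t) ^ lam * Nhat ψ N T s a *
                ((1 + δT) * KK * rho + C' * (1 + cN * KK * rho * S))) := this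
            _ = (1 + δT) * ((1 + δT) * KK * rho + C' * (1 + cN * KK * rho * S)) *
                (Theta ω ϖ lam π * Nhat ψ N T s a * ϖ (ω s t) ^ lam) := by ring
        have hfin2 : dist (ψ t mp (φ mp m (iterFlow φ π.points m s a)))
              (iterFlow φ π.points t mp (φ mp m (iterFlow φ π.points m s a))) ≤
            KK * rho * (1 + cN * (1 + δT) * S *
              ((1 + δT) * KK * rho + C' * (1 + cN * KK * rho * S))) *
              (Theta ω ϖ lam π * Nhat ψ N T s a * ϖ (ω s t) ^ lam) := by
          calc dist (ψ t mp (φ mp m (iterFlow φ π.points m s a)))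
                (iterFlow φ π.points t mp (φ mp m (iterFlow φ π.points m s a))) ≤
              KK * Theta ω ϖ lam π *
                Nhat ψ N T mp (φ mp m (iterFlow φ π.points m s a)) *
                ϖ (ω mp t) ^ lam := hHpR
            _ ≤ KK * Theta ω ϖ lam π *
                Nhat ψ N T mp (φ mp m (iterFlow φ π.points m s a)) *
                (rho * ϖ (ω s t) ^ lam) := by
                refine mul_le_mul_of_nonneg_left hϖR ?_
                exact mul_nonneg (mul_nonneg hKK0 hTh0') (hNhat0 mp _)
            _ ≤ KK * Theta ω ϖ lam π *
                (Nhat ψ N T s a * (1 + cN * (1 + δT) * S *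
                  ((1 + δT) * KK * rho + C' * (1 + cN * KK * rho * S)))) *
                (rho * ϖ (ω s t) ^ lam) := by
                refine mul_le_mul_of_nonneg_right ?_ (mul_nonneg hρ0 hPw0)
                exact mul_le_mul_of_nonneg_left hNc (mul_nonneg hKK0 hTh0')
            _ = KK * rho * (1 + cN * (1 + δT) * S *
                ((1 + δT) * KK * rho + C' * (1 + cN * KK * rho * S))) *
                (Theta ω ϖ lam π * Nhat ψ N T s a * ϖ (ω s t) ^ lam) := by ring
        have hGid : (1 + δT) * ((1 + δT) * KK * rho + C' * (1 + cN * KK * rho * S)) +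
            KK * rho * (1 + cN * (1 + δT) * S *
              ((1 + δT) * KK * rho + C' * (1 + cN * KK * rho * S))) =
            Gcoef (1 + δT) C' cN rho KK S := by
          simp only [Gcoef]; ring
        calc dist (ψ t s a) (iterFlow φ π.points t s a) ≤
            ((1 + δT) * ((1 + δT) * KK * rho + C' * (1 + cN * KK * rho * S)) +
              KK * rho * (1 + cN * (1 + δT) * S *
                ((1 + δT) * KK * rho + C' * (1 + cN * KK * rho * S)))) *
              (Theta ω ϖ lam π * Nhat ψ N T s a * ϖ (ω s t) ^ lam) := by
              rw [add_mul]
              linarith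
          _ = Gcoef (1 + δT) C' cN rho KK S *
              (Theta ω ϖ lam π * Nhat ψ N T s a * ϖ (ω s t) ^ lam) := by rw [hGid]
          _ = Gcoef (1 + δT) C' cN rho KK S * Theta ω ϖ lam π * Nhat ψ N T s a *
              ϖ (ω s t) ^ lam := by ring

  -- upper bound for Theta * ϖ^lam
  have hSigtop : ∀ (π : TimePartition T) (s t : ℝ), 0 ≤ s → s ≤ t → t ≤ T →
      Theta ω ϖ lam π * ϖ (ω s t) ^ lam ≤ Thbar * pwbar ^ lam + 1 := by
    intro π s t hs hst ht
    have h1 : ϖ (ω s t) ^ lam ≤ pwbar ^ lam :=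
      Real.rpow_le_rpow (hϖ.nonneg _ (hωno s t hs hst ht)) (hϖle s t hs hst ht) hlam0.le
    have h2 : 0 ≤ ϖ (ω s t) ^ lam :=
      Real.rpow_nonneg (hϖ.nonneg _ (hωno s t hs hst ht)) _
    have h3 : Theta ω ϖ lam π * ϖ (ω s t) ^ lam ≤ Thbar * ϖ (ω s t) ^ lam :=
      mul_le_mul_of_nonneg_right (hThbar π) h2
    have h4 : Thbar * ϖ (ω s t) ^ lam ≤ Thbar * pwbar ^ lam :=
      mul_le_mul_of_nonneg_left h1 hThbar0
    linarith
  obtain ⟨Stop, hStop'⟩ : ∃ x : ℝ, x = Thbar * pwbar ^ lam + 1 := ⟨_, rfl⟩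
  have hStop0 : 0 ≤ Stop := by
    have : 0 ≤ Thbar * pwbar ^ lam := mul_nonneg hThbar0 (Real.rpow_nonneg hpwbar0 _)
    rw [hStop']; linarith
  -- smallness of ϖ near 0
  have hcont0 : ∀ τ : ℝ, 0 < τ → ∃ e : ℝ, 0 < e ∧ ϖ e < τ := by
    intro τ hτ
    have hcw : ContinuousWithinAt ϖ (Set.Ici 0) 0 := hϖ.contOn 0 (mem_Ici.mpr le_rfl)
    rw [Metric.continuousWithinAt_iff] at hcw
    obtain ⟨d, hd0, hd⟩ := hcw τ hτ
    refine ⟨d / 2, by linarith, ?_⟩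
    have hmem : d / 2 ∈ Set.Ici (0:ℝ) := mem_Ici.mpr (by linarith)
    have hdist : dist (d / 2) 0 < d := by
      rw [Real.dist_eq, sub_zero, abs_of_nonneg (by linarith : (0:ℝ) ≤ d / 2)]
      linarith
    have h5 := hd hmem hdist
    rw [Real.dist_eq, hϖ00, sub_zero] at h5
    exact lt_of_le_of_lt (le_abs_self _) h5
  -- choice of the constants for the bottom scale
  obtain ⟨D, hD'⟩ : ∃ x : ℝ, x = (1 + δT) * C' + 1 := ⟨_, rfl⟩
  have hACnn : 0 ≤ (1 + δT) * C' := mul_nonneg (by linarith) hC'0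
  have hD1 : 1 ≤ D := by rw [hD']; linarith
  have hD0 : 0 < D := by linarith
  obtain ⟨mu, hmu'⟩ : ∃ x : ℝ, x = 1 - rho * (2 + 3 * δT + δT ^ 2) := ⟨_, rfl⟩
  have hmu0 : 0 < mu := by rw [hmu']; linarith [hmain]
  have hmu1 : mu ≤ 1 := by
    have h1 : 0 ≤ 2 + 3 * δT + δT ^ 2 := by
      have := sq_nonneg δT
      linarith
    have := mul_nonneg hρ0 h1
    rw [hmu']; linarith
  obtain ⟨K0, hK0'⟩ : ∃ x : ℝ, x = 2 * D / mu := ⟨_, rfl⟩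
  have hK00 : 0 < K0 := by
    rw [hK0']; exact div_pos (by linarith) hmu0
  have hmuK0 : mu * K0 = 2 * D := by
    rw [hK0']; field_simp
  have hDK0 : 2 * D ≤ K0 := by
    rw [hK0']
    calc 2 * D = 2 * D * 1 := by ring
      _ ≤ 2 * D * (1 / mu) := by
          refine mul_le_mul_of_nonneg_left ?_ (by linarith)
          rw [le_div_iff₀ hmu0]; linarith
      _ = 2 * D / mu := by ring
  have hCK0 : C' ≤ K0 := by
    have h1 : C' ≤ (1 + δT) * C' := le_mul_of_one_le_left hC'0 hA1
    linarith
  obtain ⟨W, hW'⟩ : ∃ x : ℝ, x = cN * K0 * rho * (1 + δT) * (3 * C' + (1 + δT) * K0 * rho) := ⟨_, rfl⟩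
  have hW0 : 0 ≤ W := by
    rw [hW']
    have h1 : 0 ≤ cN * K0 * rho * (1 + δT) :=
      mul_nonneg (mul_nonneg (mul_nonneg hcN0 hK00.le) hρ0) (by linarith)
    have h2 : 0 ≤ 3 * C' + (1 + δT) * K0 * rho := by
      have := mul_nonneg (mul_nonneg (by linarith : (0:ℝ) ≤ 1 + δT) hK00.le) hρ0
      linarith
    exact mul_nonneg h1 h2
  obtain ⟨Ssmall, hSsmall'⟩ : ∃ x : ℝ, x = min (1 / (cN * K0 * rho + 1)) (D / (W + 1)) := ⟨_, rfl⟩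
  have hq0 : 0 < cN * K0 * rho + 1 := by
    have := mul_nonneg (mul_nonneg hcN0 hK00.le) hρ0
    linarith
  have hSsmall0 : 0 < Ssmall := by
    rw [hSsmall']
    exact lt_min (one_div_pos.mpr hq0) (div_pos hD0 (by linarith))
  -- master inequality at the bottom scale
  have hmaster : ∀ S : ℝ, 0 ≤ S → S ≤ Ssmall →
      Gcoef (1 + δT) C' cN rho K0 S ≤ K0 := by
    intro S hS0' hSle
    obtain ⟨x, hx'⟩ : ∃ y : ℝ, y = cN * K0 * rho * S := ⟨_, rfl⟩
    have hx0 : 0 ≤ x := by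
      rw [hx']
      exact mul_nonneg (mul_nonneg (mul_nonneg hcN0 hK00.le) hρ0) hS0'
    have hx1 : x ≤ 1 := by
      have h1 : S ≤ 1 / (cN * K0 * rho + 1) :=
        le_trans hSle (by rw [hSsmall']; exact min_le_left _ _)
      have h2 : x ≤ cN * K0 * rho * (1 / (cN * K0 * rho + 1)) := by
        rw [hx']
        exact mul_le_mul_of_nonneg_left h1 (mul_nonneg (mul_nonneg hcN0 hK00.le) hρ0)
      have h3 : cN * K0 * rho * (1 / (cN * K0 * rho + 1)) ≤ 1 := by
        rw [mul_one_div, div_le_one hq0]; linarith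
      linarith
    have hSW : S * W ≤ D := by
      have h1 : S ≤ D / (W + 1) := le_trans hSle (by rw [hSsmall']; exact min_le_right _ _)
      have h2 : S * W ≤ (D / (W + 1)) * W := mul_le_mul_of_nonneg_right h1 hW0
      have h3 : (D / (W + 1)) * W ≤ D := by
        rw [div_mul_eq_mul_div, div_le_iff₀ (by linarith : (0:ℝ) < W + 1)]
        exact mul_le_mul_of_nonneg_left (by linarith : W ≤ W + 1) hD0.le
      linarith
    have hGexp : Gcoef (1 + δT) C' cN rho K0 S =
        (1 + δT) ^ 2 * K0 * rho + K0 * rho + (1 + δT) * C' + (1 + δT) * C' * x +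
          K0 * rho * (cN * (1 + δT) * S * ((1 + δT) * K0 * rho + C' * (1 + x))) := by
      simp only [Gcoef]; rw [hx']; ring
    have key1 : (1 + δT) ^ 2 * K0 * rho + K0 * rho ≤ (1 - mu) * K0 := by
      have h1 : rho * ((1 + δT) ^ 2 + 1) ≤ rho * (2 + 3 * δT + δT ^ 2) := by
        refine mul_le_mul_of_nonneg_left ?_ hρ0
        have e : (1 + δT) ^ 2 + 1 = 2 + 2 * δT + δT ^ 2 := by ring
        linarith
      have h2 : rho * ((1 + δT) ^ 2 + 1) * K0 ≤ rho * (2 + 3 * δT + δT ^ 2) * K0 :=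
        mul_le_mul_of_nonneg_right h1 hK00.le
      have h3 : (1 - mu) * K0 = rho * (2 + 3 * δT + δT ^ 2) * K0 := by
        rw [hmu']; ring
      have e : (1 + δT) ^ 2 * K0 * rho + K0 * rho = rho * ((1 + δT) ^ 2 + 1) * K0 := by
        ring
      linarith
    have key3 : (1 + δT) * C' * x +
        K0 * rho * (cN * (1 + δT) * S * ((1 + δT) * K0 * rho + C' * (1 + x))) ≤ S * W := by
      have e1 : (1 + δT) * C' * x = S * (cN * K0 * rho * (1 + δT) * C') := by
        rw [hx']; ring
      have e2 : K0 * rho * (cN * (1 + δT) * S * ((1 + δT) * K0 * rho + C' * (1 + x))) =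
          S * (cN * K0 * rho * (1 + δT)) * ((1 + δT) * K0 * rho + C' * (1 + x)) := by
        ring
      have h4 : 0 ≤ S * (cN * K0 * rho * (1 + δT)) :=
        mul_nonneg hS0' (mul_nonneg (mul_nonneg (mul_nonneg hcN0 hK00.le) hρ0) (by linarith))
      have h5 : (1 + δT) * K0 * rho + C' * (1 + x) ≤ (1 + δT) * K0 * rho + 2 * C' := by
        have := mul_le_mul_of_nonneg_left (by linarith : (1:ℝ) + x ≤ 2) hC'0
        linarith
      have h6 : S * (cN * K0 * rho * (1 + δT)) * ((1 + δT) * K0 * rho + C' * (1 + x)) ≤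
          S * (cN * K0 * rho * (1 + δT)) * ((1 + δT) * K0 * rho + 2 * C') :=
        mul_le_mul_of_nonneg_left h5 h4
      have e3 : S * W = S * (cN * K0 * rho * (1 + δT) * C') +
          S * (cN * K0 * rho * (1 + δT)) * ((1 + δT) * K0 * rho + 2 * C') := by
        rw [hW']; ring
      rw [e1, e2, e3]
      linarith
    rw [hGexp]
    linarith [hmuK0, key1, key3, hSW]
  -- bottom scale: ω s t ≤ e0
  obtain ⟨e0, he00, he0⟩ : ∃ e0 : ℝ, 0 < e0 ∧ ∀ (π : TimePartition T) (s t : ℝ),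
      0 ≤ s → s ≤ t → t ≤ T → ω s t ≤ e0 →
      Theta ω ϖ lam π * ϖ (ω s t) ^ lam ≤ Ssmall := by
    have hτ0 : 0 < Ssmall / (Thbar + 1) := div_pos hSsmall0 (by linarith)
    have hτp0 : 0 < (Ssmall / (Thbar + 1)) ^ (1 / lam) := Real.rpow_pos_of_pos hτ0 _
    obtain ⟨e0, he00, he0ϖ⟩ := hcont0 _ hτp0
    refine ⟨e0, he00, ?_⟩
    intro π s t hs hst ht hω_le
    have h0 : 0 ≤ ω s t := hωno s t hs hst ht
    have h1 : ϖ (ω s t) ≤ (Ssmall / (Thbar + 1)) ^ (1 / lam) :=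
      le_trans (hϖmono _ _ h0 hω_le) he0ϖ.le
    have h2 : ϖ (ω s t) ^ lam ≤ ((Ssmall / (Thbar + 1)) ^ (1 / lam)) ^ lam :=
      Real.rpow_le_rpow (hϖ.nonneg _ h0) h1 hlam0.le
    have h3 : ((Ssmall / (Thbar + 1)) ^ (1 / lam)) ^ lam = Ssmall / (Thbar + 1) := by
      rw [← Real.rpow_mul hτ0.le, one_div_mul_cancel (ne_of_gt hlam0), Real.rpow_one]
    have h4 : ϖ (ω s t) ^ lam ≤ Ssmall / (Thbar + 1) := by rw [h3] at h2; exact h2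
    have h5 : Theta ω ϖ lam π * ϖ (ω s t) ^ lam ≤ Thbar * (Ssmall / (Thbar + 1)) := by
      have h6 : 0 ≤ ϖ (ω s t) ^ lam := Real.rpow_nonneg (hϖ.nonneg _ h0) _
      exact mul_le_mul (hThbar π) h4 h6 hThbar0
    have h7 : Thbar * (Ssmall / (Thbar + 1)) ≤ Ssmall := by
      rw [mul_div_assoc']
      rw [div_le_iff₀ (by linarith : (0:ℝ) < Thbar + 1)]
      have h8 : Thbar * Ssmall ≤ (Thbar + 1) * Ssmall :=
        mul_le_mul_of_nonneg_right (by linarith) hSsmall0.le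
      have e : Ssmall * (Thbar + 1) = (Thbar + 1) * Ssmall := by ring
      linarith
    linarith
  -- bottom-scale estimate by strong induction on the number of interior points
  have R0 : ∀ (n : ℕ) (π : TimePartition T) (s t : ℝ), 0 ≤ s → s ≤ t → t ≤ T → ω s t ≤ e0 →
      (π.points.filter fun u => decide (s < u) && decide (u < t)).length ≤ n →
      ∀ a : V, dist (ψ t s a) (iterFlow φ π.points t s a) ≤
        K0 * Theta ω ϖ lam π * Nhat ψ N T s a * ϖ (ω s t) ^ lam := by
    intro n
    induction n with
    | zero =>
        intro π s t hs hst ht hωe hlen a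
        have hfil : (π.points.filter fun u => decide (s < u) && decide (u < t)) = [] :=
          List.length_eq_zero_iff.mp (Nat.le_zero.mp hlen)
        have h1 := hbase π s t a hs hst ht hfil
        have h2 : 0 ≤ Theta ω ϖ lam π * Nhat ψ N T s a * ϖ (ω s t) ^ lam :=
          mul_nonneg (mul_nonneg (hTh0 π) (hNhat0 s a))
            (Real.rpow_nonneg (hϖ.nonneg _ (hωno s t hs hst ht)) lam)
        calc dist (ψ t s a) (iterFlow φ π.points t s a) ≤
            C' * Theta ω ϖ lam π * Nhat ψ N T s a * ϖ (ω s t) ^ lam := h1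
          _ = C' * (Theta ω ϖ lam π * Nhat ψ N T s a * ϖ (ω s t) ^ lam) := by ring
          _ ≤ K0 * (Theta ω ϖ lam π * Nhat ψ N T s a * ϖ (ω s t) ^ lam) :=
              mul_le_mul_of_nonneg_right hCK0 h2
          _ = K0 * Theta ω ϖ lam π * Nhat ψ N T s a * ϖ (ω s t) ^ lam := by ring
    | succ n ih =>
        intro π s t hs hst ht hωe hlen a
        by_cases hfil : (π.points.filter fun u => decide (s < u) && decide (u < t)) = []
        · have h1 := hbase π s t a hs hst ht hfil
          have h2 : 0 ≤ Theta ω ϖ lam π * Nhat ψ N T s a * ϖ (ω s t) ^ lam :=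
            mul_nonneg (mul_nonneg (hTh0 π) (hNhat0 s a))
              (Real.rpow_nonneg (hϖ.nonneg _ (hωno s t hs hst ht)) lam)
          calc dist (ψ t s a) (iterFlow φ π.points t s a) ≤
              C' * Theta ω ϖ lam π * Nhat ψ N T s a * ϖ (ω s t) ^ lam := h1
            _ = C' * (Theta ω ϖ lam π * Nhat ψ N T s a * ϖ (ω s t) ^ lam) := by ring
            _ ≤ K0 * (Theta ω ϖ lam π * Nhat ψ N T s a * ϖ (ω s t) ^ lam) :=
                mul_le_mul_of_nonneg_right hCK0 h2
            _ = K0 * Theta ω ϖ lam π * Nhat ψ N T s a * ϖ (ω s t) ^ lam := by ring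
        · obtain ⟨u, hu⟩ := List.exists_mem_of_ne_nil _ hfil
          have hu' := List.mem_filter.mp hu
          simp only [Bool.and_eq_true, decide_eq_true_eq] at hu'
          have hst' : s < t := lt_trans hu'.2.1 hu'.2.2
          have hHp : ∀ s' t' : ℝ, 0 ≤ s' → s' ≤ t' → t' ≤ T → s ≤ s' → t' ≤ t →
              2 * ω s' t' ≤ ω s t →
              (π.points.filter fun u => decide (s' < u) && decide (u < t')).length <
                (π.points.filter fun u => decide (s < u) && decide (u < t)).length →
              ∀ b : V, dist (ψ t' s' b) (iterFlow φ π.points t' s' b) ≤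
                K0 * Theta ω ϖ lam π * Nhat ψ N T s' b * ϖ (ω s' t') ^ lam := by
            intro s' t' hs' hst'' ht' hss' htt' h2ω hlen' b
            have hωe' : ω s' t' ≤ e0 :=
              le_trans (hωmono s s' t' t hs hss' hst'' htt' ht) hωe
            exact ih π s' t' hs' hst'' ht' hωe' (by omega) b
          have hSb : Theta ω ϖ lam π * ϖ (ω s t) ^ lam ≤ Ssmall :=
            he0 π s t hs hst ht hωe
          have h1 := hstep π K0 Ssmall hK00.le hSsmall0.le s t hs hst' ht hfil hSb hHp a
          have h2 : 0 ≤ Theta ω ϖ lam π * Nhat ψ N T s a * ϖ (ω s t) ^ lam :=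
            mul_nonneg (mul_nonneg (hTh0 π) (hNhat0 s a))
              (Real.rpow_nonneg (hϖ.nonneg _ (hωno s t hs hst ht)) lam)
          have h3 := hmaster Ssmall hSsmall0.le le_rfl
          calc dist (ψ t s a) (iterFlow φ π.points t s a) ≤
              Gcoef (1 + δT) C' cN rho K0 Ssmall * Theta ω ϖ lam π * Nhat ψ N T s a *
                ϖ (ω s t) ^ lam := h1
            _ = Gcoef (1 + δT) C' cN rho K0 Ssmall *
                (Theta ω ϖ lam π * Nhat ψ N T s a * ϖ (ω s t) ^ lam) := by ring
            _ ≤ K0 * (Theta ω ϖ lam π * Nhat ψ N T s a * ϖ (ω s t) ^ lam) :=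
                mul_le_mul_of_nonneg_right h3 h2
            _ = K0 * Theta ω ϖ lam π * Nhat ψ N T s a * ϖ (ω s t) ^ lam := by ring
  -- scale induction
  have Rj : ∀ j : ℕ, ∃ Kj : ℝ, 0 ≤ Kj ∧ ∀ (π : TimePartition T) (s t : ℝ),
      0 ≤ s → s ≤ t → t ≤ T → ω s t ≤ e0 * 2 ^ j →
      ∀ a : V, dist (ψ t s a) (iterFlow φ π.points t s a) ≤
        Kj * Theta ω ϖ lam π * Nhat ψ N T s a * ϖ (ω s t) ^ lam := by
    intro j
    induction j with
    | zero =>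
        refine ⟨K0, hK00.le, ?_⟩
        intro π s t hs hst ht hωe a
        have hωe' : ω s t ≤ e0 := by
          rw [pow_zero, mul_one] at hωe; exact hωe
        exact R0 _ π s t hs hst ht hωe' le_rfl a
    | succ j ihj =>
        obtain ⟨Kj, hKj0, hKj⟩ := ihj
        have hGnn : 0 ≤ Gcoef (1 + δT) C' cN rho Kj Stop := by
          simp only [Gcoef]
          have hA0 : (0:ℝ) ≤ 1 + δT := by linarith
          have h1 : (0:ℝ) ≤ 1 + cN * Kj * rho * Stop := by
            have := mul_nonneg (mul_nonneg (mul_nonneg hcN0 hKj0) hρ0) hStop0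
            linarith
          have h2 : 0 ≤ (1 + δT) * Kj * rho + C' * (1 + cN * Kj * rho * Stop) := by
            have := mul_nonneg (mul_nonneg hA0 hKj0) hρ0
            have := mul_nonneg hC'0 h1
            linarith
          have t1 : 0 ≤ (1 + δT) ^ 2 * Kj * rho :=
            mul_nonneg (mul_nonneg (pow_nonneg hA0 2) hKj0) hρ0
          have t2 : 0 ≤ (1 + δT) * C' * (1 + cN * Kj * rho * Stop) :=
            mul_nonneg (mul_nonneg hA0 hC'0) h1
          have t3 : 0 ≤ Kj * rho * (1 + cN * (1 + δT) * Stop *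
              ((1 + δT) * Kj * rho + C' * (1 + cN * Kj * rho * Stop))) := by
            refine mul_nonneg (mul_nonneg hKj0 hρ0) ?_
            have := mul_nonneg (mul_nonneg (mul_nonneg hcN0 hA0) hStop0) h2
            linarith
          linarith
        refine ⟨Kj + Gcoef (1 + δT) C' cN rho Kj Stop + C', by linarith, ?_⟩
        intro π s t hs hst ht hωe a
        have h2 : 0 ≤ Theta ω ϖ lam π * Nhat ψ N T s a * ϖ (ω s t) ^ lam :=
          mul_nonneg (mul_nonneg (hTh0 π) (hNhat0 s a))
            (Real.rpow_nonneg (hϖ.nonneg _ (hωno s t hs hst ht)) lam)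
        by_cases hfil : (π.points.filter fun u => decide (s < u) && decide (u < t)) = []
        · have h1 := hbase π s t a hs hst ht hfil
          calc dist (ψ t s a) (iterFlow φ π.points t s a) ≤
              C' * Theta ω ϖ lam π * Nhat ψ N T s a * ϖ (ω s t) ^ lam := h1
            _ = C' * (Theta ω ϖ lam π * Nhat ψ N T s a * ϖ (ω s t) ^ lam) := by ring
            _ ≤ (Kj + Gcoef (1 + δT) C' cN rho Kj Stop + C') *
                (Theta ω ϖ lam π * Nhat ψ N T s a * ϖ (ω s t) ^ lam) := by
                refine mul_le_mul_of_nonneg_right ?_ h2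
                linarith
            _ = (Kj + Gcoef (1 + δT) C' cN rho Kj Stop + C') * Theta ω ϖ lam π *
                Nhat ψ N T s a * ϖ (ω s t) ^ lam := by ring
        · by_cases hωsm : ω s t ≤ e0 * 2 ^ j
          · have h1 := hKj π s t hs hst ht hωsm a
            calc dist (ψ t s a) (iterFlow φ π.points t s a) ≤
                Kj * Theta ω ϖ lam π * Nhat ψ N T s a * ϖ (ω s t) ^ lam := h1
              _ = Kj * (Theta ω ϖ lam π * Nhat ψ N T s a * ϖ (ω s t) ^ lam) := by ring
              _ ≤ (Kj + Gcoef (1 + δT) C' cN rho Kj Stop + C') *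
                  (Theta ω ϖ lam π * Nhat ψ N T s a * ϖ (ω s t) ^ lam) := by
                  refine mul_le_mul_of_nonneg_right ?_ h2
                  linarith
              _ = (Kj + Gcoef (1 + δT) C' cN rho Kj Stop + C') * Theta ω ϖ lam π *
                  Nhat ψ N T s a * ϖ (ω s t) ^ lam := by ring
          · obtain ⟨u, hu⟩ := List.exists_mem_of_ne_nil _ hfil
            have hu' := List.mem_filter.mp hu
            simp only [Bool.and_eq_true, decide_eq_true_eq] at hu'
            have hst' : s < t := lt_trans hu'.2.1 hu'.2.2
            have hHp : ∀ s' t' : ℝ, 0 ≤ s' → s' ≤ t' → t' ≤ T → s ≤ s' → t' ≤ t →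
                2 * ω s' t' ≤ ω s t →
                (π.points.filter fun u => decide (s' < u) && decide (u < t')).length <
                  (π.points.filter fun u => decide (s < u) && decide (u < t)).length →
                ∀ b : V, dist (ψ t' s' b) (iterFlow φ π.points t' s' b) ≤
                  Kj * Theta ω ϖ lam π * Nhat ψ N T s' b * ϖ (ω s' t') ^ lam := by
              intro s' t' hs' hst'' ht' hss' htt' h2ω hlen' b
              have hωe' : ω s' t' ≤ e0 * 2 ^ j := by
                have : e0 * 2 ^ (j + 1) = e0 * 2 ^ j * 2 := by rw [pow_succ]; ring
                rw [this] at hωe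
                linarith
              exact hKj π s' t' hs' hst'' ht' hωe' b
            have hSb : Theta ω ϖ lam π * ϖ (ω s t) ^ lam ≤ Stop := by
              rw [hStop']; exact hSigtop π s t hs hst ht
            have h1 := hstep π Kj Stop hKj0 hStop0 s t hs hst' ht hfil hSb hHp a
            calc dist (ψ t s a) (iterFlow φ π.points t s a) ≤
                Gcoef (1 + δT) C' cN rho Kj Stop * Theta ω ϖ lam π * Nhat ψ N T s a *
                  ϖ (ω s t) ^ lam := h1
              _ = Gcoef (1 + δT) C' cN rho Kj Stop *
                  (Theta ω ϖ lam π * Nhat ψ N T s a * ϖ (ω s t) ^ lam) := by ring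
              _ ≤ (Kj + Gcoef (1 + δT) C' cN rho Kj Stop + C') *
                  (Theta ω ϖ lam π * Nhat ψ N T s a * ϖ (ω s t) ^ lam) := by
                  refine mul_le_mul_of_nonneg_right ?_ h2
                  linarith
              _ = (Kj + Gcoef (1 + δT) C' cN rho Kj Stop + C') * Theta ω ϖ lam π *
                  Nhat ψ N T s a * ϖ (ω s t) ^ lam := by ring
  -- choose the final scale
  obtain ⟨J, hJ⟩ := pow_unbounded_of_one_lt (ω 0 T / e0) one_lt_two
  have hJω : ∀ s t : ℝ, 0 ≤ s → s ≤ t → t ≤ T → ω s t ≤ e0 * 2 ^ J := by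
    intro s t hs hst ht
    have h1 : ω 0 T < e0 * 2 ^ J := by
      rw [div_lt_iff₀ he00] at hJ
      calc ω 0 T < 2 ^ J * e0 := hJ
        _ = e0 * 2 ^ J := by ring
    exact le_trans (hwbar s t hs hst ht) h1.le
  obtain ⟨KJ, hKJ0, hKJ⟩ := Rj J
  -- the final constant
  have hM1nn : (0:ℝ) ≤ 1 + cN * M0 := by
    have := mul_nonneg hcN0 hM00
    linarith
  refine ⟨KJ * (1 + cN * M0), mul_nonneg hKJ0 hM1nn, ?_, ?_⟩
  · -- main estimate
    intro π s t hs hst ht a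
    have h1 := hKJ π s t hs hst ht (hJω s t hs hst ht) a
    have hNa0 : 0 ≤ N a := le_trans zero_le_one (hN1 a)
    have hM1 := hNhatM1 s a hs (le_trans hst ht)
    have hpw0 : 0 ≤ ϖ (ω s t) ^ lam :=
      Real.rpow_nonneg (hϖ.nonneg _ (hωno s t hs hst ht)) _
    calc dist (ψ t s a) (iterFlow φ π.points t s a) ≤
        KJ * Theta ω ϖ lam π * Nhat ψ N T s a * ϖ (ω s t) ^ lam := h1
      _ ≤ KJ * Theta ω ϖ lam π * ((1 + cN * M0) * N a) * ϖ (ω s t) ^ lam := by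
          refine mul_le_mul_of_nonneg_right ?_ hpw0
          exact mul_le_mul_of_nonneg_left hM1 (mul_nonneg hKJ0 (hTh0 π))
      _ = KJ * (1 + cN * M0) * Theta ω ϖ lam π * N a * ϖ (ω s t) ^ lam := by ring
  · -- convergence as the mesh goes to 0
    intro ε hε
    obtain ⟨Kf, hKf'⟩ : ∃ y : ℝ, y = KJ * (1 + cN * M0) := ⟨_, rfl⟩
    have hKf0 : 0 ≤ Kf := by rw [hKf']; exact mul_nonneg hKJ0 hM1nn
    obtain ⟨q, hq'⟩ : ∃ y : ℝ, y = Kf * pwbar ^ lam + 1 := ⟨_, rfl⟩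
    have hq0' : 0 < q := by
      rw [hq']
      have := mul_nonneg hKf0 (Real.rpow_nonneg hpwbar0 lam)
      linarith
    obtain ⟨τ2, hτ2'⟩ : ∃ y : ℝ, y = ε / q := ⟨_, rfl⟩
    have hτ20 : 0 < τ2 := by rw [hτ2']; exact div_pos hε hq0'
    obtain ⟨τ3, hτ3'⟩ : ∃ y : ℝ, y = τ2 ^ (1 / (1 - lam)) := ⟨_, rfl⟩
    have hτ30 : 0 < τ3 := by rw [hτ3']; exact Real.rpow_pos_of_pos hτ20 _
    obtain ⟨e2, he20, he2⟩ := hcont0 τ3 hτ30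
    obtain ⟨h, hh0, hh⟩ := hω.small e2 he20
    refine ⟨h, hh0, ?_⟩
    intro π hmesh s t hs hst ht a
    -- Theta is small
    have hΘsmall : Theta ω ϖ lam π ≤ τ2 := by
      apply Stmt11Aux.foldr_max_le hτ20.le
      intro x hx
      obtain ⟨⟨p, r⟩, hpr, rfl⟩ := List.mem_map.mp hx
      obtain ⟨hpP, hrP, hpr'⟩ := Stmt11Aux.mem_zip_tail π.sorted hpr
      obtain ⟨hp0, hpT⟩ := π.mem_Icc p hpP
      obtain ⟨hr0, hrT⟩ := π.mem_Icc r hrP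
      have hgapmesh : r - p ≤ π.mesh := by
        have : r - p ∈ ((π.points.zip π.points.tail).map fun p => p.2 - p.1) :=
          List.mem_map_of_mem hpr
        exact Stmt11Aux.le_foldr_max this
      have hω_small : ω p r < e2 := hh hp0 hpr'.le hrT (le_trans hgapmesh hmesh)
      have h1 : ϖ (ω p r) ≤ τ3 :=
        le_trans (hϖmono _ _ (hωno p r hp0 hpr'.le hrT) hω_small.le) he2.le
      have h2 : ϖ (ω p r) ^ (1 - lam) ≤ τ3 ^ (1 - lam) :=
        Real.rpow_le_rpow (hϖ.nonneg _ (hωno p r hp0 hpr'.le hrT)) h1 h1lam.le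
      have h3 : τ3 ^ (1 - lam) = τ2 := by
        rw [hτ3', ← Real.rpow_mul hτ20.le, one_div_mul_cancel (ne_of_gt h1lam),
          Real.rpow_one]
      rw [h3] at h2
      exact h2
    have h1 := hKJ π s t hs hst ht (hJω s t hs hst ht) a
    have hNa0 : 0 ≤ N a := le_trans zero_le_one (hN1 a)
    have hM1 := hNhatM1 s a hs (le_trans hst ht)
    have hpw0 : 0 ≤ ϖ (ω s t) ^ lam :=
      Real.rpow_nonneg (hϖ.nonneg _ (hωno s t hs hst ht)) _
    have hpwle : ϖ (ω s t) ^ lam ≤ pwbar ^ lam :=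
      Real.rpow_le_rpow (hϖ.nonneg _ (hωno s t hs hst ht)) (hϖle s t hs hst ht) hlam0.le
    have h2 : dist (ψ t s a) (iterFlow φ π.points t s a) ≤
        Kf * Theta ω ϖ lam π * N a * ϖ (ω s t) ^ lam := by
      calc dist (ψ t s a) (iterFlow φ π.points t s a) ≤
          KJ * Theta ω ϖ lam π * Nhat ψ N T s a * ϖ (ω s t) ^ lam := h1
        _ ≤ KJ * Theta ω ϖ lam π * ((1 + cN * M0) * N a) * ϖ (ω s t) ^ lam := by
            refine mul_le_mul_of_nonneg_right ?_ hpw0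
            exact mul_le_mul_of_nonneg_left hM1 (mul_nonneg hKJ0 (hTh0 π))
        _ = Kf * Theta ω ϖ lam π * N a * ϖ (ω s t) ^ lam := by rw [hKf']; ring
    have h3 : Kf * Theta ω ϖ lam π * N a * ϖ (ω s t) ^ lam ≤
        Kf * τ2 * pwbar ^ lam * N a := by
      have e1 : Kf * Theta ω ϖ lam π * N a * ϖ (ω s t) ^ lam =
          Kf * N a * (Theta ω ϖ lam π * ϖ (ω s t) ^ lam) := by ring
      have e2' : Kf * τ2 * pwbar ^ lam * N a = Kf * N a * (τ2 * pwbar ^ lam) := by ring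
      rw [e1, e2']
      refine mul_le_mul_of_nonneg_left ?_ (mul_nonneg hKf0 hNa0)
      have h4 : Theta ω ϖ lam π * ϖ (ω s t) ^ lam ≤ τ2 * pwbar ^ lam := by
        exact mul_le_mul hΘsmall hpwle hpw0 hτ20.le
      exact h4
    have h5 : Kf * τ2 * pwbar ^ lam ≤ ε := by
      have h6 : Kf * pwbar ^ lam ≤ q := by rw [hq']; linarith
      have h7 : Kf * τ2 * pwbar ^ lam = (Kf * pwbar ^ lam) * τ2 := by ring
      have h8 : (Kf * pwbar ^ lam) * τ2 ≤ q * τ2 :=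
        mul_le_mul_of_nonneg_right h6 hτ20.le
      have h9 : q * τ2 = ε := by
        rw [hτ2']; field_simp
      rw [h7]; linarith
    have h10 : Kf * τ2 * pwbar ^ lam * N a ≤ ε * N a :=
      mul_le_mul_of_nonneg_right h5 hNa0
    linarith



end
end

section
/- (Multiplicative sewing lemma.) Let (V,d) be a complete metric space carrying a monoid structure with unit 1 and let N:V→[1,∞) be Lipschitz with d(ac,bc) ≤ N(c)·d(a,b) and d(ca,cb) ≤ N(c)·d(a,b) for all a,b,c ∈ V. Let (α_{s,t})_{(s,t)∈𝕋₊²} ⊂ V with (s,t) ↦ α_{s,t} continuous, α_{t,t} = 1, d(α_{s,t},1) ≤ δ_T, N(α_{s,t}) ≤ 1+δ_T, and almost multiplicative: d(α_{r,s}·α_{s,t}, α_{r,t}) ≤ ϖ(ω_{r,t}) for all (r,s,t) ∈ 𝕋₊³. Then, for T small enough, there exists a multiplicative functional (γ_{s,t})_{(s,t)∈𝕋₊²} (γ_{t,t}=1 and γ_{r,s}·γ_{s,t} = γ_{r,t}) with sup_{s<t} d(γ_{s,t}, α_{s,t})/ϖ(ω_{s,t}) < ∞, and it is unique: any multiplicative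 functional β with d(β_{s,t}, α_{s,t}) ≤ C·ϖ(ω_{s,t}) for some constant C and all (s,t) ∈ 𝕋₊² satisfies β = γ. -/
open Set

noncomputable section

set_option maxHeartbeats 1600000

open Filter

namespace MSew

variable {V : Type*} [MetricSpace V] [Monoid V]

/-- Ordered product `f 0 * f 1 * ... * f (n-1)` in a (possibly noncommutative) monoid. -/
def Q (f : ℕ → V) (n : ℕ) : V := ((List.range n).map f).prod

lemma Q_zero (f : ℕ → V) : Q f 0 = 1 := rfl

lemma Q_succ (f : ℕ → V) (n : ℕ) : Q f (n + 1) = Q f n * f n := by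
  simp [Q, List.range_succ]

lemma Q_add (f : ℕ → V) (a b : ℕ) :
    Q f (a + b) = Q f a * Q (fun i => f (a + i)) b := by
  induction b with
  | zero => simp [Q]
  | succ b ih => rw [← Nat.add_assoc, Q_succ, ih, Q_succ, mul_assoc]

lemma Q_congr {f g : ℕ → V} {n : ℕ} (h : ∀ i, i < n → f i = g i) :
    Q f n = Q g n := by
  induction n with
  | zero => rfl
  | succ n ih =>
      rw [Q_succ, Q_succ, ih (fun i hi => h i (Nat.lt_succ_of_lt hi)), h n (Nat.lt_succ_self n)]

lemma Q_one {f : ℕ → V} {n : ℕ} (h : ∀ i, i < n → f i = 1) : Q f n = 1 := by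
  induction n with
  | zero => rfl
  | succ n ih =>
      rw [Q_succ, h n (Nat.lt_succ_self n), mul_one, ih (fun i hi => h i (Nat.lt_succ_of_lt hi))]

/-- Bundle of hypotheses for the multiplicative sewing construction. -/
structure Setting (V : Type*) [MetricSpace V] [Monoid V] where
  (T' : ℝ) (ω : ℝ → ℝ → ℝ) (ϖ : ℝ → ℝ) (N : V → ℝ) (CN : ℝ)
  (α : ℝ → ℝ → V) (B : ℝ) (CS : ℝ) (σ : ℕ → ℝ)
  (hT' : 0 < T')
  (hωnn : ∀ s t, 0 ≤ s → s ≤ t → t ≤ T' → 0 ≤ ω s t)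
  (hωsup : ∀ r s t, 0 ≤ r → r ≤ s → s ≤ t → t ≤ T' → ω r s + ω s t ≤ ω r t)
  (hϖnn : ∀ x, 0 ≤ x → 0 ≤ ϖ x)
  (hN1 : ∀ a : V, 1 ≤ N a)
  (hCN : 0 ≤ CN)
  (hNd : ∀ a : V, N a ≤ N 1 + CN * dist a 1)
  (hNr : ∀ a b c : V, dist (a * c) (b * c) ≤ N c * dist a b)
  (hNl : ∀ a b c : V, dist (c * a) (c * b) ≤ N c * dist a b)
  (hαid : ∀ t, 0 ≤ t → t ≤ T' → α t t = 1)
  (hα1 : ∀ s t, 0 ≤ s → s ≤ t → t ≤ T' → dist (α s t) 1 ≤ 1)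
  (hαalm : ∀ r s t, 0 ≤ r → r ≤ s → s ≤ t → t ≤ T' →
    dist (α r s * α s t) (α r t) ≤ ϖ (ω r t))
  (hσ0 : σ 0 = 0)
  (hσnn : ∀ k, 0 ≤ σ k)
  (hσsum : ∀ n, (∑ k ∈ Finset.range n, σ k) ≤ CS)
  (hB : N 1 + CN * 2 ≤ B)
  (hB1 : 1 ≤ B)
  (hsmallMI : ∀ s t, 0 ≤ s → s ≤ t → t ≤ T' → B ^ 2 * CS * ϖ (ω s t) ≤ 1)
  (hstep : ∀ n : ℕ, 2 ≤ n → ∀ x W : ℝ, 0 ≤ W → 0 ≤ x → x ≤ W / ((n / 2 : ℕ) : ℝ) →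
    ϖ x ≤ σ (n - 1) * ϖ W)

namespace Setting

variable (S : Setting V)

/-- Product of `α` along a partition. -/
def P (u : ℕ → ℝ) (n : ℕ) : V := Q (fun i => S.α (u i) (u (i + 1))) n

lemma P_add (u : ℕ → ℝ) (a b : ℕ) :
    S.P u (a + b) = S.P u a * S.P (fun l => u (a + l)) b := Q_add _ a b

lemma P_one (u : ℕ → ℝ) : S.P u 1 = S.α (u 0) (u 1) := by
  simp [P, Q, List.range_succ]

lemma P_two (u : ℕ → ℝ) : S.P u 2 = S.α (u 0) (u 1) * S.α (u 1) (u 2) := by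
  simp [P, Q, List.range_succ]

lemma P_congr {u v : ℕ → ℝ} {n : ℕ} (h : ∀ l, l ≤ n → u l = v l) :
    S.P u n = S.P v n :=
  Q_congr fun i hi => by rw [h i (by omega), h (i + 1) (by omega)]

lemma hN0 (a : V) : 0 ≤ S.N a := le_trans zero_le_one (S.hN1 a)

lemma threeN (x : V) (a b y : V) :
    dist (x * (a * y)) (x * (b * y)) ≤ S.N x * (S.N y * dist a b) := by
  calc dist (x * (a * y)) (x * (b * y)) ≤ S.N x * dist (a * y) (b * y) := S.hNl _ _ x
    _ ≤ S.N x * (S.N y * dist a b) :=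
        mul_le_mul_of_nonneg_left (S.hNr a b y) (S.hN0 x)

lemma ω_right {a b c : ℝ} (ha : 0 ≤ a) (hab : a ≤ b) (hbc : b ≤ c) (hc : c ≤ S.T') :
    S.ω a b ≤ S.ω a c := by
  have h1 := S.hωsup a b c ha hab hbc hc
  have h2 := S.hωnn b c (le_trans ha hab) hbc hc
  linarith

lemma ω_le {s t a b : ℝ} (hs : 0 ≤ s) (hsa : s ≤ a) (hab : a ≤ b) (hbt : b ≤ t)
    (ht : t ≤ S.T') : S.ω a b ≤ S.ω s t := by
  have h1 := S.hωsup s a b hs hsa hab (le_trans hbt ht)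
  have h2 := S.hωsup s b t hs (le_trans hsa hab) hbt ht
  have h3 := S.hωnn s a hs hsa (by linarith)
  have h4 := S.hωnn b t (by linarith) hbt ht
  linarith

lemma chainSum (v : ℕ → ℝ) (hv : Monotone v) (h0 : ∀ i, 0 ≤ v i)
    (hT : ∀ i, v i ≤ S.T') :
    ∀ m, (∑ j ∈ Finset.range m, S.ω (v j) (v (j + 1))) ≤ S.ω (v 0) (v m) := by
  intro m
  induction m with
  | zero => simpa using S.hωnn (v 0) (v 0) (h0 0) le_rfl (hT 0)
  | succ m ih =>
      rw [Finset.sum_range_succ]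
      have h := S.hωsup (v 0) (v m) (v (m + 1)) (h0 0) (hv (Nat.zero_le m))
        (hv (Nat.le_succ m)) (hT (m + 1))
      linarith

lemma dist_le_one {x : V} {a b : ℝ} {p : ℕ}
    (h : dist x (S.α a b) ≤ S.B ^ 2 * (∑ k ∈ Finset.range p, S.σ k) * S.ϖ (S.ω a b))
    (ha : 0 ≤ a) (hab : a ≤ b) (hb : b ≤ S.T') : dist x (S.α a b) ≤ 1 := by
  refine le_trans h (le_trans ?_ (S.hsmallMI a b ha hab hb))
  have h1 : 0 ≤ S.ϖ (S.ω a b) := S.hϖnn _ (S.hωnn a b ha hab hb)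
  exact mul_le_mul_of_nonneg_right
    (mul_le_mul_of_nonneg_left (S.hσsum p) (by positivity)) h1

lemma NofDist {x : V} {a b : ℝ} (h : dist x (S.α a b) ≤ 1)
    (ha : 0 ≤ a) (hab : a ≤ b) (hb : b ≤ S.T') : S.N x ≤ S.B := by
  have h2 := S.hα1 a b ha hab hb
  have h3 := dist_triangle x (S.α a b) 1
  calc S.N x ≤ S.N 1 + S.CN * dist x 1 := S.hNd x
    _ ≤ S.N 1 + S.CN * 2 := by nlinarith [S.hCN]
    _ ≤ S.B := S.hB

/-- The maximal inequality: distance of a partition product from `α` of its endpoints. -/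
theorem MI : ∀ n (u : ℕ → ℝ), Monotone u → (∀ i, 0 ≤ u i) → (∀ i, u i ≤ S.T') →
    dist (S.P u n) (S.α (u 0) (u n)) ≤
      S.B ^ 2 * (∑ k ∈ Finset.range n, S.σ k) * S.ϖ (S.ω (u 0) (u n)) := by
  intro n
  induction n using Nat.strong_induction_on with
  | _ n IH =>
    intro u hu h0 hT
    by_cases hn0 : n = 0
    · subst hn0
      simp [Setting.P, Q_zero, S.hαid (u 0) (h0 0) (hT 0)]
    by_cases hn1 : n = 1
    · subst hn1
      rw [S.P_one, dist_self, Finset.sum_range_one, S.hσ0]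
      simp
    have hn2 : 2 ≤ n := by omega
    have hWnn : 0 ≤ S.ω (u 0) (u n) := S.hωnn _ _ (h0 0) (hu (Nat.zero_le n)) (hT n)
    have hϖWnn : 0 ≤ S.ϖ (S.ω (u 0) (u n)) := S.hϖnn _ hWnn
    have hM1 : 1 ≤ n / 2 := by omega
    have h2M : 2 * (n / 2) ≤ n := by omega
    -- the chain bound over even points
    have hchain : (∑ j ∈ Finset.range (n / 2), S.ω (u (2 * j)) (u (2 * j + 1 + 1)))
        ≤ S.ω (u 0) (u n) := by
      have h1 := S.chainSum (fun j => u (2 * j)) (fun a b hab => hu (by omega))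
        (fun i => h0 _) (fun i => hT _) (n / 2)
      refine le_trans h1 ?_
      exact S.ω_right (h0 0) (hu (Nat.zero_le _)) (hu h2M) (hT n)
    obtain ⟨j, hjM, hjle⟩ : ∃ j, j < n / 2 ∧
        S.ω (u (2 * j)) (u (2 * j + 1 + 1)) ≤ S.ω (u 0) (u n) / ((n / 2 : ℕ) : ℝ) := by
      by_contra hcon
      push_neg at hcon
      have hlt : ∀ j ∈ Finset.range (n / 2),
          S.ω (u 0) (u n) / ((n / 2 : ℕ) : ℝ) < S.ω (u (2 * j)) (u (2 * j + 1 + 1)) :=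
        fun j hj => hcon j (Finset.mem_range.1 hj)
      have hsum := Finset.sum_lt_sum_of_nonempty (Finset.nonempty_range_iff.2 (by omega)) hlt
      rw [Finset.sum_const, Finset.card_range, nsmul_eq_mul, mul_comm,
        div_mul_cancel₀ _ (by exact_mod_cast (by omega : n / 2 ≠ 0) : ((n / 2 : ℕ) : ℝ) ≠ 0)] at hsum
      linarith
    -- remove the interior point `2*j+1`
    set u' : ℕ → ℝ := fun l => u (if l < 2 * j + 1 then l else l + 1) with hu'def
    have hu' : Monotone u' := by
      intro a b hab
      simp only [hu'def]
      exact hu (by split_ifs <;> omega)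
    have h0' : ∀ l, 0 ≤ u' l := fun l => h0 _
    have hT'' : ∀ l, u' l ≤ S.T' := fun l => hT _
    have hPu : S.P u n =
        S.P u (2 * j) * ((S.α (u (2 * j)) (u (2 * j + 1)) * S.α (u (2 * j + 1)) (u (2 * j + 2))) *
          S.P (fun l => u (2 * j + 2 + l)) (n - (2 * j + 2))) := by
      have hcount : n = 2 * j + (2 + (n - (2 * j + 2))) := by omega
      calc S.P u n = S.P u (2 * j + (2 + (n - (2 * j + 2)))) := by rw [← hcount]
        _ = S.P u (2 * j) * S.P (fun l => u (2 * j + l)) (2 + (n - (2 * j + 2))) := S.P_add u _ _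
        _ = S.P u (2 * j) * (S.P (fun l => u (2 * j + l)) 2 *
              S.P (fun l => u (2 * j + (2 + l))) (n - (2 * j + 2))) := by rw [S.P_add]
        _ = _ := by
            rw [S.P_two]
            have ef : (fun l => u (2 * j + (2 + l))) = fun l => u (2 * j + 2 + l) :=
              funext fun l => congrArg u (by omega)
            rw [ef]
            norm_num
    have hPu' : S.P u' (n - 1) =
        S.P u (2 * j) * (S.α (u (2 * j)) (u (2 * j + 2)) *
          S.P (fun l => u (2 * j + 2 + l)) (n - (2 * j + 2))) := by
      have hcount : n - 1 = 2 * j + (1 + (n - (2 * j + 2))) := by omega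
      calc S.P u' (n - 1) = S.P u' (2 * j + (1 + (n - (2 * j + 2)))) := by rw [← hcount]
        _ = S.P u' (2 * j) * S.P (fun l => u' (2 * j + l)) (1 + (n - (2 * j + 2))) := S.P_add u' _ _
        _ = S.P u' (2 * j) * (S.P (fun l => u' (2 * j + l)) 1 *
              S.P (fun l => u' (2 * j + (1 + l))) (n - (2 * j + 2))) := by rw [S.P_add]
        _ = _ := by
            rw [S.P_one]
            have e1 : S.P u' (2 * j) = S.P u (2 * j) := by
              refine S.P_congr fun l hl => ?_
              simp only [hu'def]
              rw [if_pos (by omega)]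
            have e2 : u' (2 * j + 0) = u (2 * j) := by
              simp only [hu'def]
              rw [if_pos (by omega)]
              norm_num
            have e3 : u' (2 * j + 1) = u (2 * j + 2) := by
              simp only [hu'def]
              rw [if_neg (by omega)]
            have e4 : (fun l => u' (2 * j + (1 + l))) = fun l => u (2 * j + 2 + l) := by
              funext l
              simp only [hu'def]
              rw [if_neg (by omega)]
              exact congrArg u (by omega)
            rw [e1, e2, e3, e4]
    -- helper bounds
    have hXd : dist (S.P u (2 * j)) (S.α (u 0) (u (2 * j))) ≤ 1 := by
      have hIH := IH (2 * j) (by omega) u hu h0 hT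
      exact S.dist_le_one hIH (h0 0) (hu (Nat.zero_le _)) (hT _)
    have hNX : S.N (S.P u (2 * j)) ≤ S.B :=
      S.NofDist hXd (h0 0) (hu (Nat.zero_le _)) (hT _)
    have hNY : S.N (S.P (fun l => u (2 * j + 2 + l)) (n - (2 * j + 2))) ≤ S.B := by
      have hIH := IH (n - (2 * j + 2)) (by omega) (fun l => u (2 * j + 2 + l))
        (fun a b hab => hu (by omega)) (fun l => h0 _) (fun l => hT _)
      exact S.NofDist (S.dist_le_one hIH (h0 _) (hu (by omega)) (hT _))
        (h0 _) (hu (by omega)) (hT _)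
    have hmid : dist (S.α (u (2 * j)) (u (2 * j + 1)) * S.α (u (2 * j + 1)) (u (2 * j + 2)))
        (S.α (u (2 * j)) (u (2 * j + 2))) ≤ S.σ (n - 1) * S.ϖ (S.ω (u 0) (u n)) := by
      have h1 := S.hαalm (u (2 * j)) (u (2 * j + 1)) (u (2 * j + 2))
        (h0 _) (hu (by omega)) (hu (by omega)) (hT _)
      have h2 := S.hstep n hn2 (S.ω (u (2 * j)) (u (2 * j + 2))) (S.ω (u 0) (u n)) hWnn
        (S.hωnn _ _ (h0 _) (hu (by omega)) (hT _)) hjle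
      exact le_trans h1 h2
    have hσϖnn : 0 ≤ S.σ (n - 1) * S.ϖ (S.ω (u 0) (u n)) :=
      mul_nonneg (S.hσnn _) hϖWnn
    have hB0 : (0:ℝ) ≤ S.B := by linarith [S.hB1]
    have hd1 : dist (S.P u n) (S.P u' (n - 1)) ≤
        S.B * (S.B * (S.σ (n - 1) * S.ϖ (S.ω (u 0) (u n)))) := by
      rw [hPu, hPu']
      refine le_trans (S.threeN _ _ _ _) ?_
      have h5 : S.N (S.P (fun l => u (2 * j + 2 + l)) (n - (2 * j + 2))) *
          dist (S.α (u (2 * j)) (u (2 * j + 1)) * S.α (u (2 * j + 1)) (u (2 * j + 2)))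
            (S.α (u (2 * j)) (u (2 * j + 2))) ≤
          S.B * (S.σ (n - 1) * S.ϖ (S.ω (u 0) (u n))) :=
        mul_le_mul hNY hmid dist_nonneg hB0
      exact mul_le_mul hNX h5 (mul_nonneg (S.hN0 _) dist_nonneg) hB0
    have hd2 : dist (S.P u' (n - 1)) (S.α (u 0) (u n)) ≤
        S.B ^ 2 * (∑ k ∈ Finset.range (n - 1), S.σ k) * S.ϖ (S.ω (u 0) (u n)) := by
      have hIH := IH (n - 1) (by omega) u' hu' h0' hT''
      have e0 : u' 0 = u 0 := by
        simp only [hu'def]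
        rw [if_pos (by omega)]
      have eN : u' (n - 1) = u n := by
        simp only [hu'def]
        rw [if_neg (by omega)]
        exact congrArg u (by omega)
      rwa [e0, eN] at hIH
    have hsplit : (∑ k ∈ Finset.range n, S.σ k)
        = (∑ k ∈ Finset.range (n - 1), S.σ k) + S.σ (n - 1) := by
      conv_lhs => rw [show n = n - 1 + 1 from by omega, Finset.sum_range_succ]
    calc dist (S.P u n) (S.α (u 0) (u n))
        ≤ dist (S.P u n) (S.P u' (n - 1)) + dist (S.P u' (n - 1)) (S.α (u 0) (u n)) :=
          dist_triangle _ _ _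
      _ ≤ S.B * (S.B * (S.σ (n - 1) * S.ϖ (S.ω (u 0) (u n)))) +
            S.B ^ 2 * (∑ k ∈ Finset.range (n - 1), S.σ k) * S.ϖ (S.ω (u 0) (u n)) :=
          add_le_add hd1 hd2
      _ = S.B ^ 2 * (∑ k ∈ Finset.range n, S.σ k) * S.ϖ (S.ω (u 0) (u n)) := by
          rw [hsplit]; ring

lemma NP (u : ℕ → ℝ) (hu : Monotone u) (h0 : ∀ i, 0 ≤ u i) (hT : ∀ i, u i ≤ S.T')
    (n : ℕ) : S.N (S.P u n) ≤ S.B :=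
  S.NofDist (S.dist_le_one (S.MI n u hu h0 hT) (h0 0) (hu (Nat.zero_le _)) (hT _))
    (h0 0) (hu (Nat.zero_le _)) (hT _)

lemma telescope (f g : ℕ → V) (M : ℕ) (Bg Bf : ℝ) (ε : ℕ → ℝ)
    (hBg : 0 ≤ Bg) (hBf : 0 ≤ Bf)
    (hG : ∀ i, i < M → S.N (Q g i) ≤ Bg)
    (hF : ∀ i, i < M → S.N (Q (fun j => f (i + 1 + j)) (M - (i + 1))) ≤ Bf)
    (hd : ∀ i, i < M → dist (f i) (g i) ≤ ε i) :
    dist (Q f M) (Q g M) ≤ ∑ i ∈ Finset.range M, Bg * (Bf * ε i) := by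
  set H : ℕ → V := fun i => Q g (min i M) * Q (fun j => f (min i M + j)) (M - min i M) with hH
  have h0 : H 0 = Q f M := by
    simp only [hH, Nat.min_eq_left (Nat.zero_le M), Q_zero, one_mul, Nat.sub_zero, Nat.zero_add]
  have hM : H M = Q g M := by
    simp only [hH, Nat.min_self, Nat.sub_self, Q_zero, mul_one]
  calc dist (Q f M) (Q g M) = dist (H 0) (H M) := by rw [h0, hM]
    _ ≤ ∑ i ∈ Finset.range M, dist (H i) (H (i + 1)) := dist_le_range_sum_dist H M
    _ ≤ ∑ i ∈ Finset.range M, Bg * (Bf * ε i) := by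
        refine Finset.sum_le_sum fun i hi => ?_
        have hiM : i < M := Finset.mem_range.1 hi
        have e1 : min i M = i := Nat.min_eq_left (le_of_lt hiM)
        have e2 : min (i + 1) M = i + 1 := Nat.min_eq_left hiM
        have eH1 : H i = Q g i * (f i * Q (fun j => f (i + 1 + j)) (M - (i + 1))) := by
          simp only [hH, e1]
          congr 1
          rw [show M - i = 1 + (M - (i + 1)) from by omega, Q_add]
          have ef : (fun j => f (i + (1 + j))) = fun j => f (i + 1 + j) :=
            funext fun j => congrArg f (by omega)
          simp only [Q_succ, Q_zero, one_mul, Nat.add_zero, ef]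
        have eH2 : H (i + 1) = Q g i * (g i * Q (fun j => f (i + 1 + j)) (M - (i + 1))) := by
          simp only [hH, e2, Q_succ, mul_assoc]
        rw [eH1, eH2]
        refine le_trans (S.threeN _ _ _ _) ?_
        exact mul_le_mul (hG i hiM)
          (mul_le_mul (hF i hiM) (hd i hiM) dist_nonneg hBf)
          (mul_nonneg (S.hN0 _) dist_nonneg) hBg

lemma P_split (w : ℕ → ℝ) (ψ : ℕ → ℕ) (hψ : Monotone ψ) (hψ0 : ψ 0 = 0) :
    ∀ M, S.P w (ψ M) = Q (fun i => S.P (fun l => w (ψ i + l)) (ψ (i + 1) - ψ i)) M := by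
  intro M
  induction M with
  | zero => rw [hψ0]; rfl
  | succ M ih =>
      rw [Q_succ, ← ih]
      have hle : ψ M ≤ ψ (M + 1) := hψ (Nat.le_succ M)
      have e : ψ (M + 1) = ψ M + (ψ (M + 1) - ψ M) := by omega
      conv_lhs => rw [e, S.P_add]

lemma P_pad (u : ℕ → ℝ) (ψ : ℕ → ℕ) (h0 : ∀ i, 0 ≤ u i) (hT : ∀ i, u i ≤ S.T')
    (hψ0 : ψ 0 = 0) (hst : ∀ j, ψ (j + 1) = ψ j ∨ ψ (j + 1) = ψ j + 1) :
    ∀ m, S.P (fun i => u (ψ i)) m = S.P u (ψ m) := by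
  intro m
  induction m with
  | zero => rw [hψ0]; rfl
  | succ m ih =>
      have hQ : S.P (fun i => u (ψ i)) (m + 1)
          = S.P (fun i => u (ψ i)) m * S.α (u (ψ m)) (u (ψ (m + 1))) := Q_succ _ m
      rcases hst m with h | h
      · rw [hQ, h, S.hαid (u (ψ m)) (h0 _) (hT _), mul_one, ih]
      · rw [hQ, h, ih]
        exact (Q_succ _ (ψ m)).symm

lemma REF (w : ℕ → ℝ) (ψ : ℕ → ℕ) (M : ℕ)
    (hw : Monotone w) (h0 : ∀ i, 0 ≤ w i) (hT : ∀ i, w i ≤ S.T')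
    (hψ : Monotone ψ) (hψ0 : ψ 0 = 0) :
    dist (S.P w (ψ M)) (S.P (fun i => w (ψ i)) M) ≤
      (S.B ^ 4 * S.CS) * ∑ i ∈ Finset.range M, S.ϖ (S.ω (w (ψ i)) (w (ψ (i + 1)))) := by
  have hB0 : (0:ℝ) ≤ S.B := by linarith [S.hB1]
  have hG : ∀ i, i < M →
      S.N (Q (fun i => S.α (w (ψ i)) (w (ψ (i + 1)))) i) ≤ S.B := by
    intro i _
    exact S.NP (fun l => w (ψ l)) (fun a b hab => hw (hψ hab)) (fun l => h0 _)
      (fun l => hT _) i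
  have hF : ∀ i, i < M →
      S.N (Q (fun j => (fun i => S.P (fun l => w (ψ i + l)) (ψ (i + 1) - ψ i)) (i + 1 + j))
        (M - (i + 1))) ≤ S.B := by
    intro i _
    have hψ2 : Monotone (fun j => ψ (i + 1 + j) - ψ (i + 1)) := by
      intro a b hab
      dsimp only
      have := hψ (show i + 1 + a ≤ i + 1 + b by omega)
      omega
    have hsp := S.P_split (fun l => w (ψ (i + 1) + l)) (fun j => ψ (i + 1 + j) - ψ (i + 1))
      hψ2 (by simp) (M - (i + 1))
    have heq : Q (fun jj => S.P (fun l => (fun l => w (ψ (i + 1) + l))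
          ((ψ (i + 1 + jj) - ψ (i + 1)) + l))
          ((ψ (i + 1 + (jj + 1)) - ψ (i + 1)) - (ψ (i + 1 + jj) - ψ (i + 1)))) (M - (i + 1))
        = Q (fun j => S.P (fun l => w (ψ (i + 1 + j) + l)) (ψ (i + 1 + j + 1) - ψ (i + 1 + j)))
          (M - (i + 1)) := by
      refine Q_congr fun jj _ => ?_
      have ha : ψ (i + 1) ≤ ψ (i + 1 + jj) := hψ (by omega)
      have hb : ψ (i + 1 + jj) ≤ ψ (i + 1 + jj + 1) := hψ (by omega)
      have hc : ψ (i + 1) ≤ ψ (i + 1 + (jj + 1)) := hψ (by omega)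
      have ecount : (ψ (i + 1 + (jj + 1)) - ψ (i + 1)) - (ψ (i + 1 + jj) - ψ (i + 1))
          = ψ (i + 1 + jj + 1) - ψ (i + 1 + jj) := by
        have : i + 1 + (jj + 1) = i + 1 + jj + 1 := by omega
        rw [this]
        omega
      have efun : (fun l => w (ψ (i + 1) + ((ψ (i + 1 + jj) - ψ (i + 1)) + l)))
          = fun l => w (ψ (i + 1 + jj) + l) :=
        funext fun l => congrArg w (by omega)
      rw [ecount, efun]
    rw [heq] at hsp
    rw [← hsp]
    exact S.NP _ (fun a b hab => hw (by omega)) (fun l => h0 _) (fun l => hT _) _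
  have hd : ∀ i, i < M →
      dist ((fun i => S.P (fun l => w (ψ i + l)) (ψ (i + 1) - ψ i)) i)
        ((fun i => S.α (w (ψ i)) (w (ψ (i + 1)))) i) ≤
      S.B ^ 2 * S.CS * S.ϖ (S.ω (w (ψ i)) (w (ψ (i + 1)))) := by
    intro i _
    have h1 := S.MI (ψ (i + 1) - ψ i) (fun l => w (ψ i + l))
      (fun a b hab => hw (show ψ i + a ≤ ψ i + b by omega)) (fun l => h0 _) (fun l => hT _)
    have e1 : ψ i + 0 = ψ i := by omega
    have e2 : ψ i + (ψ (i + 1) - ψ i) = ψ (i + 1) := by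
      have := hψ (show i ≤ i + 1 by omega)
      omega
    dsimp only at h1 ⊢
    rw [e1, e2] at h1
    refine le_trans h1 ?_
    have h2 : 0 ≤ S.ϖ (S.ω (w (ψ i)) (w (ψ (i + 1)))) :=
      S.hϖnn _ (S.hωnn _ _ (h0 _) (hw (hψ (Nat.le_succ i))) (hT _))
    exact mul_le_mul_of_nonneg_right
      (mul_le_mul_of_nonneg_left (S.hσsum _) (by positivity)) h2
  have key := S.telescope (fun i => S.P (fun l => w (ψ i + l)) (ψ (i + 1) - ψ i))
    (fun i => S.α (w (ψ i)) (w (ψ (i + 1)))) M S.B S.B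
    (fun i => S.B ^ 2 * S.CS * S.ϖ (S.ω (w (ψ i)) (w (ψ (i + 1))))) hB0 hB0 hG hF hd
  rw [← S.P_split w ψ hψ hψ0 M] at key
  have hQg : Q (fun i => S.α (w (ψ i)) (w (ψ (i + 1)))) M = S.P (fun i => w (ψ i)) M := rfl
  rw [hQg] at key
  refine le_trans key (le_of_eq ?_)
  rw [Finset.mul_sum]
  exact Finset.sum_congr rfl fun i _ => by ring

end Setting

end MSew

/-- the multiplicative sewing lemma.
Let `(V,d)` be a complete metric monoid with `d(ac,bc) ≤ N(c)d(a,b)` and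
`d(ca,cb) ≤ N(c)d(a,b)`. Let `α` be an almost multiplicative functional, continuous in
`(s,t)`, with `α_{t,t} = 1`, `d(α_{s,t},1) ≤ δ_T`, `N(α_{s,t}) ≤ 1+δ_T` and
`d(α_{r,s}α_{s,t}, α_{r,t}) ≤ ϖ(ω_{r,t})`. Then, for `T` small enough, there exists a
multiplicative functional `g` at finite `ϖ`-distance from `α`, unique with this
property. -/
theorem statement17 {V : Type*} [MetricSpace V] [CompleteSpace V] [Monoid V]
    (T : ℝ) (hT : 0 < T)
    (ω : ℝ → ℝ → ℝ) (hω : IsControl T ω)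
    (κ : ℝ) (hκ : κ ∈ Set.Ioo (0:ℝ) 1)
    (ϖ : ℝ → ℝ) (hϖ : IsRemainder κ ϖ)
    (δ : ℝ → ℝ) (hδ0 : ∀ S, 0 ≤ δ S) (hδmono : Monotone δ)
    (hδlim : Filter.Tendsto δ (nhdsWithin 0 (Set.Ioi 0)) (nhds 0))
    (N : V → ℝ) (hN1 : ∀ a, 1 ≤ N a)
    (CN : NNReal) (hNlip : LipschitzWith CN N)
    (hNright : ∀ a b c : V, dist (a * c) (b * c) ≤ N c * dist a b)
    (hNleft : ∀ a b c : V, dist (c * a) (c * b) ≤ N c * dist a b)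
    (α : ℝ → ℝ → V)
    (hαcont : ContinuousOn (fun p : ℝ × ℝ => α p.1 p.2)
      {p : ℝ × ℝ | 0 ≤ p.1 ∧ p.1 ≤ p.2 ∧ p.2 ≤ T})
    (hαid : ∀ ⦃t : ℝ⦄, 0 ≤ t → t ≤ T → α t t = 1)
    (hαclose : ∀ S ∈ Set.Ioc (0:ℝ) T, ∀ ⦃s t : ℝ⦄, 0 ≤ s → s ≤ t → t ≤ S →
      dist (α s t) 1 ≤ δ S ∧ N (α s t) ≤ 1 + δ S)
    (hαalmost : ∀ ⦃r s t : ℝ⦄, 0 ≤ r → r ≤ s → s ≤ t → t ≤ T →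
      dist (α r s * α s t) (α r t) ≤ ϖ (ω r t)) :
    ∃ T' ∈ Set.Ioc (0:ℝ) T, ∃ g : ℝ → ℝ → V,
      (∀ ⦃t : ℝ⦄, 0 ≤ t → t ≤ T' → g t t = 1) ∧
      (∀ ⦃r s t : ℝ⦄, 0 ≤ r → r ≤ s → s ≤ t → t ≤ T' → g r s * g s t = g r t) ∧
      (∃ C : ℝ, ∀ ⦃s t : ℝ⦄, 0 ≤ s → s ≤ t → t ≤ T' →
        dist (g s t) (α s t) ≤ C * ϖ (ω s t)) ∧
      ∀ β : ℝ → ℝ → V,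
        (∀ ⦃t : ℝ⦄, 0 ≤ t → t ≤ T' → β t t = 1) →
        (∀ ⦃r s t : ℝ⦄, 0 ≤ r → r ≤ s → s ≤ t → t ≤ T' → β r s * β s t = β r t) →
        (∃ C : ℝ, ∀ ⦃s t : ℝ⦄, 0 ≤ s → s ≤ t → t ≤ T' →
          dist (β s t) (α s t) ≤ C * ϖ (ω s t)) →
        ∀ ⦃s t : ℝ⦄, 0 ≤ s → s ≤ t → t ≤ T' → β s t = g s t := by
  obtain ⟨hκ0, hκ1⟩ := hκ
  have hκne : κ ≠ 0 := ne_of_gt hκ0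
  set θ : ℝ := Real.logb 2 (2 / κ) with hθdef
  have h2κpos : (0:ℝ) < 2 / κ := by positivity
  have h2κgt : (2:ℝ) < 2 / κ := by
    rw [lt_div_iff₀ hκ0]; nlinarith only [hκ0, hκ1]
  have hθ1 : 1 < θ := by
    have h := Real.logb_lt_logb (b := 2) (by norm_num) (by norm_num : (0:ℝ) < 2) h2κgt
    rwa [Real.logb_self_eq_one (by norm_num)] at h
  have hθ0 : 0 < θ := by linarith only [hθ1]
  have h2θ : (2:ℝ) ^ θ = 2 / κ := Real.rpow_logb (by norm_num) (by norm_num) h2κpos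
  have h2θ' : (2:ℝ) ^ (-θ) = κ / 2 := by
    rw [Real.rpow_neg (by norm_num), h2θ, inv_div]
  -- ϖ 0 = 0
  have hϖc0 : ContinuousWithinAt ϖ (Set.Ici 0) 0 :=
    hϖ.contOn.continuousWithinAt (mem_Ici.2 le_rfl)
  have hϖtend : Filter.Tendsto ϖ (nhdsWithin 0 (Set.Ioi 0)) (nhds (ϖ 0)) :=
    hϖc0.tendsto.mono_left (nhdsWithin_mono _ Ioi_subset_Ici_self)
  have hϖ00 : ϖ 0 = 0 := by
    have hhalf : Filter.Tendsto (fun x : ℝ => x / 2) (nhdsWithin 0 (Set.Ioi 0))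
        (nhdsWithin 0 (Set.Ioi 0)) := by
      rw [tendsto_nhdsWithin_iff]
      constructor
      · have : Filter.Tendsto (fun x : ℝ => x / 2) (nhds 0) (nhds 0) := by
          simpa using (continuous_id.div_const (2:ℝ)).tendsto (0:ℝ)
        exact this.mono_left nhdsWithin_le_nhds
      · filter_upwards [self_mem_nhdsWithin] with x hx
        exact mem_Ioi.2 (div_pos (mem_Ioi.1 hx) (by norm_num))
    have h2 : Filter.Tendsto (fun x : ℝ => 2 * ϖ (x / 2)) (nhdsWithin 0 (Set.Ioi 0))
        (nhds (2 * ϖ 0)) := (hϖtend.comp hhalf).const_mul 2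
    have h3 : Filter.Tendsto (fun x : ℝ => κ * ϖ x) (nhdsWithin 0 (Set.Ioi 0))
        (nhds (κ * ϖ 0)) := hϖtend.const_mul κ
    have h4 : 2 * ϖ 0 ≤ κ * ϖ 0 := by
      refine le_of_tendsto_of_tendsto h2 h3 ?_
      filter_upwards [self_mem_nhdsWithin] with x hx
      exact hϖ.doubling x hx
    have h5 := hϖ.nonneg 0 le_rfl
    nlinarith only [h4, h5, hκ1]
  have hϖmono : MonotoneOn ϖ (Set.Ici 0) := hϖ.strictMonoOn.monotoneOn
  -- iterated halving
  have hiter : ∀ W : ℝ, 0 ≤ W → ∀ p : ℕ, ϖ (W / 2 ^ p) ≤ (κ / 2) ^ p * ϖ W := by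
    intro W hW p
    induction p with
    | zero => simp
    | succ p ih =>
        rcases eq_or_lt_of_le hW with h | h
        · rw [← h]
          simp only [zero_div, hϖ00]
          positivity
        · have hd := hϖ.doubling (W / 2 ^ p) (by positivity)
          have e : W / 2 ^ (p + 1) = W / 2 ^ p / 2 := by
            rw [pow_succ]; ring
          rw [e]
          have hκ2 : (0:ℝ) ≤ κ / 2 := by positivity
          calc ϖ (W / 2 ^ p / 2) ≤ (κ / 2) * ϖ (W / 2 ^ p) := by linarith only [hd]
            _ ≤ (κ / 2) * ((κ / 2) ^ p * ϖ W) := mul_le_mul_of_nonneg_left ih hκ2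
            _ = (κ / 2) ^ (p + 1) * ϖ W := by ring
  -- antitone rpow in the base for negative exponents
  have hanti : ∀ a b : ℝ, 0 < a → a ≤ b → b ^ (-θ) ≤ a ^ (-θ) := by
    intro a b ha hab
    rw [Real.rpow_neg (le_of_lt ha), Real.rpow_neg (le_of_lt (lt_of_lt_of_le ha hab))]
    exact inv_anti₀ (Real.rpow_pos_of_pos ha θ)
      (Real.rpow_le_rpow (le_of_lt ha) hab (le_of_lt hθ0))
  -- npow (κ/2)^p in rpow form
  have hpow2 : ∀ p : ℕ, (κ / 2) ^ p = ((2:ℝ) ^ (p:ℝ)) ^ (-θ) := by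
    intro p
    calc (κ / 2) ^ p = ((2:ℝ) ^ (-θ)) ^ p := by rw [h2θ']
      _ = ((2:ℝ) ^ (-θ)) ^ (p:ℝ) := (Real.rpow_natCast _ p).symm
      _ = (2:ℝ) ^ (-θ * (p:ℝ)) := (Real.rpow_mul (by norm_num) _ _).symm
      _ = (2:ℝ) ^ ((p:ℝ) * -θ) := by ring_nf
      _ = ((2:ℝ) ^ (p:ℝ)) ^ (-θ) := Real.rpow_mul (by norm_num) _ _
  -- key pointwise bound with natural denominators
  have hhalfN : ∀ W : ℝ, 0 ≤ W → ∀ m : ℕ, 1 ≤ m → ∀ x : ℝ, 0 ≤ x → x ≤ W / (m:ℝ) →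
      ϖ x ≤ ((2 / κ) * ((m:ℝ)) ^ (-θ)) * ϖ W := by
    intro W hW m hm x hx hxle
    set p : ℕ := Nat.log 2 m with hpdef
    have hp1 : 2 ^ p ≤ m := Nat.pow_log_le_self 2 (by omega)
    have hp2 : m < 2 ^ (p + 1) := Nat.lt_pow_succ_log_self (by norm_num) m
    have hm0 : (0:ℝ) < (m:ℝ) := by exact_mod_cast Nat.pos_of_ne_zero (by omega)
    have hp1' : (2:ℝ) ^ (p:ℝ) ≤ (m:ℝ) := by
      rw [Real.rpow_natCast]
      exact_mod_cast hp1
    have h2p : (0:ℝ) < (2:ℝ) ^ (p:ℝ) := Real.rpow_pos_of_pos (by norm_num) _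
    have hx2 : x ≤ W / 2 ^ p := by
      have : W / (m:ℝ) ≤ W / 2 ^ p := by
        apply div_le_div_of_nonneg_left hW
        · positivity
        · rw [← Real.rpow_natCast (2:ℝ) p]; exact hp1'
      linarith only [this, hxle]
    have h1 : ϖ x ≤ ϖ (W / 2 ^ p) := by
      apply hϖmono (mem_Ici.2 hx) (mem_Ici.2 (by positivity)) hx2
    have h2 := hiter W hW p
    have h3 : (κ / 2) ^ p ≤ (2 / κ) * ((m:ℝ)) ^ (-θ) := by
      rw [hpow2 p]
      have h4 : ((m:ℝ) / 2) ^ (-θ) = (m:ℝ) ^ (-θ) / (2:ℝ) ^ (-θ) :=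
        Real.div_rpow (le_of_lt hm0) (by norm_num) _
      have h5 : ((2:ℝ) ^ (p:ℝ)) ^ (-θ) ≤ ((m:ℝ) / 2) ^ (-θ) := by
        apply hanti _ _ (by positivity)
        have : (m:ℝ) < (2:ℝ) ^ ((p:ℝ) + 1) := by
          rw [show ((p:ℝ) + 1) = ((p + 1 : ℕ):ℝ) by push_cast; ring, Real.rpow_natCast]
          exact_mod_cast hp2
        have h6 : (2:ℝ) ^ ((p:ℝ) + 1) = 2 ^ (p:ℝ) * 2 := by
          rw [Real.rpow_add (by norm_num), Real.rpow_one]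
        nlinarith only [this, h6, h2p, hm0]
      rw [h4, h2θ'] at h5
      calc ((2:ℝ) ^ (p:ℝ)) ^ (-θ) ≤ (m:ℝ) ^ (-θ) / (κ / 2) := h5
        _ = (2 / κ) * (m:ℝ) ^ (-θ) := by field_simp
    calc ϖ x ≤ (κ / 2) ^ p * ϖ W := le_trans h1 h2
      _ ≤ ((2 / κ) * ((m:ℝ)) ^ (-θ)) * ϖ W :=
          mul_le_mul_of_nonneg_right h3 (hϖ.nonneg W hW)
  -- continuous power bound
  have hpow : ∀ W : ℝ, 0 < W → ∀ x : ℝ, 0 < x → x ≤ W →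
      ϖ x ≤ (2 / κ) * (x / W) ^ θ * ϖ W := by
    intro W hW x hx hxW
    have hWx1 : 1 ≤ W / x := (one_le_div hx).2 hxW
    set p : ℕ := ⌊Real.logb 2 (W / x)⌋₊ with hpdef
    have hlb0 : 0 ≤ Real.logb 2 (W / x) := by
      rw [hθdef] at *
      have := Real.logb_nonneg (by norm_num : (1:ℝ) < 2) hWx1
      exact this
    have hp1 : (2:ℝ) ^ (p:ℝ) ≤ W / x := by
      have h1 : (p:ℝ) ≤ Real.logb 2 (W / x) := Nat.floor_le hlb0
      calc (2:ℝ) ^ (p:ℝ) ≤ (2:ℝ) ^ (Real.logb 2 (W / x)) :=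
            Real.rpow_le_rpow_of_exponent_le (by norm_num) h1
        _ = W / x := Real.rpow_logb (by norm_num) (by norm_num) (by positivity)
    have hp2 : W / x < (2:ℝ) ^ ((p:ℝ) + 1) := by
      have h1 : Real.logb 2 (W / x) < (p:ℝ) + 1 := Nat.lt_floor_add_one _
      calc W / x = (2:ℝ) ^ (Real.logb 2 (W / x)) :=
            (Real.rpow_logb (by norm_num) (by norm_num) (by positivity)).symm
        _ < (2:ℝ) ^ ((p:ℝ) + 1) := Real.rpow_lt_rpow_of_exponent_lt (by norm_num) h1
    have h2p : (0:ℝ) < (2:ℝ) ^ (p:ℝ) := Real.rpow_pos_of_pos (by norm_num) _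
    have hx2 : x ≤ W / 2 ^ p := by
      rw [le_div_iff₀ (by positivity : (0:ℝ) < (2:ℝ) ^ p)]
      rw [← Real.rpow_natCast (2:ℝ) p]
      calc x * (2:ℝ) ^ (p:ℝ) ≤ x * (W / x) :=
            mul_le_mul_of_nonneg_left hp1 (le_of_lt hx)
        _ = W := by field_simp
    have h1 : ϖ x ≤ ϖ (W / 2 ^ p) :=
      hϖmono (mem_Ici.2 (le_of_lt hx)) (mem_Ici.2 (by positivity)) hx2
    have h2 := hiter W (le_of_lt hW) p
    have h3 : (κ / 2) ^ p ≤ (2 / κ) * (x / W) ^ θ := by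
      rw [hpow2 p]
      have hWx2 : (0:ℝ) < W / x / 2 := by positivity
      have h5 : ((2:ℝ) ^ (p:ℝ)) ^ (-θ) ≤ (W / x / 2) ^ (-θ) := by
        apply hanti _ _ hWx2
        have h6 : (2:ℝ) ^ ((p:ℝ) + 1) = 2 ^ (p:ℝ) * 2 := by
          rw [Real.rpow_add (by norm_num), Real.rpow_one]
        nlinarith only [hp2, h6, h2p, hx, hW]
      have h7 : (W / x / 2) ^ (-θ) = (2 * (x / W)) ^ θ := by
        rw [Real.rpow_neg (by positivity), ← Real.inv_rpow (by positivity)]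
        congr 1
        field_simp
      have h8 : (2 * (x / W)) ^ θ = (2:ℝ) ^ θ * (x / W) ^ θ :=
        Real.mul_rpow (by norm_num) (by positivity)
      rw [h7, h8, h2θ] at h5
      exact h5
    calc ϖ x ≤ (κ / 2) ^ p * ϖ W := le_trans h1 h2
      _ ≤ ((2 / κ) * (x / W) ^ θ) * ϖ W :=
          mul_le_mul_of_nonneg_right h3 (hϖ.nonneg W (le_of_lt hW))
      _ = (2 / κ) * (x / W) ^ θ * ϖ W := by ring
  -- summable series
  have hZsum : Summable (fun j : ℕ => ((j:ℝ) + 1) ^ (-θ)) := by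
    have h1 : Summable (fun n : ℕ => ((n : ℝ) ^ θ)⁻¹) := Real.summable_nat_rpow_inv.2 hθ1
    have h2 : Summable (fun n : ℕ => (((n + 1 : ℕ) : ℝ) ^ θ)⁻¹) :=
      (summable_nat_add_iff (f := fun n : ℕ => ((n : ℝ) ^ θ)⁻¹) 1).2 h1
    refine h2.congr fun j => ?_
    rw [Real.rpow_neg (by positivity)]
    push_cast
    ring_nf
  set Z : ℝ := ∑' j : ℕ, ((j:ℝ) + 1) ^ (-θ) with hZdef
  have hZ1 : 1 ≤ Z := by
    have h0 : ((0:ℕ):ℝ) + 1 = 1 := by norm_num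
    have := Summable.le_tsum hZsum 0 (fun i _ => Real.rpow_nonneg (by positivity) _)
    rw [h0, Real.one_rpow] at this
    exact this
  have hZ0 : 0 < Z := by linarith only [hZ1]
  set CS : ℝ := (2 / κ) ^ 2 * Z with hCSdef
  have hCS0 : 0 < CS := by positivity
  set σ : ℕ → ℝ := fun k => if k = 0 then 0 else (2 / κ) * ((((k + 1) / 2 : ℕ)):ℝ) ^ (-θ)
    with hσdef
  have hσnn : ∀ k, 0 ≤ σ k := by
    intro k
    simp only [hσdef]
    split_ifs
    · exact le_refl 0
    · positivity
  have hσb : ∀ k : ℕ, σ (k + 1) ≤ (2 / κ) ^ 2 * ((k:ℝ) + 1) ^ (-θ) := by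
    intro k
    have hq : k + 1 ≤ 2 * ((k + 1 + 1) / 2 : ℕ) := by omega
    have hq0 : 1 ≤ ((k + 1 + 1) / 2 : ℕ) := by omega
    have hqr : ((k:ℝ) + 1) / 2 ≤ (((k + 1 + 1) / 2 : ℕ):ℝ) := by
      have : ((k + 1 : ℕ):ℝ) ≤ 2 * (((k + 1 + 1) / 2 : ℕ):ℝ) := by exact_mod_cast hq
      push_cast at this ⊢
      linarith only [this]
    have h1 : ((((k + 1 + 1) / 2 : ℕ)):ℝ) ^ (-θ) ≤ (((k:ℝ) + 1) / 2) ^ (-θ) :=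
      hanti _ _ (by positivity) hqr
    have h2 : (((k:ℝ) + 1) / 2) ^ (-θ) = ((k:ℝ) + 1) ^ (-θ) / (2:ℝ) ^ (-θ) :=
      Real.div_rpow (by positivity) (by norm_num) _
    simp only [hσdef, if_neg (Nat.succ_ne_zero k)]
    calc (2 / κ) * ((((k + 1 + 1) / 2 : ℕ)):ℝ) ^ (-θ)
        ≤ (2 / κ) * ((((k:ℝ) + 1) / 2) ^ (-θ)) := by
          apply mul_le_mul_of_nonneg_left h1 (le_of_lt h2κpos)
      _ = (2 / κ) ^ 2 * ((k:ℝ) + 1) ^ (-θ) := by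
          rw [h2, h2θ']
          field_simp
  have hσsum : ∀ n : ℕ, (∑ k ∈ Finset.range n, σ k) ≤ CS := by
    intro n
    cases n with
    | zero => simp [hCSdef]; positivity
    | succ m =>
        rw [Finset.sum_range_succ']
        have e0 : σ 0 = 0 := by simp [hσdef]
        rw [e0, add_zero]
        calc (∑ k ∈ Finset.range m, σ (k + 1))
            ≤ ∑ k ∈ Finset.range m, (2 / κ) ^ 2 * ((k:ℝ) + 1) ^ (-θ) :=
              Finset.sum_le_sum fun k _ => hσb k
          _ = (2 / κ) ^ 2 * ∑ k ∈ Finset.range m, ((k:ℝ) + 1) ^ (-θ) := by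
              rw [Finset.mul_sum]
          _ ≤ (2 / κ) ^ 2 * Z := by
              apply mul_le_mul_of_nonneg_left _ (by positivity)
              exact Summable.sum_le_tsum (Finset.range m)
                (fun i _ => Real.rpow_nonneg (by positivity) _) hZsum
          _ = CS := rfl
  -- constants
  set B : ℝ := N 1 + (CN:ℝ) * 2 + 1 with hBdef
  have hCN0 : (0:ℝ) ≤ (CN:ℝ) := CN.coe_nonneg
  have hB1 : 1 ≤ B := by
    have := hN1 (1:V)
    simp only [hBdef]
    nlinarith only [this, hCN0]
  have hB0 : (0:ℝ) < B := by linarith only [hB1]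
  have hNd : ∀ a : V, N a ≤ N 1 + (CN:ℝ) * dist a 1 := by
    intro a
    have h := hNlip.dist_le_mul a 1
    rw [Real.dist_eq] at h
    have := le_abs_self (N a - N 1)
    linarith only [h, this]
  -- choose ε₀
  have htarget : (0:ℝ) < (B ^ 2 * CS)⁻¹ := by
    have : (0:ℝ) < B ^ 2 * CS := mul_pos (pow_pos hB0 2) hCS0
    positivity
  obtain ⟨ε₀, hε₀pos, hε₀⟩ : ∃ ε₀ : ℝ, 0 < ε₀ ∧ ϖ ε₀ ≤ (B ^ 2 * CS)⁻¹ := by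
    have h1 : ∀ᶠ x in nhdsWithin (0:ℝ) (Set.Ioi 0), ϖ x < (B ^ 2 * CS)⁻¹ := by
      have h2 : ∀ᶠ y in nhds (ϖ 0), y < (B ^ 2 * CS)⁻¹ := by
        rw [hϖ00]
        exact gt_mem_nhds htarget
      exact hϖtend.eventually h2
    obtain ⟨x, hx1, hx2⟩ := (h1.and self_mem_nhdsWithin).exists
    exact ⟨x, hx2, le_of_lt hx1⟩
  obtain ⟨h₀, hh₀pos, hsmall₀⟩ := hω.small ε₀ hε₀pos
  obtain ⟨S₀, hS₀pos, hS₀⟩ : ∃ S₀ : ℝ, 0 < S₀ ∧ δ S₀ ≤ 1 := by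
    have h1 : ∀ᶠ x in nhdsWithin (0:ℝ) (Set.Ioi 0), δ x < 1 := by
      have h2 : ∀ᶠ y in nhds (0:ℝ), y < 1 := gt_mem_nhds one_pos
      exact hδlim.eventually h2
    obtain ⟨x, hx1, hx2⟩ := (h1.and self_mem_nhdsWithin).exists
    exact ⟨x, hx2, le_of_lt hx1⟩
  set T' : ℝ := min T (min h₀ S₀) with hT'def
  have hT'pos : 0 < T' := lt_min hT (lt_min hh₀pos hS₀pos)
  have hT'T : T' ≤ T := min_le_left _ _
  have hT'h : T' ≤ h₀ := le_trans (min_le_right _ _) (min_le_left _ _)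
  have hT'S : T' ≤ S₀ := le_trans (min_le_right _ _) (min_le_right _ _)
  have hδT' : δ T' ≤ 1 := le_trans (hδmono hT'S) hS₀
  have hωsmall : ∀ s t : ℝ, 0 ≤ s → s ≤ t → t ≤ T' → ω s t < ε₀ := by
    intro s t hs hst ht
    exact hsmall₀ hs hst (le_trans ht hT'T) (by linarith only [hst, ht, hT'h, hs])
  have hϖωle : ∀ s t : ℝ, 0 ≤ s → s ≤ t → t ≤ T' → ϖ (ω s t) ≤ (B ^ 2 * CS)⁻¹ := by
    intro s t hs hst ht
    refine le_trans ?_ hε₀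
    exact hϖmono (mem_Ici.2 (hω.nonneg hs hst (le_trans ht hT'T))) (mem_Ici.2 (le_of_lt hε₀pos))
      (le_of_lt (hωsmall s t hs hst ht))
  -- the setting
  set S : MSew.Setting V := {
    T' := T', ω := ω, ϖ := ϖ, N := N, CN := (CN:ℝ), α := α, B := B, CS := CS, σ := σ,
    hT' := hT'pos,
    hωnn := fun s t hs hst ht => hω.nonneg hs hst (le_trans ht hT'T),
    hωsup := fun r s t hr hrs hst ht => hω.superadd hr hrs hst (le_trans ht hT'T),
    hϖnn := fun x hx => hϖ.nonneg x hx,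
    hN1 := hN1,
    hCN := hCN0,
    hNd := hNd,
    hNr := hNright, hNl := hNleft,
    hαid := fun t ht0 ht => hαid ht0 (le_trans ht hT'T),
    hα1 := fun s t hs hst ht => le_trans ((hαclose T' ⟨hT'pos, hT'T⟩ hs hst ht).1) hδT',
    hαalm := fun r s t hr hrs hst ht => hαalmost hr hrs hst (le_trans ht hT'T),
    hσ0 := by simp [hσdef],
    hσnn := hσnn, hσsum := hσsum,
    hB := by rw [hBdef]; linarith only [],
    hB1 := hB1,
    hsmallMI := fun s t hs hst ht => by
      have h1 := hϖωle s t hs hst ht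
      have hBC : (0:ℝ) < B ^ 2 * CS := mul_pos (pow_pos hB0 2) hCS0
      have h2 : B ^ 2 * CS * ϖ (ω s t) ≤ B ^ 2 * CS * (B ^ 2 * CS)⁻¹ :=
        mul_le_mul_of_nonneg_left h1 (le_of_lt hBC)
      rwa [mul_inv_cancel₀ (ne_of_gt hBC)] at h2,
    hstep := fun n hn x W hW hx hxle => by
      have hm : 1 ≤ n / 2 := by omega
      have h1 := hhalfN W hW (n / 2) hm x hx hxle
      have e : σ (n - 1) = (2 / κ) * (((n / 2 : ℕ)):ℝ) ^ (-θ) := by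
        simp only [hσdef, if_neg (by omega : ¬ n - 1 = 0)]
        have e2 : (n - 1 + 1) / 2 = n / 2 := by omega
        rw [e2]
      rw [e]
      exact h1 }
    with hSdef
  have hSα : S.α = α := rfl
  have hSϖ : S.ϖ = ϖ := rfl
  have hSω : S.ω = ω := rfl
  have hST : S.T' = T' := rfl
  have hSB : S.B = B := rfl
  have hSCS : S.CS = CS := rfl
  -- dyadic grid partitions
  set c : ℕ → ℝ := fun n => T' / 2 ^ n with hcdef
  have hc0 : ∀ n, 0 < c n := fun n => by
    simp only [hcdef]; positivity
  set pt : ℕ → ℝ → ℝ → ℕ → ℝ := fun n s t l => max s (min t ((l : ℝ) * c n)) with hptdef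
  have pt_mono : ∀ n s t, Monotone (pt n s t) := by
    intro n s t a b hab
    simp only [hptdef]
    refine max_le_max le_rfl (min_le_min le_rfl ?_)
    exact mul_le_mul_of_nonneg_right (by exact_mod_cast hab) (le_of_lt (hc0 n))
  have pt_lb : ∀ n s t l, s ≤ pt n s t l := fun n s t l => le_max_left _ _
  have pt_ub : ∀ n s t l, s ≤ t → pt n s t l ≤ t := by
    intro n s t l hst
    simp only [hptdef]
    exact max_le hst (min_le_left _ _)
  have pt_zero : ∀ n s t, 0 ≤ s → 0 ≤ t → pt n s t 0 = s := by
    intro n s t hs ht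
    simp only [hptdef]
    rw [Nat.cast_zero, zero_mul, min_eq_right ht, max_eq_left hs]
  have pt_top : ∀ n s t, s ≤ t → t ≤ T' → pt n s t (2 ^ n) = t := by
    intro n s t hst ht
    simp only [hptdef, hcdef]
    have e : ((2 ^ n : ℕ):ℝ) * (T' / 2 ^ n) = T' := by
      push_cast
      field_simp
    rw [e, min_eq_left ht, max_eq_right hst]
  have clamp_lip : ∀ s t x y : ℝ, x ≤ y → max s (min t y) - max s (min t x) ≤ y - x := by
    intro s t x y hxy
    simp only [max_def, min_def]
    split_ifs <;> linarith
  have pt_step : ∀ n s t l, s ≤ t → pt n s t (l + 1) - pt n s t l ≤ c n := by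
    intro n s t l hst
    have hcc := le_of_lt (hc0 n)
    have h := clamp_lip s t ((l:ℝ) * c n) (((l + 1 : ℕ):ℝ) * c n)
      (by push_cast; nlinarith only [hcc])
    simp only [hptdef]
    have e : ((l + 1 : ℕ):ℝ) * c n - (l:ℝ) * c n = c n := by push_cast; ring
    linarith only [h, e]
  have pt_nest : ∀ n k s t l, pt n s t l = pt (n + k) s t (l * 2 ^ k) := by
    intro n k s t l
    simp only [hptdef, hcdef]
    have h2n : ((2:ℝ)) ^ n ≠ 0 := by positivity
    have h2nk : ((2:ℝ)) ^ (n + k) ≠ 0 := by positivity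
    have e : (l:ℝ) * (T' / 2 ^ n) = ((l * 2 ^ k : ℕ):ℝ) * (T' / 2 ^ (n + k)) := by
      push_cast
      rw [pow_add]
      field_simp
    rw [e]
  -- smallness of the piecewise remainder sums
  have hSn : ∀ s t : ℝ, 0 ≤ s → s ≤ t → t ≤ T' → ∀ ε : ℝ, 0 < ε → ∃ Nn : ℕ, ∀ n, Nn ≤ n →
      (∑ i ∈ Finset.range (2 ^ n), ϖ (ω (pt n s t i) (pt n s t (i + 1)))) ≤ ε := by
    intro s t hs hst ht ε hε
    have hpt0 : ∀ n i, 0 ≤ pt n s t i := fun n i => le_trans hs (pt_lb n s t i)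
    have hptT : ∀ n i, pt n s t i ≤ T' := fun n i => le_trans (pt_ub n s t i hst) ht
    have hωpiece : ∀ n i, 0 ≤ ω (pt n s t i) (pt n s t (i + 1)) := fun n i =>
      hω.nonneg (hpt0 n i) (pt_mono n s t (Nat.le_succ i)) (le_trans (hptT n (i+1)) hT'T)
    have hωsub : ∀ n i, ω (pt n s t i) (pt n s t (i + 1)) ≤ ω s t := fun n i =>
      S.ω_le hs (pt_lb n s t i) (pt_mono n s t (Nat.le_succ i)) (pt_ub n s t (i+1) hst) ht
    have hωst0 : 0 ≤ ω s t := hω.nonneg hs hst (le_trans ht hT'T)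
    rcases eq_or_lt_of_le hωst0 with hW | hW
    · refine ⟨0, fun n _ => ?_⟩
      have hz : ∀ i ∈ Finset.range (2 ^ n), ϖ (ω (pt n s t i) (pt n s t (i + 1))) = 0 := by
        intro i _
        have h1 : ω (pt n s t i) (pt n s t (i + 1)) = 0 := by
          have h2 := hωsub n i
          rw [← hW] at h2
          exact le_antisymm h2 (hωpiece n i)
        rw [h1, hϖ00]
      rw [Finset.sum_congr rfl hz, Finset.sum_const_zero]
      linarith only [hε]
    · have hϖW : 0 < ϖ (ω s t) := by
        rw [← hϖ00]
        exact hϖ.strictMonoOn (mem_Ici.2 le_rfl) (mem_Ici.2 hωst0) hW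
      have hWne : ω s t ≠ 0 := ne_of_gt hW
      set ρ : ℝ := ε * κ / (2 * ϖ (ω s t)) with hρdef
      have hρ0 : 0 < ρ := div_pos (mul_pos hε hκ0) (by linarith only [hϖW])
      set ν : ℝ := (min 1 ρ) ^ (1 / (θ - 1)) with hνdef
      have hmin0 : 0 < min 1 ρ := lt_min one_pos hρ0
      have hν0 : 0 < ν := Real.rpow_pos_of_pos hmin0 _
      have hνθ : ν ^ (θ - 1) = min 1 ρ := by
        have hθne : θ - 1 ≠ 0 := ne_of_gt (by linarith only [hθ1])
        rw [hνdef, ← Real.rpow_mul (le_of_lt hmin0),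
          show 1 / (θ - 1) * (θ - 1) = 1 from by field_simp, Real.rpow_one]
      set η : ℝ := ω s t * ν with hηdef
      have hη0 : 0 < η := mul_pos hW hν0
      have hηW : η / ω s t = ν := by
        rw [hηdef, mul_comm, mul_div_assoc, div_self hWne, mul_one]
      obtain ⟨h₁, hh₁, hsm₁⟩ := hω.small η hη0
      obtain ⟨Nn, hNn⟩ : ∃ Nn : ℕ, T' / 2 ^ Nn ≤ h₁ := by
        obtain ⟨Nn, hNn⟩ := pow_unbounded_of_one_lt (T' / h₁) (one_lt_two (α := ℝ))
        refine ⟨Nn, ?_⟩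
        rw [div_le_iff₀ (by positivity)]
        rw [div_lt_iff₀ hh₁] at hNn
        nlinarith only [hNn, mul_comm ((2:ℝ) ^ Nn) h₁]
      refine ⟨Nn, fun n hn => ?_⟩
      have hcn : c n ≤ h₁ := by
        have h2 : (2:ℝ) ^ Nn ≤ 2 ^ n := pow_le_pow_right₀ (by norm_num) hn
        have h3 : c n ≤ T' / 2 ^ Nn := by
          simp only [hcdef]
          apply div_le_div_of_nonneg_left (le_of_lt hT'pos) (by positivity) h2
        linarith only [hNn, h3]
      have hpieceη : ∀ i, ω (pt n s t i) (pt n s t (i + 1)) ≤ η := by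
        intro i
        refine le_of_lt (hsm₁ (hpt0 n i) (pt_mono n s t (Nat.le_succ i))
          (le_trans (hptT n (i+1)) hT'T) ?_)
        have := pt_step n s t i hst
        linarith only [this, hcn]
      have hchain : (∑ i ∈ Finset.range (2 ^ n), ω (pt n s t i) (pt n s t (i + 1))) ≤ ω s t := by
        have h1 := S.chainSum (pt n s t) (pt_mono n s t) (hpt0 n) (hptT n) (2 ^ n)
        rw [pt_zero n s t hs (le_trans hs hst), pt_top n s t hst ht] at h1
        exact h1
      have hcst0 : 0 ≤ (2 / κ) * ϖ (ω s t) * (η / ω s t) ^ (θ - 1) / ω s t :=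
        div_nonneg (mul_nonneg (mul_nonneg (le_of_lt h2κpos) (le_of_lt hϖW))
          (Real.rpow_nonneg (le_of_lt (div_pos hη0 hW)) _)) (le_of_lt hW)
      have hterm : ∀ i, ϖ (ω (pt n s t i) (pt n s t (i + 1))) ≤
          ((2 / κ) * ϖ (ω s t) * (η / ω s t) ^ (θ - 1) / ω s t) *
            ω (pt n s t i) (pt n s t (i + 1)) := by
        intro i
        rcases eq_or_lt_of_le (hωpiece n i) with hx0 | hx0
        · rw [← hx0, hϖ00, mul_zero]
        · have h1 := hpow (ω s t) hW _ hx0 (hωsub n i)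
          have hxW0 : 0 < ω (pt n s t i) (pt n s t (i + 1)) / ω s t := div_pos hx0 hW
          have h2 : (ω (pt n s t i) (pt n s t (i + 1)) / ω s t) ^ θ =
              (ω (pt n s t i) (pt n s t (i + 1)) / ω s t) ^ (θ - 1) *
              (ω (pt n s t i) (pt n s t (i + 1)) / ω s t) := by
            calc (ω (pt n s t i) (pt n s t (i + 1)) / ω s t) ^ θ
                = (ω (pt n s t i) (pt n s t (i + 1)) / ω s t) ^ (θ - 1 + 1) := by norm_num
              _ = (ω (pt n s t i) (pt n s t (i + 1)) / ω s t) ^ (θ - 1) *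
                  (ω (pt n s t i) (pt n s t (i + 1)) / ω s t) ^ (1:ℝ) :=
                  Real.rpow_add hxW0 _ _
              _ = _ := by rw [Real.rpow_one]
          have h3' : ω (pt n s t i) (pt n s t (i + 1)) / ω s t ≤ η / ω s t := by
            have hWinv : 0 ≤ (ω s t)⁻¹ := inv_nonneg.2 (le_of_lt hW)
            calc ω (pt n s t i) (pt n s t (i + 1)) / ω s t
                = ω (pt n s t i) (pt n s t (i + 1)) * (ω s t)⁻¹ := div_eq_mul_inv _ _
              _ ≤ η * (ω s t)⁻¹ := mul_le_mul_of_nonneg_right (hpieceη i) hWinv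
              _ = η / ω s t := (div_eq_mul_inv _ _).symm
          have h3 : (ω (pt n s t i) (pt n s t (i + 1)) / ω s t) ^ (θ - 1) ≤
              (η / ω s t) ^ (θ - 1) :=
            Real.rpow_le_rpow (le_of_lt hxW0) h3' (by linarith only [hθ1])
          calc ϖ (ω (pt n s t i) (pt n s t (i + 1)))
              ≤ (2 / κ) * (ω (pt n s t i) (pt n s t (i + 1)) / ω s t) ^ θ * ϖ (ω s t) := h1
            _ = (2 / κ) * ϖ (ω s t) *
                ((ω (pt n s t i) (pt n s t (i + 1)) / ω s t) ^ (θ - 1) *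
                 (ω (pt n s t i) (pt n s t (i + 1)) / ω s t)) := by rw [h2]; ring
            _ ≤ (2 / κ) * ϖ (ω s t) *
                ((η / ω s t) ^ (θ - 1) *
                 (ω (pt n s t i) (pt n s t (i + 1)) / ω s t)) := by
                refine mul_le_mul_of_nonneg_left ?_
                  (mul_nonneg (le_of_lt h2κpos) (le_of_lt hϖW))
                exact mul_le_mul_of_nonneg_right h3 (le_of_lt hxW0)
            _ = ((2 / κ) * ϖ (ω s t) * (η / ω s t) ^ (θ - 1) / ω s t) *
                ω (pt n s t i) (pt n s t (i + 1)) := by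
                field_simp
      calc (∑ i ∈ Finset.range (2 ^ n), ϖ (ω (pt n s t i) (pt n s t (i + 1))))
          ≤ ∑ i ∈ Finset.range (2 ^ n),
              ((2 / κ) * ϖ (ω s t) * (η / ω s t) ^ (θ - 1) / ω s t) *
                ω (pt n s t i) (pt n s t (i + 1)) :=
            Finset.sum_le_sum fun i _ => hterm i
        _ = ((2 / κ) * ϖ (ω s t) * (η / ω s t) ^ (θ - 1) / ω s t) *
              ∑ i ∈ Finset.range (2 ^ n), ω (pt n s t i) (pt n s t (i + 1)) := by
            rw [Finset.mul_sum]
        _ ≤ ((2 / κ) * ϖ (ω s t) * (η / ω s t) ^ (θ - 1) / ω s t) * ω s t :=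
            mul_le_mul_of_nonneg_left hchain hcst0
        _ = (2 / κ) * ϖ (ω s t) * (η / ω s t) ^ (θ - 1) := by
            field_simp
        _ = (2 / κ) * ϖ (ω s t) * min 1 ρ := by rw [hηW, hνθ]
        _ ≤ (2 / κ) * ϖ (ω s t) * ρ :=
            mul_le_mul_of_nonneg_left (min_le_right _ _)
              (mul_nonneg (le_of_lt h2κpos) (le_of_lt hϖW))
        _ = ε := by
            rw [hρdef]
            field_simp
  -- refinement Cauchy bound
  have hCB : ∀ s t : ℝ, 0 ≤ s → s ≤ t → t ≤ T' → ∀ n k : ℕ,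
      dist (S.P (pt (n + k) s t) (2 ^ (n + k))) (S.P (pt n s t) (2 ^ n)) ≤
        (B ^ 4 * CS) * ∑ i ∈ Finset.range (2 ^ n), ϖ (ω (pt n s t i) (pt n s t (i + 1))) := by
    intro s t hs hst ht n k
    have hpt0 : ∀ i, 0 ≤ pt (n + k) s t i := fun i => le_trans hs (pt_lb _ s t i)
    have hptT : ∀ i, pt (n + k) s t i ≤ T' := fun i => le_trans (pt_ub _ s t i hst) ht
    have hψmono : Monotone (fun l : ℕ => l * 2 ^ k) := fun a b hab => Nat.mul_le_mul_right _ hab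
    have href := S.REF (pt (n + k) s t) (fun l => l * 2 ^ k) (2 ^ n)
      (pt_mono _ s t) hpt0 hptT hψmono (by simp)
    simp only [hSϖ, hSω, hSB, hSCS] at href
    rw [show 2 ^ n * 2 ^ k = 2 ^ (n + k) from (pow_add 2 n k).symm] at href
    have e1 : S.P (fun i => pt (n + k) s t (i * 2 ^ k)) (2 ^ n) = S.P (pt n s t) (2 ^ n) :=
      congrArg (fun u => S.P u (2 ^ n)) (funext fun i => (pt_nest n k s t i).symm)
    have e2 : (∑ i ∈ Finset.range (2 ^ n),
          ϖ (ω (pt (n + k) s t (i * 2 ^ k)) (pt (n + k) s t ((i + 1) * 2 ^ k)))) =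
        ∑ i ∈ Finset.range (2 ^ n), ϖ (ω (pt n s t i) (pt n s t (i + 1))) :=
      Finset.sum_congr rfl fun i _ => by
        rw [← pt_nest n k s t i, ← pt_nest n k s t (i + 1)]
    rw [e1, e2] at href
    exact href
  -- convergence
  have hK0' : (0:ℝ) ≤ B ^ 4 * CS := le_of_lt (mul_pos (pow_pos hB0 4) hCS0)
  have hconv : ∀ s t : ℝ, 0 ≤ s → s ≤ t → t ≤ T' →
      ∃ x : V, Tendsto (fun n => S.P (pt n s t) (2 ^ n)) atTop (nhds x) := by
    intro s t hs hst ht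
    apply cauchySeq_tendsto_of_complete
    rw [Metric.cauchySeq_iff']
    intro ε hε
    have hK1 : (0:ℝ) < B ^ 4 * CS + 1 := by linarith only [hK0']
    obtain ⟨Nn, hNn⟩ := hSn s t hs hst ht (ε / (B ^ 4 * CS + 1)) (div_pos hε hK1)
    refine ⟨Nn, fun n hn => ?_⟩
    have h1 := hCB s t hs hst ht Nn (n - Nn)
    rw [show Nn + (n - Nn) = n from by omega] at h1
    have h2 := hNn Nn le_rfl
    calc dist (S.P (pt n s t) (2 ^ n)) (S.P (pt Nn s t) (2 ^ Nn))
        ≤ (B ^ 4 * CS) * ∑ i ∈ Finset.range (2 ^ Nn),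
            ϖ (ω (pt Nn s t i) (pt Nn s t (i + 1))) := h1
      _ ≤ (B ^ 4 * CS) * (ε / (B ^ 4 * CS + 1)) := mul_le_mul_of_nonneg_left h2 hK0'
      _ < ε := by
          rw [mul_comm, div_mul_eq_mul_div, div_lt_iff₀ hK1]
          nlinarith only [hε, hK0']
  set g : ℝ → ℝ → V := fun s t =>
    if h : 0 ≤ s ∧ s ≤ t ∧ t ≤ T' then (hconv s t h.1 h.2.1 h.2.2).choose else 1 with hgdef
  have htg : ∀ s t : ℝ, 0 ≤ s → s ≤ t → t ≤ T' →
      Tendsto (fun n => S.P (pt n s t) (2 ^ n)) atTop (nhds (g s t)) := by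
    intro s t hs hst ht
    have h : 0 ≤ s ∧ s ≤ t ∧ t ≤ T' := ⟨hs, hst, ht⟩
    rw [hgdef]
    simp only [dif_pos h]
    exact (hconv s t h.1 h.2.1 h.2.2).choose_spec
  have hSσ : S.σ = σ := rfl
  refine ⟨T', ⟨hT'pos, hT'T⟩, g, ?_, ?_, ⟨B ^ 2 * CS, ?_⟩, ?_⟩
  · -- g t t = 1
    intro t ht0 htT
    have hpt : ∀ n l, pt n t t l = t := by
      intro n l
      simp only [hptdef]
      rw [max_eq_left (min_le_left _ _)]
    have hone : ∀ n : ℕ, S.P (pt n t t) (2 ^ n) = 1 := by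
      intro n
      refine MSew.Q_one fun i _ => ?_
      rw [hpt, hpt]
      exact S.hαid t ht0 htT
    have h1 := htg t t ht0 le_rfl htT
    have h2 : Tendsto (fun n : ℕ => S.P (pt n t t) (2 ^ n)) atTop (nhds (1:V)) := by
      rw [show (fun n : ℕ => S.P (pt n t t) (2 ^ n)) = fun _ => (1:V) from funext hone]
      exact tendsto_const_nhds
    exact tendsto_nhds_unique h1 h2
  · -- multiplicativity
    intro r s t hr hrs hst htT
    have hs0 : 0 ≤ s := le_trans hr hrs
    have ht0 : 0 ≤ t := le_trans hs0 hst
    have hsT : s ≤ T' := le_trans hst htT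
    have hrT : r ≤ T' := le_trans hrs hsT
    have hrt : r ≤ t := le_trans hrs hst
    have hkey : ∀ n : ℕ, ∃ a b : ℝ, 0 ≤ a ∧ a ≤ b ∧ b ≤ T' ∧ b - a ≤ c n ∧
        dist (S.P (pt n r s) (2 ^ n) * S.P (pt n s t) (2 ^ n)) (S.P (pt n r t) (2 ^ n)) ≤
          B * (B * ϖ (ω a b)) := by
      intro n
      have h2n1 : 1 ≤ 2 ^ n := Nat.one_le_two_pow
      set l₀ : ℕ := max 1 ⌈s / c n⌉₊ with hl₀def
      have hl1 : 1 ≤ l₀ := le_max_left _ _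
      have hl2 : s ≤ (l₀:ℝ) * c n := by
        have h1 : s / c n ≤ (⌈s / c n⌉₊:ℝ) := Nat.le_ceil _
        have h2 : ((⌈s / c n⌉₊:ℕ):ℝ) ≤ (l₀:ℝ) := by exact_mod_cast le_max_right 1 _
        rw [div_le_iff₀ (hc0 n)] at h1
        have h3 := mul_le_mul_of_nonneg_right h2 (le_of_lt (hc0 n))
        linarith only [h1, h3]
      have hl3 : ((l₀:ℝ) - 1) * c n ≤ s := by
        rcases Nat.eq_or_lt_of_le hl1 with h | h
        · rw [← h]
          norm_num
          exact hs0
        · have hceil : l₀ = ⌈s / c n⌉₊ := by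
            by_cases hcc : ⌈s / c n⌉₊ ≤ 1
            · exfalso
              have : l₀ = 1 := by
                simp only [hl₀def]
                omega
              omega
            · simp only [hl₀def]
              omega
          have h4 : (⌈s / c n⌉₊:ℝ) < s / c n + 1 :=
            Nat.ceil_lt_add_one (div_nonneg hs0 (le_of_lt (hc0 n)))
          have h5 : ((l₀:ℝ) - 1) < s / c n := by
            rw [hceil]
            push_cast at h4 ⊢
            linarith only [h4]
          have h6 := mul_le_mul_of_nonneg_right (le_of_lt h5) (le_of_lt (hc0 n))
          rw [div_mul_cancel₀ _ (ne_of_gt (hc0 n))] at h6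
          exact h6
      have hl4 : l₀ ≤ 2 ^ n := by
        have h1 : ⌈s / c n⌉₊ ≤ 2 ^ n := by
          rw [Nat.ceil_le, div_le_iff₀ (hc0 n)]
          have e : ((2 ^ n : ℕ):ℝ) * c n = T' := by
            simp only [hcdef]
            push_cast
            field_simp
          rw [e]
          exact hsT
        simp only [hl₀def]
        exact max_le h2n1 h1
      set u : ℕ → ℝ := pt n r t with hudef
      have hum : Monotone u := pt_mono n r t
      have hu0 : ∀ i, 0 ≤ u i := fun i => le_trans hr (pt_lb n r t i)
      have huT : ∀ i, u i ≤ T' := fun i => le_trans (pt_ub n r t i hrt) htT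
      have hus : ∀ jj : ℕ, jj < l₀ → u jj ≤ s := by
        intro jj hjj
        have hcast : (jj:ℝ) ≤ (l₀:ℝ) - 1 := by
          have h1 : ((jj:ℕ):ℝ) ≤ ((l₀ - 1 : ℕ):ℝ) := by exact_mod_cast (by omega : jj ≤ l₀ - 1)
          rwa [Nat.cast_sub hl1, Nat.cast_one] at h1
        have h2 : (jj:ℝ) * c n ≤ s :=
          le_trans (mul_le_mul_of_nonneg_right hcast (le_of_lt (hc0 n))) hl3
        simp only [hudef, hptdef]
        exact max_le hrs (le_trans (min_le_right _ _) h2)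
      have hsu : ∀ jj : ℕ, l₀ ≤ jj → s ≤ u jj := by
        intro jj hjj
        have hcast : (l₀:ℝ) ≤ (jj:ℝ) := by exact_mod_cast hjj
        have h2 : s ≤ (jj:ℝ) * c n :=
          le_trans hl2 (mul_le_mul_of_nonneg_right hcast (le_of_lt (hc0 n)))
        simp only [hudef, hptdef]
        exact le_trans (le_min hst h2) (le_max_right _ _)
      set v : ℕ → ℝ := fun l => if l < l₀ then u l else if l = l₀ then s else u (l - 1)
        with hvdef
      have hv0 : ∀ l, 0 ≤ v l := by
        intro l
        simp only [hvdef]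
        split_ifs
        · exact hu0 _
        · exact hs0
        · exact hu0 _
      have hvT : ∀ l, v l ≤ T' := by
        intro l
        simp only [hvdef]
        split_ifs
        · exact huT _
        · exact hsT
        · exact huT _
      set ψ : ℕ → ℕ := fun j => if j ≤ l₀ then j else if j < 2 ^ n + l₀ then l₀
        else j - 2 ^ n + 1 with hψdef
      have hψ0 : ψ 0 = 0 := by
        simp only [hψdef]
        rw [if_pos (Nat.zero_le l₀)]
      have hψstep : ∀ j, ψ (j + 1) = ψ j ∨ ψ (j + 1) = ψ j + 1 := by
        intro j
        simp only [hψdef]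
        split_ifs <;> omega
      have hψtop : ψ (2 ^ n + 2 ^ n) = 2 ^ n + 1 := by
        simp only [hψdef]
        rw [if_neg (by omega), if_neg (by omega)]
        omega
      have hscl : ∀ jj : ℕ, jj < l₀ → (jj:ℝ) * c n ≤ s := by
        intro jj hjj
        have hcast : (jj:ℝ) ≤ (l₀:ℝ) - 1 := by
          have h1 : ((jj:ℕ):ℝ) ≤ ((l₀ - 1 : ℕ):ℝ) := by exact_mod_cast (by omega : jj ≤ l₀ - 1)
          rwa [Nat.cast_sub hl1, Nat.cast_one] at h1
        exact le_trans (mul_le_mul_of_nonneg_right hcast (le_of_lt (hc0 n))) hl3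
      have hscl2 : ∀ jj : ℕ, l₀ ≤ jj → s ≤ (jj:ℝ) * c n := by
        intro jj hjj
        have hcast : (l₀:ℝ) ≤ (jj:ℝ) := by exact_mod_cast hjj
        exact le_trans hl2 (mul_le_mul_of_nonneg_right hcast (le_of_lt (hc0 n)))
      have hA1 : ∀ i, i ≤ 2 ^ n → v (ψ i) = pt n r s i := by
        intro i hi
        rcases Nat.lt_trichotomy i l₀ with h | h | h
        · have hψi : ψ i = i := by
            simp only [hψdef]
            rw [if_pos (by omega)]
          have hvi : v i = u i := by
            simp only [hvdef]
            rw [if_pos h]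
          rw [hψi, hvi]
          have hx : (i:ℝ) * c n ≤ s := hscl i h
          simp only [hudef, hptdef]
          rw [min_eq_right (le_trans hx hst), min_eq_right hx]
        · have hψi : ψ i = l₀ := by
            simp only [hψdef]
            rw [if_pos (by omega)]
            omega
          have hvl : v l₀ = s := by
            simp only [hvdef]
            rw [if_neg (by omega)]
            simp
          have hrs' : pt n r s i = s := by
            simp only [hptdef]
            rw [min_eq_left (hscl2 i (by omega)), max_eq_right hrs]
          rw [hψi, hvl, hrs']
        · have hψi : ψ i = l₀ := by
            simp only [hψdef]
            rw [if_neg (by omega), if_pos (by omega)]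
          have hvl : v l₀ = s := by
            simp only [hvdef]
            rw [if_neg (by omega)]
            simp
          have hrs' : pt n r s i = s := by
            simp only [hptdef]
            rw [min_eq_left (hscl2 i (by omega)), max_eq_right hrs]
          rw [hψi, hvl, hrs']
      have hA2 : ∀ i, i ≤ 2 ^ n → v (ψ (2 ^ n + i)) = pt n s t i := by
        intro i hi
        by_cases h : i < l₀
        · have hψj : ψ (2 ^ n + i) = l₀ := by
            simp only [hψdef]
            split_ifs <;> omega
          have hvl : v l₀ = s := by
            simp only [hvdef]
            rw [if_neg (by omega)]
            simp
          have hst' : pt n s t i = s := by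
            simp only [hptdef]
            rw [min_eq_right (le_trans (hscl i h) hst), max_eq_left (hscl i h)]
          rw [hψj, hvl, hst']
        · have hψj : ψ (2 ^ n + i) = i + 1 := by
            simp only [hψdef]
            rw [if_neg (by omega), if_neg (by omega)]
            omega
          have hv : v (i + 1) = u i := by
            simp only [hvdef]
            rw [if_neg (by omega), if_neg (by omega)]
            simp [Nat.add_sub_cancel]
          rw [hψj, hv]
          have hx : s ≤ min t ((i:ℝ) * c n) := le_min hst (hscl2 i (by omega))
          simp only [hudef, hptdef]
          rw [max_eq_right (le_trans hrs hx), max_eq_right hx]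
      have hPA : S.P (pt n r s) (2 ^ n) * S.P (pt n s t) (2 ^ n) =
          S.P (fun i => v (ψ i)) (2 ^ n + 2 ^ n) := by
        rw [S.P_add]
        congr 1
        · exact S.P_congr fun l hl => (hA1 l hl).symm
        · exact S.P_congr fun l hl => (hA2 l hl).symm
      have hsplitv : S.P v (2 ^ n + 1) =
          S.P u (l₀ - 1) * ((S.α (u (l₀ - 1)) s * S.α s (u l₀)) *
            S.P (fun l => u (l₀ + l)) (2 ^ n - l₀)) := by
        calc S.P v (2 ^ n + 1) = S.P v ((l₀ - 1) + (2 + (2 ^ n - l₀))) := by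
              rw [show (l₀ - 1) + (2 + (2 ^ n - l₀)) = 2 ^ n + 1 from by omega]
          _ = S.P v (l₀ - 1) * (S.P (fun l => v (l₀ - 1 + l)) 2 *
                S.P (fun l => v (l₀ - 1 + (2 + l))) (2 ^ n - l₀)) := by
              rw [S.P_add, S.P_add]
          _ = _ := by
              rw [S.P_two]
              have e1 : S.P v (l₀ - 1) = S.P u (l₀ - 1) :=
                S.P_congr fun l hl => by
                  simp only [hvdef]
                  rw [if_pos (by omega)]
              have e2 : v (l₀ - 1 + 0) = u (l₀ - 1) := by
                simp only [hvdef]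
                rw [if_pos (by omega)]
                exact congrArg u (by omega)
              have e3 : v (l₀ - 1 + 1) = s := by
                simp only [hvdef]
                rw [if_neg (by omega), if_pos (by omega)]
              have e4 : v (l₀ - 1 + 2) = u l₀ := by
                simp only [hvdef]
                rw [if_neg (by omega), if_neg (by omega)]
                exact congrArg u (by omega)
              have e5 : (fun l => v (l₀ - 1 + (2 + l))) = fun l => u (l₀ + l) := by
                funext l
                simp only [hvdef]
                rw [if_neg (by omega), if_neg (by omega)]
                exact congrArg u (by omega)
              rw [e1, e2, e3, e4, e5]
      have hsplitu : S.P u (2 ^ n) =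
          S.P u (l₀ - 1) * (S.α (u (l₀ - 1)) (u l₀) *
            S.P (fun l => u (l₀ + l)) (2 ^ n - l₀)) := by
        calc S.P u (2 ^ n) = S.P u ((l₀ - 1) + (1 + (2 ^ n - l₀))) := by
              rw [show (l₀ - 1) + (1 + (2 ^ n - l₀)) = 2 ^ n from by omega]
          _ = S.P u (l₀ - 1) * (S.P (fun l => u (l₀ - 1 + l)) 1 *
                S.P (fun l => u (l₀ - 1 + (1 + l))) (2 ^ n - l₀)) := by
              rw [S.P_add, S.P_add]
          _ = _ := by
              rw [S.P_one]
              have e2 : l₀ - 1 + 0 = l₀ - 1 := by omega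
              have e3 : l₀ - 1 + 1 = l₀ := by omega
              have e5 : (fun l => u (l₀ - 1 + (1 + l))) = fun l => u (l₀ + l) := by
                funext l
                exact congrArg u (by omega)
              rw [e2, e3, e5]
      have hstepC : dist (S.P v (2 ^ n + 1)) (S.P u (2 ^ n)) ≤
          B * (B * ϖ (ω (u (l₀ - 1)) (u l₀))) := by
        rw [hsplitv, hsplitu]
        refine le_trans (S.threeN _ _ _ _) ?_
        have hNX : S.N (S.P u (l₀ - 1)) ≤ B := S.NP u hum hu0 huT _
        have hNY : S.N (S.P (fun l => u (l₀ + l)) (2 ^ n - l₀)) ≤ B :=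
          S.NP _ (fun p q hpq => hum (show l₀ + p ≤ l₀ + q by omega))
            (fun l => hu0 _) (fun l => huT _) _
        have hmidd : dist (S.α (u (l₀ - 1)) s * S.α s (u l₀)) (S.α (u (l₀ - 1)) (u l₀)) ≤
            ϖ (ω (u (l₀ - 1)) (u l₀)) :=
          S.hαalm _ s _ (hu0 _) (hus (l₀ - 1) (by omega)) (hsu l₀ le_rfl) (huT _)
        exact mul_le_mul hNX (mul_le_mul hNY hmidd dist_nonneg (le_of_lt hB0))
          (mul_nonneg (S.hN0 _) dist_nonneg) (le_of_lt hB0)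
      refine ⟨u (l₀ - 1), u l₀, hu0 _, hum (by omega), huT _, ?_, ?_⟩
      · have hls := pt_step n r t (l₀ - 1) hrt
        rw [show l₀ - 1 + 1 = l₀ from by omega] at hls
        exact hls
      · calc dist (S.P (pt n r s) (2 ^ n) * S.P (pt n s t) (2 ^ n)) (S.P u (2 ^ n))
            = dist (S.P v (2 ^ n + 1)) (S.P u (2 ^ n)) := by
              rw [hPA, S.P_pad v ψ hv0 hvT hψ0 hψstep, hψtop]
          _ ≤ B * (B * ϖ (ω (u (l₀ - 1)) (u l₀))) := hstepC
    choose a b ha hab hbT hlen hbound using hkey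
    have hωab : Tendsto (fun n => ω (a n) (b n)) atTop (nhds 0) := by
      rw [Metric.tendsto_atTop]
      intro ε hε
      obtain ⟨h₁, hh₁, hsm₁⟩ := hω.small ε hε
      obtain ⟨Nn, hNn⟩ : ∃ Nn : ℕ, T' / 2 ^ Nn ≤ h₁ := by
        obtain ⟨Nn, hNn⟩ := pow_unbounded_of_one_lt (T' / h₁) (one_lt_two (α := ℝ))
        refine ⟨Nn, ?_⟩
        rw [div_le_iff₀ (by positivity)]
        rw [div_lt_iff₀ hh₁] at hNn
        nlinarith only [hNn, mul_comm ((2:ℝ) ^ Nn) h₁]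
      refine ⟨Nn, fun n hn => ?_⟩
      have h2 : (2:ℝ) ^ Nn ≤ 2 ^ n := pow_le_pow_right₀ (by norm_num) hn
      have h3 : c n ≤ h₁ := by
        have h4 : c n ≤ T' / 2 ^ Nn := by
          simp only [hcdef]
          apply div_le_div_of_nonneg_left (le_of_lt hT'pos) (by positivity) h2
        linarith only [h4, hNn]
      have h5 : ω (a n) (b n) < ε :=
        hsm₁ (ha n) (hab n) (le_trans (hbT n) hT'T) (by linarith only [hlen n, h3])
      have h6 : 0 ≤ ω (a n) (b n) := hω.nonneg (ha n) (hab n) (le_trans (hbT n) hT'T)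
      rw [Real.dist_eq, sub_zero, abs_of_nonneg h6]
      exact h5
    have hϖab : Tendsto (fun n => ϖ (ω (a n) (b n))) atTop (nhds 0) := by
      have h1 : Tendsto (fun n => ω (a n) (b n)) atTop (nhdsWithin 0 (Set.Ici 0)) := by
        rw [tendsto_nhdsWithin_iff]
        exact ⟨hωab, Filter.Eventually.of_forall fun n =>
          hω.nonneg (ha n) (hab n) (le_trans (hbT n) hT'T)⟩
      have h2 : Tendsto ϖ (nhdsWithin (0:ℝ) (Set.Ici 0)) (nhds (ϖ 0)) := hϖc0
      rw [hϖ00] at h2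
      exact h2.comp h1
    have hgs := htg r s hr hrs hsT
    have hgt := htg s t hs0 hst htT
    have hgrt := htg r t hr hrt htT
    have hd1 : Tendsto (fun n => dist (g r s) (S.P (pt n r s) (2 ^ n))) atTop (nhds 0) := by
      have h := (tendsto_const_nhds (x := g r s) (f := (atTop : Filter ℕ))).dist hgs
      simpa using h
    have hd2 : Tendsto (fun n => dist (g s t) (S.P (pt n s t) (2 ^ n))) atTop (nhds 0) := by
      have h := (tendsto_const_nhds (x := g s t) (f := (atTop : Filter ℕ))).dist hgt
      simpa using h
    have hd3 : Tendsto (fun n => dist (S.P (pt n r t) (2 ^ n)) (g r t)) atTop (nhds 0) := by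
      have h := hgrt.dist (tendsto_const_nhds (x := g r t) (f := (atTop : Filter ℕ)))
      simpa using h
    have hbig : ∀ n : ℕ, dist (g r s * g s t) (g r t) ≤
        S.N (g s t) * dist (g r s) (S.P (pt n r s) (2 ^ n)) +
        B * dist (g s t) (S.P (pt n s t) (2 ^ n)) +
        B * (B * ϖ (ω (a n) (b n))) +
        dist (S.P (pt n r t) (2 ^ n)) (g r t) := by
      intro n
      have t1 : dist (g r s * g s t) (S.P (pt n r s) (2 ^ n) * g s t) ≤
          S.N (g s t) * dist (g r s) (S.P (pt n r s) (2 ^ n)) := S.hNr _ _ _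
      have hNPn : S.N (S.P (pt n r s) (2 ^ n)) ≤ B :=
        S.NP (pt n r s) (pt_mono n r s) (fun i => le_trans hr (pt_lb n r s i))
          (fun i => le_trans (pt_ub n r s i hrs) hsT) _
      have t2 : dist (S.P (pt n r s) (2 ^ n) * g s t)
          (S.P (pt n r s) (2 ^ n) * S.P (pt n s t) (2 ^ n)) ≤
          B * dist (g s t) (S.P (pt n s t) (2 ^ n)) := by
        refine le_trans (S.hNl _ _ _) ?_
        exact mul_le_mul_of_nonneg_right hNPn dist_nonneg
      have t3 := hbound n
      have htri : dist (g r s * g s t) (g r t) ≤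
          dist (g r s * g s t) (S.P (pt n r s) (2 ^ n) * g s t) +
          dist (S.P (pt n r s) (2 ^ n) * g s t)
            (S.P (pt n r s) (2 ^ n) * S.P (pt n s t) (2 ^ n)) +
          dist (S.P (pt n r s) (2 ^ n) * S.P (pt n s t) (2 ^ n)) (S.P (pt n r t) (2 ^ n)) +
          dist (S.P (pt n r t) (2 ^ n)) (g r t) := by
        have q1 := dist_triangle4 (g r s * g s t) (S.P (pt n r s) (2 ^ n) * g s t)
          (S.P (pt n r s) (2 ^ n) * S.P (pt n s t) (2 ^ n)) (S.P (pt n r t) (2 ^ n))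
        have q2 := dist_triangle (g r s * g s t) (S.P (pt n r t) (2 ^ n)) (g r t)
        linarith only [q1, q2]
      linarith only [htri, t1, t2, t3]
    have hlim : Tendsto (fun n : ℕ =>
        S.N (g s t) * dist (g r s) (S.P (pt n r s) (2 ^ n)) +
        B * dist (g s t) (S.P (pt n s t) (2 ^ n)) +
        B * (B * ϖ (ω (a n) (b n))) +
        dist (S.P (pt n r t) (2 ^ n)) (g r t)) atTop (nhds 0) := by
      have l1 := hd1.const_mul (S.N (g s t))
      have l2 := hd2.const_mul B
      have l3 := (hϖab.const_mul B).const_mul B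
      have l4 := ((l1.add l2).add l3).add hd3
      simpa using l4
    have hle : dist (g r s * g s t) (g r t) ≤ 0 := ge_of_tendsto' hlim hbig
    exact dist_le_zero.1 hle
  · -- distance to α
    intro s t hs hst ht
    have h1 : ∀ n : ℕ, dist (S.P (pt n s t) (2 ^ n)) (α s t) ≤ B ^ 2 * CS * ϖ (ω s t) := by
      intro n
      have h2 := S.MI (2 ^ n) (pt n s t) (pt_mono n s t)
        (fun i => le_trans hs (pt_lb n s t i)) (fun i => le_trans (pt_ub n s t i hst) ht)
      rw [pt_zero n s t hs (le_trans hs hst), pt_top n s t hst ht] at h2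
      simp only [hSα, hSϖ, hSω, hSB, hSσ] at h2
      refine le_trans h2 ?_
      have h3 : 0 ≤ ϖ (ω s t) := hϖ.nonneg _ (hω.nonneg hs hst (le_trans ht hT'T))
      exact mul_le_mul_of_nonneg_right
        (mul_le_mul_of_nonneg_left (hσsum _) (by positivity)) h3
    have hlim := (htg s t hs hst ht).dist (tendsto_const_nhds (x := α s t))
    exact le_of_tendsto hlim (Filter.Eventually.of_forall h1)
  · -- uniqueness
    intro β hβid hβmult hβC s t hs hst ht
    obtain ⟨Cβ, hCβ⟩ := hβC
    set Cβ' : ℝ := max Cβ 0 with hCβ'def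
    have hCβ'0 : 0 ≤ Cβ' := le_max_right _ _
    have hβd : ∀ s' t' : ℝ, 0 ≤ s' → s' ≤ t' → t' ≤ T' →
        dist (β s' t') (α s' t') ≤ Cβ' * ϖ (ω s' t') := by
      intro s' t' h1 h2 h3
      refine le_trans (hCβ h1 h2 h3) ?_
      exact mul_le_mul_of_nonneg_right (le_max_left _ _)
        (hϖ.nonneg _ (hω.nonneg h1 h2 (le_trans h3 hT'T)))
    set Bβ : ℝ := N 1 + (CN:ℝ) * (Cβ' * ϖ ε₀ + 2) with hBβdef
    have hϖε₀0 : 0 ≤ ϖ ε₀ := hϖ.nonneg _ (le_of_lt hε₀pos)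
    have hCϖ0 : 0 ≤ Cβ' * ϖ ε₀ := mul_nonneg hCβ'0 hϖε₀0
    have hBβ0 : 0 ≤ Bβ := by
      rw [hBβdef]
      nlinarith only [hN1 (1:V), hCN0, hCϖ0]
    have hNβ : ∀ s' t' : ℝ, 0 ≤ s' → s' ≤ t' → t' ≤ T' → N (β s' t') ≤ Bβ := by
      intro s' t' h1 h2 h3
      have hd1 : dist (β s' t') 1 ≤ Cβ' * ϖ ε₀ + 2 := by
        have h4 := hβd s' t' h1 h2 h3
        have h5 : dist (α s' t') 1 ≤ 1 := S.hα1 s' t' h1 h2 h3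
        have h6 := dist_triangle (β s' t') (α s' t') 1
        have h7 : ϖ (ω s' t') ≤ ϖ ε₀ :=
          hϖmono (mem_Ici.2 (hω.nonneg h1 h2 (le_trans h3 hT'T)))
            (mem_Ici.2 (le_of_lt hε₀pos)) (le_of_lt (hωsmall s' t' h1 h2 h3))
        have h8 : Cβ' * ϖ (ω s' t') ≤ Cβ' * ϖ ε₀ := mul_le_mul_of_nonneg_left h7 hCβ'0
        linarith only [h4, h5, h6, h8]
      have h9 := mul_le_mul_of_nonneg_left hd1 hCN0
      have h10 := hNd (β s' t')
      rw [hBβdef]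
      linarith only [h9, h10]
    have hβchain : ∀ (u : ℕ → ℝ), Monotone u → (∀ i, 0 ≤ u i) → (∀ i, u i ≤ T') →
        ∀ m : ℕ, MSew.Q (fun i => β (u i) (u (i + 1))) m = β (u 0) (u m) := by
      intro u hu h0 hT m
      induction m with
      | zero => rw [MSew.Q_zero]; exact (hβid (h0 0) (hT 0)).symm
      | succ m ih =>
          rw [MSew.Q_succ, ih]
          exact hβmult (h0 0) (hu (Nat.zero_le m)) (hu (Nat.le_succ m)) (hT (m + 1))
    have hβP : ∀ n : ℕ, dist (β s t) (S.P (pt n s t) (2 ^ n)) ≤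
        (B * Bβ * Cβ') * ∑ i ∈ Finset.range (2 ^ n), ϖ (ω (pt n s t i) (pt n s t (i + 1))) := by
      intro n
      have hu0 : ∀ i, 0 ≤ pt n s t i := fun i => le_trans hs (pt_lb n s t i)
      have huT : ∀ i, pt n s t i ≤ T' := fun i => le_trans (pt_ub n s t i hst) ht
      have hG : ∀ i, i < 2 ^ n →
          S.N (MSew.Q (fun i => α (pt n s t i) (pt n s t (i + 1))) i) ≤ B := by
        intro i _
        exact S.NP (pt n s t) (pt_mono n s t) hu0 huT i
      have hF : ∀ i, i < 2 ^ n →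
          S.N (MSew.Q (fun j => (fun i => β (pt n s t i) (pt n s t (i + 1))) (i + 1 + j))
            (2 ^ n - (i + 1))) ≤ Bβ := by
        intro i hi
        have hch := hβchain (fun l => pt n s t (i + 1 + l))
          (fun p q hpq => pt_mono n s t (show i + 1 + p ≤ i + 1 + q by omega))
          (fun l => hu0 _) (fun l => huT _) (2 ^ n - (i + 1))
        have e : i + 1 + (2 ^ n - (i + 1)) = 2 ^ n := by omega
        rw [e] at hch
        rw [show (MSew.Q (fun j => (fun i => β (pt n s t i) (pt n s t (i + 1))) (i + 1 + j))
            (2 ^ n - (i + 1))) = β (pt n s t (i + 1)) (pt n s t (2 ^ n)) from hch]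
        exact hNβ _ _ (hu0 _) (pt_mono n s t (by omega)) (huT _)
      have hd : ∀ i, i < 2 ^ n →
          dist ((fun i => β (pt n s t i) (pt n s t (i + 1))) i)
            ((fun i => α (pt n s t i) (pt n s t (i + 1))) i) ≤
          Cβ' * ϖ (ω (pt n s t i) (pt n s t (i + 1))) := by
        intro i _
        exact hβd _ _ (hu0 i) (pt_mono n s t (Nat.le_succ i)) (huT (i + 1))
      have htel := S.telescope (fun i => β (pt n s t i) (pt n s t (i + 1)))
        (fun i => α (pt n s t i) (pt n s t (i + 1))) (2 ^ n) B Bβ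
        (fun i => Cβ' * ϖ (ω (pt n s t i) (pt n s t (i + 1))))
        (le_of_lt hB0) hBβ0 hG hF hd
      have hQf : MSew.Q (fun i => β (pt n s t i) (pt n s t (i + 1))) (2 ^ n) = β s t := by
        rw [hβchain (pt n s t) (pt_mono n s t) hu0 huT (2 ^ n),
          pt_zero n s t hs (le_trans hs hst), pt_top n s t hst ht]
      have hQg : MSew.Q (fun i => α (pt n s t i) (pt n s t (i + 1))) (2 ^ n) =
          S.P (pt n s t) (2 ^ n) := rfl
      rw [hQf, hQg] at htel
      refine le_trans htel (le_of_eq ?_)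
      calc (∑ i ∈ Finset.range (2 ^ n),
            B * (Bβ * (Cβ' * ϖ (ω (pt n s t i) (pt n s t (i + 1))))))
          = ∑ i ∈ Finset.range (2 ^ n),
            (B * Bβ * Cβ') * ϖ (ω (pt n s t i) (pt n s t (i + 1))) :=
            Finset.sum_congr rfl fun i _ => by ring
        _ = (B * Bβ * Cβ') * ∑ i ∈ Finset.range (2 ^ n),
              ϖ (ω (pt n s t i) (pt n s t (i + 1))) := (Finset.mul_sum _ _ _).symm
    apply eq_of_forall_dist_le
    intro ε hε
    have hKβ0 : 0 ≤ B * Bβ * Cβ' := mul_nonneg (mul_nonneg (le_of_lt hB0) hBβ0) hCβ'0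
    have hKβ1 : (0:ℝ) < B * Bβ * Cβ' + 1 := by linarith only [hKβ0]
    obtain ⟨N1, hN1'⟩ := hSn s t hs hst ht (ε / (2 * (B * Bβ * Cβ' + 1)))
      (div_pos hε (by linarith only [hKβ1]))
    have htg' := htg s t hs hst ht
    rw [Metric.tendsto_atTop] at htg'
    obtain ⟨N2, hN2⟩ := htg' (ε / 2) (by linarith only [hε])
    have hb1 : dist (β s t) (S.P (pt (max N1 N2) s t) (2 ^ max N1 N2)) ≤ ε / 2 := by
      refine le_trans (hβP (max N1 N2)) ?_
      have h1 := hN1' (max N1 N2) (le_max_left _ _)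
      calc (B * Bβ * Cβ') * ∑ i ∈ Finset.range (2 ^ max N1 N2),
            ϖ (ω (pt (max N1 N2) s t i) (pt (max N1 N2) s t (i + 1)))
          ≤ (B * Bβ * Cβ') * (ε / (2 * (B * Bβ * Cβ' + 1))) :=
            mul_le_mul_of_nonneg_left h1 hKβ0
        _ ≤ ε / 2 := by
            rw [← mul_div_assoc,
              div_le_div_iff₀ (by linarith only [hKβ1]) (by norm_num : (0:ℝ) < 2)]
            nlinarith only [hε, hKβ0, mul_nonneg hKβ0 hε.le]
    have hb2 : dist (S.P (pt (max N1 N2) s t) (2 ^ max N1 N2)) (g s t) < ε / 2 :=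
      hN2 (max N1 N2) (le_max_right _ _)
    calc dist (β s t) (g s t) ≤
        dist (β s t) (S.P (pt (max N1 N2) s t) (2 ^ max N1 N2)) +
        dist (S.P (pt (max N1 N2) s t) (2 ^ max N1 N2)) (g s t) := dist_triangle _ _ _
      _ ≤ ε := by linarith only [hb1, hb2]








end
end
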